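/- arXiv:2408.16143 — 8 statements merged into one kernel-verified Lean document; each statement's English description precedes it below -/
import Mathlib

section
/- Let G be a graph and k a positive integer. If Z is a subset of V(G) that minimizes m = [|E(G)| - Σ_{v∈Z} d_G(v)]_k (where [x]_k denotes the unique integer in {0,...,k-1} congruent to x mod k) among all subsets of V(G), and Z contains all vertices v with d_G(v) ≡ 0 (mod k), then m ≤ k/2. -/
open Finset

variable {V E : Type*} [Fintype V] [Fintype E] [DecidableEq V]

/-- Degree of `v` in the spanning subgraph given by edge set `F` (loops count twice). -/
def mdeg (ends : E → V × V) (F : Finset E) (v : V) : ℕ :=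
  ∑ e ∈ F, ((if (ends e).1 = v then 1 else 0) + (if (ends e).2 = v then 1 else 0))
/-- if Z minimizes m = [|E(G)| - Σ_{v∈Z} d_G(v)]_k over all subsets and
contains all vertices of degree divisible by k, then m ≤ k/2. -/
theorem stmt0 (ends : E → V × V) (k : ℕ) (hk : 0 < k) (Z : Finset V) (m : ℤ)
    (hm : m = ((Fintype.card E : ℤ) - ∑ v ∈ Z, (mdeg ends Finset.univ v : ℤ)) % k)
    (hmin : ∀ Z' : Finset V,
      m ≤ ((Fintype.card E : ℤ) - ∑ v ∈ Z', (mdeg ends Finset.univ v : ℤ)) % k)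
    (hZ : ∀ v : V, (mdeg ends Finset.univ v : ℤ) % k = 0 → v ∈ Z) :
    2 * m ≤ k := by
  have hk' : (0 : ℤ) < k := by exact_mod_cast hk
  set x : ℤ := (Fintype.card E : ℤ) - ∑ v ∈ Z, (mdeg ends Finset.univ v : ℤ) with hx
  -- total degree sum is 2|E|
  have hsum : ∑ v : V, (mdeg ends Finset.univ v : ℤ) = 2 * (Fintype.card E : ℤ) := by
    simp only [mdeg]
    push_cast
    rw [Finset.sum_comm]
    have : ∀ e : E, ∑ v : V, (((if (ends e).1 = v then (1:ℤ) else 0) +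
        (if (ends e).2 = v then 1 else 0))) = 2 := by
      intro e
      rw [Finset.sum_add_distrib]
      simp [Finset.sum_ite_eq]
    rw [Finset.sum_congr rfl fun e _ => this e, Finset.sum_const, Fintype.card]
    push_cast
    ring
  have hcompl : ∑ v ∈ Zᶜ, (mdeg ends Finset.univ v : ℤ)
      = 2 * (Fintype.card E : ℤ) - ∑ v ∈ Z, (mdeg ends Finset.univ v : ℤ) := by
    have := Finset.sum_add_sum_compl Z (fun v => (mdeg ends Finset.univ v : ℤ))
    rw [hsum] at this
    linarith
  have h2 := hmin Zᶜ
  rw [hcompl] at h2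
  have hxeq : (Fintype.card E : ℤ) - (2 * (Fintype.card E : ℤ)
      - ∑ v ∈ Z, (mdeg ends Finset.univ v : ℤ)) = -x := by rw [hx]; ring
  rw [hxeq] at h2
  -- now h2 : m ≤ (-x) % k, hm : m = x % k
  have h0 : 0 ≤ m := hm ▸ Int.emod_nonneg x (ne_of_gt hk')
  have h1 : m < k := hm ▸ Int.emod_lt_of_pos x hk'
  have h3 : 0 ≤ (-x) % (k : ℤ) := Int.emod_nonneg _ (ne_of_gt hk')
  have h4 : (-x) % (k : ℤ) < k := Int.emod_lt_of_pos _ hk'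
  have key : (m + (-x) % (k : ℤ)) % k = 0 := by
    rw [hm, ← Int.add_emod]
    simp
  obtain ⟨c, hc⟩ := Int.dvd_of_emod_eq_zero key
  have hclt : c < 2 := by nlinarith
  rcases eq_or_lt_of_le h0 with h | h
  · omega
  · have hcpos : 0 < c := by nlinarith
    have : c = 1 := by omega
    subst this
    omega
end

section
/- Let G be a graph and k a positive integer. If Z is a subset of V(G) minimizing m = [|E(G)| - Σ_{v∈Z} d_G(v)]_k among all subsets of V(G), and Z contains all vertices v with d_G(v) ≡ 0 (mod k), then for all v ∈ Z one has [d_G(v)]_k ≤ k - 2m, and for all v ∈ V(G)\Z one has [d_G(v)]_k ≥ 2m. -/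
open Finset

variable {V E : Type*} [Fintype V] [Fintype E] [DecidableEq V]

private lemma shift_emod (k x n : ℤ) : (x + k * n) % k = x % k :=
  Int.add_mul_emod_self_left x k n

private lemma eval_emod {k x y : ℤ} (h : x % k = y % k) (h0 : 0 ≤ y) (h1 : y < k) :
    x % k = y := by rw [h, Int.emod_eq_of_lt h0 h1]

private lemma total_deg (ends : E → V × V) :
    ∑ v : V, (mdeg ends Finset.univ v : ℤ) = 2 * (Fintype.card E : ℤ) := by
  have : ∑ v : V, mdeg ends Finset.univ v = 2 * Fintype.card E := by
    unfold mdeg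
    rw [Finset.sum_comm]
    simp [Finset.sum_add_distrib, Finset.sum_ite_eq]
    rw [Fintype.card, Finset.card_eq_sum_ones]
    ring_nf
  exact_mod_cast this

/-- if Z minimizes m = [|E(G)| - Σ_{v∈Z} d_G(v)]_k and contains all vertices of
degree divisible by k, then [d_G(v)]_k ≤ k - 2m on Z and [d_G(v)]_k ≥ 2m off Z. -/
theorem stmt1 (ends : E → V × V) (k : ℕ) (hk : 0 < k) (Z : Finset V) (m : ℤ)
    (hm : m = ((Fintype.card E : ℤ) - ∑ v ∈ Z, (mdeg ends Finset.univ v : ℤ)) % k)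
    (hmin : ∀ Z' : Finset V,
      m ≤ ((Fintype.card E : ℤ) - ∑ v ∈ Z', (mdeg ends Finset.univ v : ℤ)) % k)
    (hZ : ∀ v : V, (mdeg ends Finset.univ v : ℤ) % k = 0 → v ∈ Z) :
    (∀ v ∈ Z, (mdeg ends Finset.univ v : ℤ) % k ≤ (k : ℤ) - 2 * m) ∧
    (∀ v : V, v ∉ Z → 2 * m ≤ (mdeg ends Finset.univ v : ℤ) % k) := by
  set d : V → ℤ := fun v => (mdeg ends Finset.univ v : ℤ) with hd
  have hk' : (0 : ℤ) < k := by exact_mod_cast hk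
  have hm0 : 0 ≤ m := hm ▸ Int.emod_nonneg _ (ne_of_gt hk')
  have hm1 : m < k := hm ▸ Int.emod_lt_of_pos _ hk'
  set S : ℤ := (Fintype.card E : ℤ) - ∑ v ∈ Z, d v with hS
  have hSm : S % k = m := hm.symm
  have compl : ∀ A : Finset V,
      ((Fintype.card E : ℤ) - ∑ v ∈ Aᶜ, d v) = -((Fintype.card E : ℤ) - ∑ v ∈ A, d v) := by
    intro A
    have h1 : ∑ v ∈ Aᶜ, d v + ∑ v ∈ A, d v = ∑ v : V, d v := Finset.sum_compl_add_sum A d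
    have h2 := total_deg ends
    rw [← hd] at h2
    linarith [h1, h2]
  constructor
  · intro v hv
    set a : ℤ := d v % k with ha
    have ha0 : 0 ≤ a := Int.emod_nonneg _ (ne_of_gt hk')
    have ha1 : a < k := Int.emod_lt_of_pos _ hk'
    have hsum : ∑ w ∈ Z.erase v, d w = ∑ w ∈ Z, d w - d v := Finset.sum_erase_eq_sub hv
    have h1 : ((Fintype.card E : ℤ) - ∑ w ∈ Z.erase v, d w) = S + d v := by
      rw [hsum, hS]; ring
    have hmod1 : (S + d v) % k = (m + a) % k := by
      rw [Int.add_emod, hSm, ← ha, Int.add_emod m a k,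
        Int.emod_eq_of_lt hm0 hm1, Int.emod_eq_of_lt ha0 ha1]
    -- first: m + a < k
    have key1 : m + a < k := by
      by_contra h
      push_neg at h
      have heval : (S + d v) % k = m + a - k := by
        have hs : (m + a) % k = (m + a - k) % k := by
          have := shift_emod (k : ℤ) (m + a - k) 1
          rw [mul_one] at this
          rw [← this]; ring_nf
        exact eval_emod (hmod1.trans hs) (by omega) (by omega)
      have := hmin (Z.erase v)
      rw [h1, heval] at this
      omega
    rcases eq_or_lt_of_le (by omega : (0 : ℤ) ≤ m + a) with h0 | h0
    · omega
    · -- complement of Z.erase v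
      have h2 : ((Fintype.card E : ℤ) - ∑ w ∈ (Z.erase v)ᶜ, d w) = -(S + d v) := by
        rw [compl (Z.erase v), h1]
      have heval : (-(S + d v)) % k = k - (m + a) := by
        have hneg : (-(S + d v)) % k = (-(m + a)) % k := Int.ModEq.neg hmod1
        have hs : (-(m + a)) % k = (k - (m + a)) % k := by
          have := shift_emod (k : ℤ) (-(m + a)) 1
          rw [mul_one] at this
          rw [← this]; ring_nf
        exact eval_emod (hneg.trans hs) (by omega) (by omega)
      have := hmin ((Z.erase v)ᶜ)
      rw [h2, heval] at this
      omega
  · intro v hv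
    set a : ℤ := d v % k with ha
    have ha0 : 0 ≤ a := Int.emod_nonneg _ (ne_of_gt hk')
    have ha1 : a < k := Int.emod_lt_of_pos _ hk'
    have hane : a ≠ 0 := fun h => hv (hZ v h)
    have hsum : ∑ w ∈ insert v Z, d w = d v + ∑ w ∈ Z, d w := Finset.sum_insert hv
    have h1 : ((Fintype.card E : ℤ) - ∑ w ∈ insert v Z, d w) = S - d v := by
      rw [hsum, hS]; ring
    have hmod1 : (S - d v) % k = (m - a) % k := by
      rw [Int.sub_emod, hSm, ← ha, Int.sub_emod m a k,
        Int.emod_eq_of_lt hm0 hm1, Int.emod_eq_of_lt ha0 ha1]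
    -- first: m < a
    have key1 : m < a := by
      by_contra h
      push_neg at h
      have heval : (S - d v) % k = m - a :=
        eval_emod hmod1 (by omega) (by omega)
      have := hmin (insert v Z)
      rw [h1, heval] at this
      omega
    -- complement of insert v Z
    have h2 : ((Fintype.card E : ℤ) - ∑ w ∈ (insert v Z)ᶜ, d w) = -(S - d v) := by
      rw [compl (insert v Z), h1]
    have heval : (-(S - d v)) % k = a - m := by
      have hneg : (-(S - d v)) % k = (-(m - a)) % k := Int.ModEq.neg hmod1
      have hs : (-(m - a)) % k = (a - m) % k := by ring_nf
      exact eval_emod (hneg.trans hs) (by omega) (by omega)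
    have := hmin ((insert v Z)ᶜ)
    rw [h2, heval] at this
    omega
end

section
/- Let G be a graph, k a positive integer, and Z ⊆ V(G) a set containing all vertices v with [d_G(v)]_k = 0. Suppose Σ_{v∈Z}[d_G(v)]_k + Σ_{v∈V(G)\Z}[k - d_G(v)]_k = k - 2m for some integer m. Then m ≡ |E(G)| - Σ_{v∈Z} d_G(v) (mod k) if and only if |V(G)\Z| has the opposite parity from Σ_{v∈V(G)} ⌊d_G(v)/k⌋. -/
open Finset

variable {V E : Type*} [Fintype V] [Fintype E] [DecidableEq V]

/-- parity criterion for m ≡ |E(G)| - Σ_{v∈Z} d_G(v) (mod k). -/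
theorem stmt2 (ends : E → V × V) (k : ℕ) (hk : 0 < k) (Z : Finset V) (m : ℤ) (hm0 : 0 ≤ m)
    (hZ : ∀ v : V, (mdeg ends Finset.univ v : ℤ) % k = 0 → v ∈ Z)
    (hsum : ∑ v ∈ Z, ((mdeg ends Finset.univ v : ℤ) % k)
          + ∑ v ∈ Zᶜ, (((k : ℤ) - (mdeg ends Finset.univ v : ℤ)) % k) = (k : ℤ) - 2 * m) :
    (m % k = ((Fintype.card E : ℤ) - ∑ v ∈ Z, (mdeg ends Finset.univ v : ℤ)) % k) ↔
      Zᶜ.card % 2 ≠ (∑ v : V, mdeg ends Finset.univ v / k) % 2 := by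
  set D : V → ℕ := mdeg ends Finset.univ with hD
  have hk' : (0:ℤ) < k := by exact_mod_cast hk
  -- handshake lemma
  have hhs : ∑ v : V, D v = 2 * Fintype.card E := by
    simp only [hD, mdeg]
    rw [Finset.sum_comm]
    simp [Finset.sum_add_distrib, Finset.sum_ite_eq, Finset.card_univ, two_mul]
    ring
  -- per-vertex mod/div relation
  have hmodv : ∀ v : V, (D v : ℤ) % k = (D v : ℤ) - (k:ℤ) * ((D v / k : ℕ) : ℤ) := by
    intro v
    have h1 : (D v : ℤ) % k = ((D v % k : ℕ) : ℤ) := by push_cast; ring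
    have h2 := Nat.mod_add_div (D v) k
    omega
  set SZ := ∑ v ∈ Z, (D v : ℤ) with hSZ
  set RZ := ∑ v ∈ Z, ((D v : ℤ) % k) with hRZ
  set F := ∑ v : V, D v / k with hF
  set c := Zᶜ.card with hc
  set EE := Fintype.card E with hEE
  have hRall : ∑ v : V, ((D v : ℤ) % k) = 2 * EE - k * F := by
    rw [Finset.sum_congr rfl (fun v _ => hmodv v), Finset.sum_sub_distrib, ← Finset.mul_sum]
    have : ∑ v : V, (D v : ℤ) = ((∑ v : V, D v : ℕ) : ℤ) := by push_cast; ring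
    rw [this, hhs]
    push_cast [hF]
    ring
  -- rewrite the compl sum
  have hcompl : ∀ v ∈ Zᶜ, ((k:ℤ) - (D v:ℤ)) % k = (k:ℤ) - (D v:ℤ) % k := by
    intro v hv
    have hvZ : v ∉ Z := Finset.mem_compl.mp hv
    have hne : (D v : ℤ) % k ≠ 0 := fun h => hvZ (hZ v h)
    have h1 : 0 < (D v:ℤ) % k :=
      lt_of_le_of_ne (Int.emod_nonneg _ (ne_of_gt hk')) (Ne.symm hne)
    have h2 : (D v:ℤ) % k < k := Int.emod_lt_of_pos _ hk'
    have h3 : ((k:ℤ) - (D v:ℤ)) % k = ((k:ℤ) - (D v:ℤ) % k) % k := by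
      conv_rhs => rw [Int.sub_emod]
      rw [Int.emod_emod_of_dvd _ dvd_rfl, ← Int.sub_emod]
    rw [h3, Int.emod_eq_of_lt (by omega) (by omega)]
  have hsum2 : RZ + ((k:ℤ) * c - ((2 * EE - k * F) - RZ)) = k - 2 * m := by
    rw [← hsum, Finset.sum_congr rfl hcompl, Finset.sum_sub_distrib,
      Finset.sum_const, nsmul_eq_mul]
    have htot : RZ + ∑ v ∈ Zᶜ, ((D v:ℤ) % k) = 2 * EE - k * F := by
      rw [hRZ, Finset.sum_add_sum_compl, hRall]
    push_cast
    linarith [htot]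
  have hdvd : (k:ℤ) ∣ SZ - RZ := by
    rw [hSZ, hRZ, ← Finset.sum_sub_distrib]
    exact Finset.dvd_sum fun v _ => Int.dvd_self_sub_of_emod_eq rfl
  obtain ⟨A, hA⟩ := hdvd
  have key : 2 * (m - ((EE:ℤ) - SZ)) = k * (1 - (c:ℤ) - (F:ℤ) + 2 * A) := by
    linear_combination 2 * hA + hsum2
  constructor
  · intro h
    have h0 : (m - ((EE:ℤ) - SZ)) % k = 0 :=
      Int.emod_eq_emod_iff_emod_sub_eq_zero.mp h
    obtain ⟨u, hu⟩ := Int.dvd_of_emod_eq_zero h0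
    have h2 : (1 - (c:ℤ) - (F:ℤ) + 2 * A) = 2 * u := by
      have hk0 : (k:ℤ) ≠ 0 := ne_of_gt hk'
      apply mul_left_cancel₀ hk0
      rw [hu] at key
      linarith
    omega
  · intro h
    have hpar : (1 - (c:ℤ) - (F:ℤ) + 2 * A) % 2 = 0 := by omega
    obtain ⟨u, hu⟩ := Int.dvd_of_emod_eq_zero hpar
    have ht : m - ((EE:ℤ) - SZ) = k * u := by
      have h2 : 2 * (m - ((EE:ℤ) - SZ)) = 2 * ((k:ℤ) * u) := by
        rw [key, hu]; ring
      exact mul_left_cancel₀ two_ne_zero h2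
    exact Int.emod_eq_emod_iff_emod_sub_eq_zero.mpr (Int.emod_eq_zero_of_dvd ⟨u, ht⟩)
end

section
/- Let G be a graph and k a positive integer. There is at most one vertex set Z containing all vertices v with [d_G(v)]_k = 0 such that m = [|E(G)| - Σ_{v∈Z} d_G(v)]_k > 0 and Σ_{v∈Z}[d_G(v)]_k + Σ_{v∈V(G)\Z}[k - d_G(v)]_k = k - 2m. -/
open Finset

variable {V E : Type*} [Fintype V] [Fintype E] [DecidableEq V]

lemma stmt3_aux (d : V → ℤ) (N k : ℤ) (hk : 0 < k) (Z₁ Z₂ : Finset V)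
    (hZ₁ : ∀ v : V, d v % k = 0 → v ∈ Z₁)
    (hZ₂ : ∀ v : V, d v % k = 0 → v ∈ Z₂)
    (hm₁ : 0 < (N - ∑ v ∈ Z₁, d v) % k)
    (hm₂ : 0 < (N - ∑ v ∈ Z₂, d v) % k)
    (hsum₁ : ∑ v ∈ Z₁, (d v % k) + ∑ v ∈ Z₁ᶜ, ((k - d v) % k)
         = k - 2 * ((N - ∑ v ∈ Z₁, d v) % k))
    (hsum₂ : ∑ v ∈ Z₂, (d v % k) + ∑ v ∈ Z₂ᶜ, ((k - d v) % k)
         = k - 2 * ((N - ∑ v ∈ Z₂, d v) % k))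
    (w : V) (hw2 : w ∈ Z₂) (hw1 : w ∉ Z₁) : False := by
  have hk0 : k ≠ 0 := ne_of_gt hk
  set r : V → ℤ := fun v => d v % k with hr
  have hr0 : ∀ v, 0 ≤ r v := fun v => Int.emod_nonneg _ hk0
  have hrk : ∀ v, r v < k := fun v => Int.emod_lt_of_pos _ hk
  -- residue on complements
  have hresid : ∀ v : V, r v ≠ 0 → (k - d v) % k = k - r v := by
    intro v hv
    have hmod : Int.ModEq k (d v) (r v) := (Int.emod_emod_of_dvd _ dvd_rfl).symm
    have h1 : (k - d v) % k = (k - r v) % k := (Int.ModEq.refl k).sub hmod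
    have h2 : (k - r v) % k = k - r v := by
      refine Int.emod_eq_of_lt ?_ ?_
      · have := hrk v; omega
      · have := hr0 v; omega
    rw [h1, h2]
  -- define g functions
  set g₁ : V → ℤ := fun v => if v ∈ Z₁ then r v else k - r v with hg1
  set g₂ : V → ℤ := fun v => if v ∈ Z₂ then r v else k - r v with hg2
  have hgsum : ∀ (Z : Finset V), (∀ v : V, d v % k = 0 → v ∈ Z) →
      ∑ v, (fun v => if v ∈ Z then r v else k - r v) v
        = ∑ v ∈ Z, r v + ∑ v ∈ Zᶜ, ((k - d v) % k) := by
    intro Z hZ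
    rw [← Finset.sum_add_sum_compl Z]
    congr 1
    · exact Finset.sum_congr rfl fun v hv => if_pos hv
    · refine Finset.sum_congr rfl fun v hv => ?_
      rw [Finset.mem_compl] at hv
      rw [if_neg hv, hresid v (fun h0 => hv (hZ v h0))]
  have hF₁ : ∑ v, g₁ v = k - 2 * ((N - ∑ v ∈ Z₁, d v) % k) := by
    rw [hg1, hgsum Z₁ hZ₁]; exact hsum₁
  have hF₂ : ∑ v, g₂ v = k - 2 * ((N - ∑ v ∈ Z₂, d v) % k) := by
    rw [hg2, hgsum Z₂ hZ₂]; exact hsum₂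
  by_cases hone : ∀ v : V, v ≠ w → (v ∈ Z₁ ↔ v ∈ Z₂)
  · -- Z₂ = insert w Z₁
    have hZ2eq : Z₂ = insert w Z₁ := by
      ext v
      by_cases hv : v = w
      · subst hv; simp [hw2]
      · simp [Finset.mem_insert, hv, (hone v hv).symm]
    have hsum2' : ∑ v ∈ Z₂, d v = d w + ∑ v ∈ Z₁, d v := by
      rw [hZ2eq, Finset.sum_insert hw1]
    set A : ℤ := N - ∑ v ∈ Z₁, d v with hA
    set m₁ : ℤ := A % k with hm1d
    set m₂ : ℤ := (N - ∑ v ∈ Z₂, d v) % k with hm2d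
    have hm2A : m₂ = (A - d w) % k := by rw [hm2d, hsum2', hA]; congr 1; ring
    -- f₂ - f₁ = 2 r w - k
    have hdiff : ∑ v, g₂ v - ∑ v, g₁ v = 2 * r w - k := by
      rw [← Finset.sum_sub_distrib]
      rw [Finset.sum_eq_single w]
      · have e1 : g₂ w = r w := if_pos hw2
        have e2 : g₁ w = k - r w := if_neg hw1
        rw [e1, e2]; ring
      · intro v _ hv
        have := hone v hv
        by_cases h1 : v ∈ Z₁
        · rw [hg1, hg2]; simp [h1, this.mp h1]
        · have h2 : v ∉ Z₂ := fun h => h1 (this.mpr h)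
          rw [hg1, hg2]; simp [h1, h2]
      · intro h; exact absurd (Finset.mem_univ w) h
    rw [hF₁, hF₂] at hdiff
    -- divisibility
    have e1 : Int.ModEq k m₁ A := Int.emod_emod_of_dvd A dvd_rfl
    have e2 : Int.ModEq k m₂ (A - d w) := by rw [hm2A]; exact Int.emod_emod_of_dvd _ dvd_rfl
    have e3 : Int.ModEq k (r w) (d w) := Int.emod_emod_of_dvd _ dvd_rfl
    have e4 : Int.ModEq k (m₁ - m₂ - r w) (A - (A - d w) - d w) := (e1.sub e2).sub e3
    have e5 : Int.ModEq k (m₁ - m₂ - r w) 0 := by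
      have : A - (A - d w) - d w = 0 := by ring
      rwa [this] at e4
    have hdvd : k ∣ (m₁ - m₂ - r w) := (Int.modEq_zero_iff_dvd).mp e5
    obtain ⟨c, hc⟩ := hdvd
    have hlin : 2 * (m₁ - m₂ - r w) = -k := by linarith
    have : k * (2 * c + 1) = 0 := by rw [hc] at hlin; linarith
    rcases mul_eq_zero.mp this with h | h
    · exact hk0 h
    · omega
  · push_neg at hone
    obtain ⟨w', hw'ne, hw'⟩ := hone
    have hgw : g₁ w + g₂ w = k := by
      rw [hg1, hg2]; simp only [if_neg hw1, if_pos hw2]; ring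
    have hgw' : g₁ w' + g₂ w' = k := by
      rw [hg1, hg2]
      rcases hw' with ⟨h1, h2⟩ | ⟨h1, h2⟩
      · simp only [if_pos h1, if_neg h2]; ring
      · simp only [if_neg h1, if_pos h2]; ring
    have hbound : ∑ v ∈ ({w, w'} : Finset V), (g₁ v + g₂ v) ≤ ∑ v, (g₁ v + g₂ v) := by
      apply Finset.sum_le_sum_of_subset_of_nonneg (Finset.subset_univ _)
      intro v _ _
      rw [hg1, hg2]
      have := hr0 v; have := hrk v
      by_cases h1 : v ∈ Z₁ <;> by_cases h2 : v ∈ Z₂ <;> simp [h1, h2] <;> omega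
    rw [Finset.sum_pair (Ne.symm hw'ne), hgw, hgw', Finset.sum_add_distrib, hF₁, hF₂] at hbound
    linarith

/-- there is at most one such vertex set Z. -/
theorem stmt3 (ends : E → V × V) (k : ℕ) (hk : 0 < k) (Z₁ Z₂ : Finset V)
    (hZ₁ : ∀ v : V, (mdeg ends Finset.univ v : ℤ) % k = 0 → v ∈ Z₁)
    (hZ₂ : ∀ v : V, (mdeg ends Finset.univ v : ℤ) % k = 0 → v ∈ Z₂)
    (hm₁ : 0 < ((Fintype.card E : ℤ) - ∑ v ∈ Z₁, (mdeg ends Finset.univ v : ℤ)) % k)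
    (hm₂ : 0 < ((Fintype.card E : ℤ) - ∑ v ∈ Z₂, (mdeg ends Finset.univ v : ℤ)) % k)
    (hsum₁ : ∑ v ∈ Z₁, ((mdeg ends Finset.univ v : ℤ) % k)
           + ∑ v ∈ Z₁ᶜ, (((k : ℤ) - (mdeg ends Finset.univ v : ℤ)) % k)
         = (k : ℤ) - 2 * (((Fintype.card E : ℤ) - ∑ v ∈ Z₁, (mdeg ends Finset.univ v : ℤ)) % k))
    (hsum₂ : ∑ v ∈ Z₂, ((mdeg ends Finset.univ v : ℤ) % k)
           + ∑ v ∈ Z₂ᶜ, (((k : ℤ) - (mdeg ends Finset.univ v : ℤ)) % k)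
         = (k : ℤ) - 2 * (((Fintype.card E : ℤ) - ∑ v ∈ Z₂, (mdeg ends Finset.univ v : ℤ)) % k)) :
    Z₁ = Z₂ := by
  by_contra hne
  have hor : ¬ (Z₁ ⊆ Z₂) ∨ ¬ (Z₂ ⊆ Z₁) := by
    by_contra h; push_neg at h; exact hne (Finset.Subset.antisymm h.1 h.2)
  have hkz : (0 : ℤ) < (k : ℤ) := by exact_mod_cast hk
  rcases hor with h | h
  · obtain ⟨w, hwa, hwb⟩ := Finset.not_subset.mp h
    exact stmt3_aux (fun v => (mdeg ends Finset.univ v : ℤ)) (Fintype.card E : ℤ) (k : ℤ)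
      hkz Z₂ Z₁ hZ₂ hZ₁ hm₂ hm₁ hsum₂ hsum₁ w hwa hwb
  · obtain ⟨w, hwa, hwb⟩ := Finset.not_subset.mp h
    exact stmt3_aux (fun v => (mdeg ends Finset.univ v : ℤ)) (Fintype.card E : ℤ) (k : ℤ)
      hkz Z₁ Z₂ hZ₁ hZ₂ hm₁ hm₂ hsum₁ hsum₂ w hwa hwb
end

section
/- Every bipartite multigraph G can be edge-decomposed into k spanning subgraphs G_1,...,G_k such that for each vertex v and each i with 1 ≤ i ≤ k, |d_{G_i}(v) - d_G(v)/k| < 1 (equivalently ⌊d_G(v)/k⌋ ≤ d_{G_i}(v) ≤ ⌈d_G(v)/k⌉). -/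
open Finset

variable {V E : Type*} [Fintype V] [Fintype E] [DecidableEq V]

open scoped Classical

set_option linter.unnecessarySeqFocus false
set_option linter.unusedTactic false
set_option linter.unusedSectionVars false

noncomputable def outd (ends : E → V × V) (F : Finset E) (f : E → Bool) (v : V) : ℕ :=
  ∑ e ∈ F, if (if f e then (ends e).1 else (ends e).2) = v then 1 else 0

noncomputable def ind (ends : E → V × V) (F : Finset E) (f : E → Bool) (v : V) : ℕ :=
  ∑ e ∈ F, if (if f e then (ends e).2 else (ends e).1) = v then 1 else 0

lemma euler (F : Finset E) : ∀ (ends : E → V × V), ∃ f : E → Bool, ∀ v : V,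
    (outd ends F f v : ℤ) - ind ends F f v ≤ 1 ∧ (ind ends F f v : ℤ) - outd ends F f v ≤ 1 := by
  induction F using Finset.strongInduction with
  | _ F ih =>
  intro ends
  by_cases hloop : ∃ e ∈ F, (ends e).1 = (ends e).2
  · obtain ⟨e0, he0, hl⟩ := hloop
    obtain ⟨f, hf⟩ := ih (F.erase e0) (Finset.erase_ssubset he0) ends
    refine ⟨f, fun v => ?_⟩
    have hout : outd ends F f v = outd ends (F.erase e0) f v
        + (if (if f e0 then (ends e0).1 else (ends e0).2) = v then 1 else 0) := by
      rw [outd, outd, ← Finset.sum_erase_add _ _ he0]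
    have hin : ind ends F f v = ind ends (F.erase e0) f v
        + (if (if f e0 then (ends e0).1 else (ends e0).2) = v then 1 else 0) := by
      rw [ind, ind, ← Finset.sum_erase_add _ _ he0]
      congr 1
      rcases Bool.eq_false_or_eq_true (f e0) with h | h <;> simp [h, hl]
    obtain ⟨h1, h2⟩ := hf v
    rw [hout, hin]; push_cast; omega
  · by_cases hpair : ∃ e1 ∈ F, ∃ e2 ∈ F, e1 ≠ e2 ∧ ∃ v0 : V,
        ((ends e1).1 = v0 ∨ (ends e1).2 = v0) ∧ ((ends e2).1 = v0 ∨ (ends e2).2 = v0)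
    · obtain ⟨e1, he1, e2, he2, hne, v0, h1, h2⟩ := hpair
      have hl1 : (ends e1).1 ≠ (ends e1).2 := fun h => hloop ⟨e1, he1, h⟩
      have hl2 : (ends e2).1 ≠ (ends e2).2 := fun h => hloop ⟨e2, he2, h⟩
      set x := if (ends e1).1 = v0 then (ends e1).2 else (ends e1).1 with hx
      set y := if (ends e2).1 = v0 then (ends e2).2 else (ends e2).1 with hy
      set ends' := Function.update ends e1 (x, y) with hends'
      have hF' : F.erase e2 ⊂ F := Finset.erase_ssubset he2
      obtain ⟨f', hf'⟩ := ih (F.erase e2) hF' ends'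
      set b := f' e1 with hb
      set f : E → Bool := fun e =>
        if e = e1 then (if b then decide ((ends e1).2 = v0) else decide ((ends e1).1 = v0))
        else if e = e2 then (if b then decide ((ends e2).1 = v0) else decide ((ends e2).2 = v0))
        else f' e with hfdef
      have he1' : e1 ∈ F.erase e2 := Finset.mem_erase.2 ⟨hne, he1⟩
      have htl1 : (if f e1 then (ends e1).1 else (ends e1).2) = (if b then x else v0) := by
        rcases Bool.eq_false_or_eq_true b with hb2 | hb2 <;> rcases h1 with h | h
        · have h2' : (ends e1).2 ≠ v0 := fun hc => hl1 (h.trans hc.symm)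
          simp [hfdef, hb2, hx, h, h2']
        · have h2' : (ends e1).1 ≠ v0 := fun hc => hl1 (hc.trans h.symm)
          simp [hfdef, hb2, hx, h, h2']
        · have h2' : (ends e1).2 ≠ v0 := fun hc => hl1 (h.trans hc.symm)
          simp [hfdef, hb2, hx, h, h2']
        · have h2' : (ends e1).1 ≠ v0 := fun hc => hl1 (hc.trans h.symm)
          simp [hfdef, hb2, hx, h, h2']
      have hhd1 : (if f e1 then (ends e1).2 else (ends e1).1) = (if b then v0 else x) := by
        rcases Bool.eq_false_or_eq_true b with hb2 | hb2 <;> rcases h1 with h | h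
        · have h2' : (ends e1).2 ≠ v0 := fun hc => hl1 (h.trans hc.symm)
          simp [hfdef, hb2, hx, h, h2']
        · have h2' : (ends e1).1 ≠ v0 := fun hc => hl1 (hc.trans h.symm)
          simp [hfdef, hb2, hx, h, h2']
        · have h2' : (ends e1).2 ≠ v0 := fun hc => hl1 (h.trans hc.symm)
          simp [hfdef, hb2, hx, h, h2']
        · have h2' : (ends e1).1 ≠ v0 := fun hc => hl1 (hc.trans h.symm)
          simp [hfdef, hb2, hx, h, h2']
      have htl2 : (if f e2 then (ends e2).1 else (ends e2).2) = (if b then v0 else y) := by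
        rcases Bool.eq_false_or_eq_true b with hb2 | hb2 <;> rcases h2 with h | h
        · have h2' : (ends e2).2 ≠ v0 := fun hc => hl2 (h.trans hc.symm)
          simp [hfdef, hb2, hy, h, h2', hne.symm]
        · have h2' : (ends e2).1 ≠ v0 := fun hc => hl2 (hc.trans h.symm)
          simp [hfdef, hb2, hy, h, h2', hne.symm]
        · have h2' : (ends e2).2 ≠ v0 := fun hc => hl2 (h.trans hc.symm)
          simp [hfdef, hb2, hy, h, h2', hne.symm]
        · have h2' : (ends e2).1 ≠ v0 := fun hc => hl2 (hc.trans h.symm)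
          simp [hfdef, hb2, hy, h, h2', hne.symm]
      have hhd2 : (if f e2 then (ends e2).2 else (ends e2).1) = (if b then y else v0) := by
        rcases Bool.eq_false_or_eq_true b with hb2 | hb2 <;> rcases h2 with h | h
        · have h2' : (ends e2).2 ≠ v0 := fun hc => hl2 (h.trans hc.symm)
          simp [hfdef, hb2, hy, h, h2', hne.symm]
        · have h2' : (ends e2).1 ≠ v0 := fun hc => hl2 (hc.trans h.symm)
          simp [hfdef, hb2, hy, h, h2', hne.symm]
        · have h2' : (ends e2).2 ≠ v0 := fun hc => hl2 (h.trans hc.symm)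
          simp [hfdef, hb2, hy, h, h2', hne.symm]
        · have h2' : (ends e2).1 ≠ v0 := fun hc => hl2 (hc.trans h.symm)
          simp [hfdef, hb2, hy, h, h2', hne.symm]
      have htl1' : (if f' e1 then (ends' e1).1 else (ends' e1).2) = (if b then x else y) := by
        simp [hends', Function.update_self, ← hb]
      have hhd1' : (if f' e1 then (ends' e1).2 else (ends' e1).1) = (if b then y else x) := by
        simp [hends', Function.update_self, ← hb]
      refine ⟨f, fun v => ?_⟩
      have hrest : ∀ e ∈ (F.erase e2).erase e1,
          ((if (if f e then (ends e).1 else (ends e).2) = v then (1:ℕ) else 0)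
            = (if (if f' e then (ends' e).1 else (ends' e).2) = v then 1 else 0))
          ∧ ((if (if f e then (ends e).2 else (ends e).1) = v then (1:ℕ) else 0)
            = (if (if f' e then (ends' e).2 else (ends' e).1) = v then 1 else 0)) := by
        intro e he
        have h1 : e ≠ e1 := (Finset.mem_erase.1 he).1
        have h2 : e ≠ e2 := (Finset.mem_erase.1 (Finset.mem_erase.1 he).2).1
        rw [hfdef]
        simp [h1, h2, hends', Function.update_of_ne h1]
      have hout : outd ends F f v = outd ends' (F.erase e2) f' v + (if v0 = v then 1 else 0) := by
        rw [outd, outd, ← Finset.sum_erase_add _ _ he2, ← Finset.sum_erase_add _ _ he1',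
          ← Finset.sum_erase_add _ _ he1']
        rw [Finset.sum_congr rfl (fun e he => (hrest e he).1)]
        rw [htl1, htl2, htl1']
        rcases Bool.eq_false_or_eq_true b with hb2 | hb2 <;> simp [hb2] <;> ring
      have hin : ind ends F f v = ind ends' (F.erase e2) f' v + (if v0 = v then 1 else 0) := by
        rw [ind, ind, ← Finset.sum_erase_add _ _ he2, ← Finset.sum_erase_add _ _ he1',
          ← Finset.sum_erase_add _ _ he1']
        rw [Finset.sum_congr rfl (fun e he => (hrest e he).2)]
        rw [hhd1, hhd2, hhd1']
        rcases Bool.eq_false_or_eq_true b with hb2 | hb2 <;> simp [hb2] <;> ring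
      obtain ⟨hA, hB⟩ := hf' v
      rw [hout, hin]; push_cast; omega
    · refine ⟨fun _ => true, fun v => ?_⟩
      have hcard : (F.filter (fun e => (ends e).1 = v ∨ (ends e).2 = v)).card ≤ 1 := by
        refine Finset.card_le_one.2 fun a ha b hb => ?_
        simp only [Finset.mem_filter] at ha hb
        by_contra hab
        exact hpair ⟨a, ha.1, b, hb.1, hab, v, ha.2, hb.2⟩
      have hout : outd ends F (fun _ => true) v ≤ 1 := by
        rw [outd, ← Finset.card_filter]
        refine le_trans (Finset.card_le_card ?_) hcard
        intro e he
        simp only [Finset.mem_filter] at he ⊢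
        exact ⟨he.1, Or.inl (by simpa using he.2)⟩
      have hin : ind ends F (fun _ => true) v ≤ 1 := by
        rw [ind, ← Finset.card_filter]
        refine le_trans (Finset.card_le_card ?_) hcard
        intro e he
        simp only [Finset.mem_filter] at he ⊢
        exact ⟨he.1, Or.inr (by simpa using he.2)⟩
      constructor <;> push_cast <;> omega

lemma sq_le_one_of (x : ℤ) (h1 : x ≤ 1) (h2 : -x ≤ 1) : x ^ 2 ≤ 1 := by nlinarith

noncomputable def cnt {k : ℕ} (a : E → V) (c : E → Fin k) (v : V) (i : Fin k) : ℕ :=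
  ∑ e : E, if a e = v ∧ c e = i then 1 else 0

lemma rebalance {k : ℕ} (a b : E → V) (c : E → Fin k) (i j : Fin k) (hij : i ≠ j) :
    ∃ c' : E → Fin k,
      (∀ v l, l ≠ i → l ≠ j → cnt a c' v l = cnt a c v l ∧ cnt b c' v l = cnt b c v l) ∧
      (∀ v, cnt a c' v i + cnt a c' v j = cnt a c v i + cnt a c v j ∧
            cnt b c' v i + cnt b c' v j = cnt b c v i + cnt b c v j) ∧
      (∀ v, ((cnt a c' v i : ℤ) - cnt a c' v j)^2 ≤ 1 ∧
            ((cnt b c' v i : ℤ) - cnt b c' v j)^2 ≤ 1) := by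
  set ends0 : E → (V × Bool) × (V × Bool) := fun e => ((a e, true), (b e, false)) with hends0
  set F : Finset E := univ.filter (fun e => c e = i ∨ c e = j) with hF
  obtain ⟨f, hf⟩ := euler F ends0
  set c' : E → Fin k := fun e => if c e = i ∨ c e = j then (if f e then i else j) else c e with hc'
  have hmem : ∀ e, (c' e = i ∨ c' e = j) ↔ (c e = i ∨ c e = j) := by
    intro e
    by_cases hp : c e = i ∨ c e = j <;> by_cases hfe : f e <;> simp [hc', hp, hfe]
  have hci : ∀ e, c' e = i ↔ ((c e = i ∨ c e = j) ∧ f e) := by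
    intro e
    by_cases hp : c e = i ∨ c e = j <;> by_cases hfe : f e <;>
      simp [hc', hp, hfe, hij.symm] <;> tauto
  have hcj : ∀ e, c' e = j ↔ ((c e = i ∨ c e = j) ∧ ¬ f e) := by
    intro e
    by_cases hp : c e = i ∨ c e = j <;> by_cases hfe : f e <;>
      simp [hc', hp, hfe, hij] <;> tauto
  have hai : ∀ v, cnt a c' v i = outd ends0 F f (v, true) := by
    intro v
    rw [cnt, outd, Finset.sum_filter]
    refine Finset.sum_congr rfl fun e _ => ?_
    by_cases hp : c e = i ∨ c e = j <;> by_cases hfe : f e <;>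
      simp [hci, hp, hfe, hends0]
  have haj : ∀ v, cnt a c' v j = ind ends0 F f (v, true) := by
    intro v
    rw [cnt, ind, Finset.sum_filter]
    refine Finset.sum_congr rfl fun e _ => ?_
    by_cases hp : c e = i ∨ c e = j <;> by_cases hfe : f e <;>
      simp [hcj, hp, hfe, hends0]
  have hbi : ∀ v, cnt b c' v i = ind ends0 F f (v, false) := by
    intro v
    rw [cnt, ind, Finset.sum_filter]
    refine Finset.sum_congr rfl fun e _ => ?_
    by_cases hp : c e = i ∨ c e = j <;> by_cases hfe : f e <;>
      simp [hci, hp, hfe, hends0]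
  have hbj : ∀ v, cnt b c' v j = outd ends0 F f (v, false) := by
    intro v
    rw [cnt, outd, Finset.sum_filter]
    refine Finset.sum_congr rfl fun e _ => ?_
    by_cases hp : c e = i ∨ c e = j <;> by_cases hfe : f e <;>
      simp [hcj, hp, hfe, hends0]
  refine ⟨c', ?_, ?_, ?_⟩
  · intro v l hli hlj
    constructor <;>
    · rw [cnt, cnt]
      refine Finset.sum_congr rfl fun e _ => ?_
      have : c' e = l ↔ c e = l := by
        rcases em (c e = i) with h1 | h1 <;> rcases em (c e = j) with h2 | h2 <;>
          by_cases hfe : f e <;>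
          simp [hc', h1, h2, hfe, Ne.symm hli, Ne.symm hlj]
      simp [this]
  · intro v
    have hexc : ∀ (d : E → Fin k) (e : E), ¬(d e = i ∧ d e = j) :=
      fun d e ⟨u, w⟩ => hij (u.symm.trans w)
    have key : ∀ (w : E → V), cnt w c' v i + cnt w c' v j = cnt w c v i + cnt w c v j := by
      intro w
      rw [cnt, cnt, cnt, cnt, ← Finset.sum_add_distrib, ← Finset.sum_add_distrib]
      refine Finset.sum_congr rfl fun e _ => ?_
      by_cases hv : w e = v
      · simp only [hv, true_and]
        by_cases p1 : c' e = i <;> by_cases p2 : c' e = j <;>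
          by_cases q1 : c e = i <;> by_cases q2 : c e = j <;>
          first
            | (exfalso; have h1 := hmem e; have h2 := hexc c' e; have h3 := hexc c e; tauto)
            | simp [p1, p2, q1, q2, hij, Ne.symm hij]
      · simp [hv]
    exact ⟨key a, key b⟩
  · intro v
    constructor
    · rw [hai, haj]
      obtain ⟨h1, h2⟩ := hf (v, true)
      exact sq_le_one_of _ h1 (by omega)
    · rw [hbi, hbj]
      obtain ⟨h1, h2⟩ := hf (v, false)
      exact sq_le_one_of _ h2 (by omega)

noncomputable def pot {k : ℕ} (a b : E → V) (c : E → Fin k) : ℕ :=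
  ∑ v : V, ∑ l : Fin k, ((cnt a c v l)^2 + (cnt b c v l)^2)

lemma four_le_sq (x : ℤ) (h : 1 < x^2) : 4 ≤ x^2 := by
  rcases le_or_gt 2 x with h2 | h2
  · nlinarith
  rcases le_or_gt x (-2) with h3 | h3
  · nlinarith
  · nlinarith

lemma pairsq (x y x' y' : ℤ) (hs : x' + y' = x + y) (hb : (x' - y')^2 ≤ 1) :
    x'^2 + y'^2 ≤ x^2 + y^2 := by
  have key : (x' - y')^2 ≤ (x - y)^2 := by
    by_contra hlt
    push_neg at hlt
    have h0 : (x - y)^2 = 0 := le_antisymm (by nlinarith [sq_nonneg (x-y)]) (sq_nonneg _)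
    have hxy : x - y = 0 := by
      have := sq_eq_zero_iff.mp h0
      linarith [this]
    have hm : x' - y' = 2*(x' - x) := by omega
    have h4 : (x' - y')^2 = 4 * (x' - x)^2 := by rw [hm]; ring
    have hA : 4*(x' - x) ≤ 2 := by nlinarith [sq_nonneg (2*(x' - x) - 1)]
    have hB : -(4*(x' - x)) ≤ 2 := by nlinarith [sq_nonneg (2*(x' - x) + 1)]
    have : x' - x = 0 := by omega
    rw [h4, this] at hlt
    simp at hlt
    nlinarith [sq_nonneg (x - y)]
  have e1 : 2*(x'^2+y'^2) = (x'+y')^2 + (x'-y')^2 := by ring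
  have e2 : 2*(x^2+y^2) = (x+y)^2 + (x-y)^2 := by ring
  rw [hs] at e1
  linarith

lemma pairsq_lt (x y x' y' : ℤ) (hs : x' + y' = x + y) (hb : (x' - y')^2 ≤ 1)
    (hst : 1 < (x - y)^2) : x'^2 + y'^2 < x^2 + y^2 := by
  have h4 := four_le_sq _ hst
  have e1 : 2*(x'^2+y'^2) = (x'+y')^2 + (x'-y')^2 := by ring
  have e2 : 2*(x^2+y^2) = (x+y)^2 + (x-y)^2 := by ring
  rw [hs] at e1
  linarith

lemma decrease {k : ℕ} (a b : E → V) (c : E → Fin k) (v0 : V) (i j : Fin k)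
    (hbad : ¬(((cnt a c v0 i : ℤ) - cnt a c v0 j)^2 ≤ 1 ∧
              ((cnt b c v0 i : ℤ) - cnt b c v0 j)^2 ≤ 1)) :
    ∃ c' : E → Fin k,
      (∀ v, ((cnt a c' v i : ℤ) - cnt a c' v j)^2 ≤ 1 ∧
            ((cnt b c' v i : ℤ) - cnt b c' v j)^2 ≤ 1) ∧
      pot a b c' < pot a b c := by
  have hij : i ≠ j := by
    rintro rfl
    simp at hbad
  obtain ⟨c', P1, P2, P3⟩ := rebalance a b c i j hij
  refine ⟨c', P3, ?_⟩
  have hj : j ∈ univ.erase i := Finset.mem_erase.2 ⟨hij.symm, mem_univ j⟩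
  have hsplit : ∀ (t : Fin k → ℕ), ∑ l, t l = (∑ l ∈ (univ.erase i).erase j, t l) + t j + t i := by
    intro t
    rw [← Finset.sum_erase_add _ _ (mem_univ i), ← Finset.sum_erase_add _ _ hj]
  have hle : ∀ v, ∑ l : Fin k, ((cnt a c' v l)^2 + (cnt b c' v l)^2)
      ≤ ∑ l : Fin k, ((cnt a c v l)^2 + (cnt b c v l)^2) := by
    intro v
    rw [hsplit, hsplit]
    have hrest : ∑ l ∈ (univ.erase i).erase j, ((cnt a c' v l)^2 + (cnt b c' v l)^2)
        = ∑ l ∈ (univ.erase i).erase j, ((cnt a c v l)^2 + (cnt b c v l)^2) := by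
      refine Finset.sum_congr rfl fun l hl => ?_
      have hlj : l ≠ j := (Finset.mem_erase.1 hl).1
      have hli : l ≠ i := (Finset.mem_erase.1 (Finset.mem_erase.1 hl).2).1
      obtain ⟨e1, e2⟩ := P1 v l hli hlj
      rw [e1, e2]
    rw [hrest]
    have key : (cnt a c' v j)^2 + (cnt b c' v j)^2 + ((cnt a c' v i)^2 + (cnt b c' v i)^2)
        ≤ (cnt a c v j)^2 + (cnt b c v j)^2 + ((cnt a c v i)^2 + (cnt b c v i)^2) := by
      obtain ⟨s1, s2⟩ := P2 v
      obtain ⟨b1, b2⟩ := P3 v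
      have ha := pairsq (cnt a c v i) (cnt a c v j) (cnt a c' v i) (cnt a c' v j)
        (by exact_mod_cast congrArg (Nat.cast : ℕ → ℤ) s1) b1
      have hbb := pairsq (cnt b c v i) (cnt b c v j) (cnt b c' v i) (cnt b c' v j)
        (by exact_mod_cast congrArg (Nat.cast : ℕ → ℤ) s2) b2
      have := add_le_add ha hbb
      push_cast at this ⊢
      exact_mod_cast by linarith
    omega
  refine Finset.sum_lt_sum (fun v _ => hle v) ⟨v0, mem_univ v0, ?_⟩
  rw [hsplit, hsplit]
  have hrest : ∑ l ∈ (univ.erase i).erase j, ((cnt a c' v0 l)^2 + (cnt b c' v0 l)^2)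
      = ∑ l ∈ (univ.erase i).erase j, ((cnt a c v0 l)^2 + (cnt b c v0 l)^2) := by
    refine Finset.sum_congr rfl fun l hl => ?_
    have hlj : l ≠ j := (Finset.mem_erase.1 hl).1
    have hli : l ≠ i := (Finset.mem_erase.1 (Finset.mem_erase.1 hl).2).1
    obtain ⟨e1, e2⟩ := P1 v0 l hli hlj
    rw [e1, e2]
  rw [hrest]
  obtain ⟨s1, s2⟩ := P2 v0
  obtain ⟨b1, b2⟩ := P3 v0
  have hs1 : ((cnt a c' v0 i : ℤ)) + cnt a c' v0 j = (cnt a c v0 i : ℤ) + cnt a c v0 j := by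
    exact_mod_cast congrArg (Nat.cast : ℕ → ℤ) s1
  have hs2 : ((cnt b c' v0 i : ℤ)) + cnt b c' v0 j = (cnt b c v0 i : ℤ) + cnt b c v0 j := by
    exact_mod_cast congrArg (Nat.cast : ℕ → ℤ) s2
  have hstrict : ((cnt a c' v0 i : ℤ))^2 + (cnt a c' v0 j)^2 + ((cnt b c' v0 i : ℤ))^2 + (cnt b c' v0 j)^2
      < ((cnt a c v0 i : ℤ))^2 + (cnt a c v0 j)^2 + ((cnt b c v0 i : ℤ))^2 + (cnt b c v0 j)^2 := by
    rcases not_and_or.1 hbad with hb1 | hb2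
    · have hlt := pairsq_lt _ _ _ _ hs1 b1 (by push_neg at hb1; exact hb1)
      have hle2 := pairsq _ _ _ _ hs2 b2
      linarith
    · have hlt := pairsq_lt _ _ _ _ hs2 b2 (by push_neg at hb2; exact hb2)
      have hle2 := pairsq _ _ _ _ hs1 b1
      linarith
  have : ((cnt a c' v0 j)^2 + (cnt b c' v0 j)^2 + ((cnt a c' v0 i)^2 + (cnt b c' v0 i)^2) : ℤ)
      < ((cnt a c v0 j)^2 + (cnt b c v0 j)^2 + ((cnt a c v0 i)^2 + (cnt b c v0 i)^2) : ℤ) := by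
    linarith
  have h2 : ((cnt a c' v0 j)^2 + (cnt b c' v0 j)^2 + ((cnt a c' v0 i)^2 + (cnt b c' v0 i)^2) : ℕ)
      < ((cnt a c v0 j)^2 + (cnt b c v0 j)^2 + ((cnt a c v0 i)^2 + (cnt b c v0 i)^2) : ℕ) := by
    exact_mod_cast by push_cast; linarith [this]
  omega

lemma balance {k : ℕ} (a b : E → V) (hk : 0 < k) : ∃ c : E → Fin k, ∀ (v : V) (i j : Fin k),
    ((cnt a c v i : ℤ) - cnt a c v j)^2 ≤ 1 ∧ ((cnt b c v i : ℤ) - cnt b c v j)^2 ≤ 1 := by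
  have main : ∀ (n : ℕ) (c : E → Fin k), pot a b c ≤ n → ∃ c' : E → Fin k, ∀ (v : V) (i j : Fin k),
      ((cnt a c' v i : ℤ) - cnt a c' v j)^2 ≤ 1 ∧ ((cnt b c' v i : ℤ) - cnt b c' v j)^2 ≤ 1 := by
    intro n
    induction n with
    | zero =>
      intro c hc
      by_cases hbal : ∀ (v : V) (i j : Fin k),
          ((cnt a c v i : ℤ) - cnt a c v j)^2 ≤ 1 ∧ ((cnt b c v i : ℤ) - cnt b c v j)^2 ≤ 1
      · exact ⟨c, hbal⟩
      · push_neg at hbal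
        obtain ⟨v0, i, j, hbad⟩ := hbal
        obtain ⟨c', _, hlt⟩ := decrease a b c v0 i j
          (fun h => absurd h.2 (not_le.2 (hbad h.1)))
        omega
    | succ n ih =>
      intro c hc
      by_cases hbal : ∀ (v : V) (i j : Fin k),
          ((cnt a c v i : ℤ) - cnt a c v j)^2 ≤ 1 ∧ ((cnt b c v i : ℤ) - cnt b c v j)^2 ≤ 1
      · exact ⟨c, hbal⟩
      · push_neg at hbal
        obtain ⟨v0, i, j, hbad⟩ := hbal
        obtain ⟨c', _, hlt⟩ := decrease a b c v0 i j
          (fun h => absurd h.2 (not_le.2 (hbad h.1)))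
        exact ih c' (by omega)
  exact main (pot a b (fun _ => ⟨0, hk⟩)) _ le_rfl

lemma final_num {k : ℕ} (hk : 0 < k) (u : Fin k → ℕ) (i : Fin k)
    (h : ∀ j, ((u i : ℤ) - u j)^2 ≤ 1) :
    |(u i : ℚ) - (∑ j, (u j : ℚ)) / k| < 1 := by
  have habs : ∀ j, |(u i : ℤ) - u j| ≤ 1 := by
    intro j
    have := h j
    rw [abs_le]
    constructor <;> nlinarith [sq_nonneg ((u i : ℤ) - u j - 1), sq_nonneg ((u i : ℤ) - u j + 1)]
  have key : |(k : ℤ) * u i - ∑ j, (u j : ℤ)| ≤ (k : ℤ) - 1 := by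
    have hk1 : (k : ℤ) * u i = ∑ _j : Fin k, (u i : ℤ) := by
      simp [Finset.sum_const, Finset.card_univ, mul_comm]
    rw [hk1, ← Finset.sum_sub_distrib]
    refine le_trans (Finset.abs_sum_le_sum_abs _ _) ?_
    have hsp : ∑ j, |(u i : ℤ) - u j| = ∑ j ∈ univ.erase i, |(u i : ℤ) - u j| := by
      rw [← Finset.sum_erase_add _ _ (mem_univ i)]
      simp
    rw [hsp]
    calc ∑ j ∈ univ.erase i, |(u i : ℤ) - u j| ≤ ∑ _j ∈ univ.erase i, (1 : ℤ) :=
          Finset.sum_le_sum fun j _ => habs j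
      _ = ((univ.erase i).card : ℤ) := by simp
      _ = (k : ℤ) - 1 := by
          rw [Finset.card_erase_of_mem (mem_univ i)]
          simp [Finset.card_univ]
          omega
  have hkQ : (0 : ℚ) < k := by exact_mod_cast hk
  have heq : (u i : ℚ) - (∑ j, (u j : ℚ)) / k = ((k : ℚ) * u i - ∑ j, (u j : ℚ)) / k := by
    field_simp
  rw [heq, abs_div, abs_of_pos hkQ, div_lt_one hkQ]
  have hfin : |(k : ℚ) * u i - ∑ j, (u j : ℚ)| ≤ (k : ℚ) - 1 := by
    calc |(k : ℚ) * u i - ∑ j, (u j : ℚ)| = ((|(k : ℤ) * u i - ∑ j, (u j : ℤ)| : ℤ) : ℚ) := by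
          rw [Int.cast_abs]; push_cast; ring_nf
      _ ≤ (((k : ℤ) - 1 : ℤ) : ℚ) := by exact_mod_cast key
      _ = (k : ℚ) - 1 := by push_cast; ring
  linarith


/-- de Werra: equitable k-factorizations of bipartite multigraphs. -/
theorem stmt4 (ends : E → V × V) (side : V → Bool)
    (hbip : ∀ e : E, side (ends e).1 ≠ side (ends e).2) (k : ℕ) (hk : 0 < k) :
    ∃ c : E → Fin k, ∀ (v : V) (i : Fin k),
      |(mdeg ends (Finset.univ.filter fun e => c e = i) v : ℚ)
        - (mdeg ends Finset.univ v : ℚ) / k| < 1 := by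
  set aE : E → V := fun e => if side (ends e).1 then (ends e).1 else (ends e).2 with haE
  set bE : E → V := fun e => if side (ends e).1 then (ends e).2 else (ends e).1 with hbE
  obtain ⟨c, hbal⟩ := balance (E := E) aE bE hk
  refine ⟨c, fun v i => ?_⟩
  rcases Bool.eq_false_or_eq_true (side v) with hv | hv
  · -- a-side vertex (side v = true)
    have hmd : ∀ F : Finset E, mdeg ends F v = ∑ e ∈ F, if aE e = v then 1 else 0 := by
      intro F
      refine Finset.sum_congr rfl fun e _ => ?_
      rcases Bool.eq_false_or_eq_true (side (ends e).1) with hs | hs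
      · have h2 : side (ends e).2 = false := by
          rcases Bool.eq_false_or_eq_true (side (ends e).2) with h | h
          · exact absurd (hs.trans h.symm) (hbip e)
          · exact h
        have h1 : (ends e).2 ≠ v := fun hc => by rw [hc, hv] at h2; simp at h2
        simp [haE, hs, h1]
      · have h1 : (ends e).1 ≠ v := fun hc => by rw [hc, hv] at hs; simp at hs
        simp [haE, hs, h1]
    have hfi : mdeg ends (Finset.univ.filter fun e => c e = i) v = cnt aE c v i := by
      rw [hmd, cnt, Finset.sum_filter]
      refine Finset.sum_congr rfl fun e _ => ?_
      by_cases h1 : c e = i <;> by_cases h2 : aE e = v <;> simp [h1, h2]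
    have htot : mdeg ends Finset.univ v = ∑ j, cnt aE c v j := by
      rw [hmd]
      have hsw : ∑ j, cnt aE c v j = ∑ e : E, ∑ j : Fin k, (if aE e = v ∧ c e = j then 1 else 0) := by
        simp only [cnt]
        exact Finset.sum_comm
      rw [hsw]
      refine Finset.sum_congr rfl fun e _ => ?_
      by_cases h2 : aE e = v <;> simp [h2, Finset.sum_ite_eq]
    rw [hfi, htot]
    have hfn := final_num hk (fun j => cnt aE c v j) i (fun j => (hbal v i j).1)
    push_cast at hfn ⊢
    convert hfn using 3
  · -- b-side vertex (side v = false)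
    have hmd : ∀ F : Finset E, mdeg ends F v = ∑ e ∈ F, if bE e = v then 1 else 0 := by
      intro F
      refine Finset.sum_congr rfl fun e _ => ?_
      rcases Bool.eq_false_or_eq_true (side (ends e).1) with hs | hs
      · have h1 : (ends e).1 ≠ v := fun hc => by rw [hc, hv] at hs; simp at hs
        simp [hbE, hs, h1]
      · have h2 : side (ends e).2 = true := by
          rcases Bool.eq_false_or_eq_true (side (ends e).2) with h | h
          · exact h
          · exact absurd (hs.trans h.symm) (hbip e)
        have h1 : (ends e).2 ≠ v := fun hc => by rw [hc, hv] at h2; simp at h2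
        simp [hbE, hs, h1, add_comm]
    have hfi : mdeg ends (Finset.univ.filter fun e => c e = i) v = cnt bE c v i := by
      rw [hmd, cnt, Finset.sum_filter]
      refine Finset.sum_congr rfl fun e _ => ?_
      by_cases h1 : c e = i <;> by_cases h2 : bE e = v <;> simp [h1, h2]
    have htot : mdeg ends Finset.univ v = ∑ j, cnt bE c v j := by
      rw [hmd]
      have hsw : ∑ j, cnt bE c v j = ∑ e : E, ∑ j : Fin k, (if bE e = v ∧ c e = j then 1 else 0) := by
        simp only [cnt]
        exact Finset.sum_comm
      rw [hsw]
      refine Finset.sum_congr rfl fun e _ => ?_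
      by_cases h2 : bE e = v <;> simp [h2, Finset.sum_ite_eq]
    rw [hfi, htot]
    have hfn := final_num hk (fun j => cnt bE c v j) i (fun j => (hbal v i j).2)
    push_cast at hfn ⊢
    convert hfn using 3
end

section
/- Every even multigraph G (all vertex degrees even) can be edge-decomposed into k spanning subgraphs G_1,...,G_k such that each G_i has all vertex degrees even and for every vertex v and each i, |d_{G_i}(v) - d_G(v)/k| < 2. -/
open Finset

variable {V E : Type*} [Fintype V] [Fintype E] [DecidableEq V]

open Finset

section HallColor

/-- If `c` is injective on a finset `S` of size `k` with values in `Fin k`,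
every color is attained exactly once on `S`. -/
lemma unique_color {A : Type*} {k : ℕ} (S : Finset A) (c : A → Fin k)
    (hcard : S.card = k) (hinj : ∀ a ∈ S, ∀ b ∈ S, c a = c b → a = b) (i : Fin k) :
    (S.filter fun a => c a = i).card = 1 := by
  classical
  have himg : S.image c = Finset.univ := by
    apply Finset.eq_univ_of_card
    rw [Finset.card_image_of_injOn (fun a ha b hb => hinj a ha b hb), hcard, Fintype.card_fin]
  have hi : i ∈ S.image c := himg ▸ Finset.mem_univ i
  obtain ⟨a, ha, hac⟩ := Finset.mem_image.mp hi
  rw [Finset.card_eq_one]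
  refine ⟨a, ?_⟩
  ext b
  simp only [Finset.mem_filter, Finset.mem_singleton]
  constructor
  · rintro ⟨hb, hbc⟩; exact hinj b hb a ha (hbc.trans hac.symm)
  · rintro rfl; exact ⟨ha, hac⟩

universe uA uL uR

/-- Proper `k`-coloring of a `k`-regular bipartite "incidence system":
if all fibers of `f` and `g` have size `k`, there is a coloring injective on
each `f`-fiber and on each `g`-fiber. -/
lemma hall_color (k : ℕ) : ∀ (A : Type uA) [Fintype A] [DecidableEq A]
    (L : Type uL) [Fintype L] [DecidableEq L] (R : Type uR) [Fintype R] [DecidableEq R]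
    (f : A → L) (g : A → R),
    (∀ ℓ, (univ.filter fun a => f a = ℓ).card = k) →
    (∀ r, (univ.filter fun a => g a = r).card = k) →
    ∃ c : A → Fin k, (∀ a b, f a = f b → c a = c b → a = b) ∧
      (∀ a b, g a = g b → c a = c b → a = b) := by
  induction k with
  | zero =>
    intro A _ _ L _ _ R _ _ f g hf _
    have hA : IsEmpty A := by
      by_contra h
      rw [not_isEmpty_iff] at h
      obtain ⟨a⟩ := h
      have := hf (f a)
      have ha : a ∈ univ.filter fun b => f b = f a := by simp
      rw [Finset.card_eq_zero] at this
      simp [this] at ha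
    exact ⟨fun a => (hA.false a).elim, fun a => (hA.false a).elim, fun a => (hA.false a).elim⟩
  | succ k ih =>
    intro A _ _ L _ _ R _ _ f g hf hg
    classical
    set t : L → Finset R := fun ℓ => (univ.filter fun a => f a = ℓ).image g with ht
    -- counting: fibers of membership sets
    have hcount : ∀ (s : Finset L), (univ.filter fun a => f a ∈ s).card = (k+1) * s.card := by
      intro s
      rw [Finset.card_eq_sum_card_fiberwise (f := f) (s := univ.filter fun a => f a ∈ s) (t := s)
        (fun x hx => (Finset.mem_filter.mp hx).2)]
      rw [Finset.sum_congr rfl (fun ℓ hℓ => ?_), Finset.sum_const, smul_eq_mul, mul_comm]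
      rw [Finset.filter_filter]
      rw [← hf ℓ]
      congr 1
      apply Finset.filter_congr
      intro a _
      constructor
      · rintro ⟨_, h2⟩; exact h2
      · rintro h2; exact ⟨h2 ▸ hℓ, h2⟩
    have hcountg : ∀ (s : Finset R), (univ.filter fun a => g a ∈ s).card = (k+1) * s.card := by
      intro s
      rw [Finset.card_eq_sum_card_fiberwise (f := g) (s := univ.filter fun a => g a ∈ s) (t := s)
        (fun x hx => (Finset.mem_filter.mp hx).2)]
      rw [Finset.sum_congr rfl (fun r hr => ?_), Finset.sum_const, smul_eq_mul, mul_comm]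
      rw [Finset.filter_filter]
      rw [← hg r]
      congr 1
      apply Finset.filter_congr
      intro a _
      constructor
      · rintro ⟨_, h2⟩; exact h2
      · rintro h2; exact ⟨h2 ▸ hr, h2⟩
    have hall : ∀ s : Finset L, s.card ≤ (s.biUnion t).card := by
      intro s
      have hsub : (univ.filter fun a => f a ∈ s) ⊆ (univ.filter fun a => g a ∈ s.biUnion t) := by
        intro a ha
        simp only [Finset.mem_filter, Finset.mem_univ, true_and] at ha ⊢
        exact Finset.mem_biUnion.mpr ⟨f a, ha, Finset.mem_image.mpr ⟨a, by simp, rfl⟩⟩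
      have := Finset.card_le_card hsub
      rw [hcount, hcountg] at this
      exact Nat.le_of_mul_le_mul_left this (Nat.succ_pos k)
    obtain ⟨ι, hιinj, hιmem⟩ := (Finset.all_card_le_biUnion_card_iff_exists_injective t).mp hall
    have hM : ∀ ℓ, ∃ a, f a = ℓ ∧ g a = ι ℓ := by
      intro ℓ
      obtain ⟨a, ha, hag⟩ := Finset.mem_image.mp (hιmem ℓ)
      exact ⟨a, (Finset.mem_filter.mp ha).2, hag⟩
    choose M hMf hMg using hM
    have hMinj : Function.Injective M := by
      intro x y h
      rw [← hMf x, ← hMf y, h]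
    -- card L = card R
    have hcardLR : Fintype.card L = Fintype.card R := by
      have h1 : Fintype.card A = (k+1) * Fintype.card L := by
        have := hcount univ
        simpa using this
      have h2 : Fintype.card A = (k+1) * Fintype.card R := by
        have := hcountg univ
        simpa using this
      exact Nat.eq_of_mul_eq_mul_left (Nat.succ_pos k) (h1 ▸ h2)
    have hιbij : Function.Bijective ι :=
      (Fintype.bijective_iff_injective_and_card ι).mpr ⟨hιinj, hcardLR⟩
    set rng : Finset A := univ.image M with hrng
    have hmem_rng : ∀ {a : A}, a ∈ rng ↔ ∃ ℓ, M ℓ = a := by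
      intro a; simp [hrng]
    -- fibers restricted to complement of rng
    have hfib_f : ∀ ℓ, (univ.filter fun a => a ∉ rng ∧ f a = ℓ).card = k := by
      intro ℓ
      have hset : (univ.filter fun a => a ∉ rng ∧ f a = ℓ)
          = (univ.filter fun a => f a = ℓ).erase (M ℓ) := by
        ext a
        simp only [Finset.mem_filter, Finset.mem_erase, Finset.mem_univ, true_and]
        constructor
        · rintro ⟨hnr, hfa⟩
          refine ⟨?_, hfa⟩
          rintro rfl
          exact hnr (hmem_rng.mpr ⟨ℓ, rfl⟩)
        · rintro ⟨hne, hfa⟩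
          refine ⟨?_, hfa⟩
          intro hr
          obtain ⟨ℓ', hℓ'⟩ := hmem_rng.mp hr
          have : ℓ' = ℓ := by rw [← hfa, ← hℓ', hMf]
          exact hne (by rw [← hℓ', this])
      rw [hset, Finset.card_erase_of_mem (by simp [hMf ℓ]), hf ℓ]
      omega
    have hfib_g : ∀ r, (univ.filter fun a => a ∉ rng ∧ g a = r).card = k := by
      intro r
      obtain ⟨ℓr, hℓr⟩ := hιbij.surjective r
      have hset : (univ.filter fun a => a ∉ rng ∧ g a = r)
          = (univ.filter fun a => g a = r).erase (M ℓr) := by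
        ext a
        simp only [Finset.mem_filter, Finset.mem_erase, Finset.mem_univ, true_and]
        constructor
        · rintro ⟨hnr, hga⟩
          refine ⟨?_, hga⟩
          rintro rfl
          exact hnr (hmem_rng.mpr ⟨ℓr, rfl⟩)
        · rintro ⟨hne, hga⟩
          refine ⟨?_, hga⟩
          intro hr2
          obtain ⟨ℓ', hℓ'⟩ := hmem_rng.mp hr2
          have : ι ℓ' = ι ℓr := by rw [← hℓ'] at hga; rw [hMg ℓ'] at hga; rw [hga, hℓr]
          have : ℓ' = ℓr := hιinj this
          exact hne (by rw [← hℓ', this])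
      rw [hset, Finset.card_erase_of_mem (by simp [hMg ℓr, hℓr]), hg r]
      omega
    -- the subtype
    set A' := {a : A // a ∉ rng} with hA'
    have hsubcard : ∀ (p : A → Prop) [DecidablePred p],
        ((univ : Finset A').filter fun x => p x.1).card = (univ.filter fun a => a ∉ rng ∧ p a).card := by
      intro p _
      rw [Finset.card_filter, Finset.card_filter]
      rw [← Finset.sum_subtype (s := univ.filter fun a => a ∉ rng) (p := fun a => a ∉ rng)
        (by intro x; simp) (f := fun a => if p a then 1 else 0)]
      rw [Finset.sum_filter]
      rw [Finset.sum_congr rfl]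
      intro a _
      by_cases h : a ∉ rng <;> simp [h]
    obtain ⟨c', hc'f, hc'g⟩ := ih A' L R (fun x => f x.1) (fun x => g x.1)
      (fun ℓ => (hsubcard (fun a => f a = ℓ)).trans (hfib_f ℓ))
      (fun r => (hsubcard (fun a => g a = r)).trans (hfib_g r))
    refine ⟨fun a => if h : a ∈ rng then Fin.last k else (c' ⟨a, h⟩).castSucc, ?_, ?_⟩
    · intro a b hfab hcab
      by_cases ha : a ∈ rng <;> by_cases hb : b ∈ rng
      · obtain ⟨ℓa, hℓa⟩ := hmem_rng.mp ha
        obtain ⟨ℓb, hℓb⟩ := hmem_rng.mp hb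
        have : ℓa = ℓb := by
          rw [← hℓa, ← hℓb] at hfab; rw [hMf, hMf] at hfab; exact hfab
        rw [← hℓa, ← hℓb, this]
      · simp only [dif_pos ha, dif_neg hb] at hcab
        exact absurd hcab.symm (ne_of_lt (Fin.castSucc_lt_last _))
      · simp only [dif_neg ha, dif_pos hb] at hcab
        exact absurd hcab (ne_of_lt (Fin.castSucc_lt_last _))
      · simp only [dif_neg ha, dif_neg hb] at hcab
        have := hc'f ⟨a, ha⟩ ⟨b, hb⟩ hfab (Fin.castSucc_injective _ hcab)
        exact congrArg Subtype.val this
    · intro a b hgab hcab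
      by_cases ha : a ∈ rng <;> by_cases hb : b ∈ rng
      · obtain ⟨ℓa, hℓa⟩ := hmem_rng.mp ha
        obtain ⟨ℓb, hℓb⟩ := hmem_rng.mp hb
        have hab : ι ℓa = ι ℓb := by
          rw [← hℓa, ← hℓb] at hgab; rw [hMg, hMg] at hgab; exact hgab
        have : ℓa = ℓb := hιinj hab
        rw [← hℓa, ← hℓb, this]
      · simp only [dif_pos ha, dif_neg hb] at hcab
        exact absurd hcab.symm (ne_of_lt (Fin.castSucc_lt_last _))
      · simp only [dif_neg ha, dif_pos hb] at hcab
        exact absurd hcab (ne_of_lt (Fin.castSucc_lt_last _))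
      · simp only [dif_neg ha, dif_neg hb] at hcab
        have := hc'g ⟨a, ha⟩ ⟨b, hb⟩ hgab (Fin.castSucc_injective _ hcab)
        exact congrArg Subtype.val this

end HallColor

section Grouping

lemma card_div_fiber (k M g : ℕ) (hk : 0 < k) (hg : g < M) :
    ((range (k * M)).filter fun i => i / k = g).card = k := by
  have hset : ((range (k * M)).filter fun i => i / k = g) = Ico (g * k) (g * k + k) := by
    ext i
    simp only [mem_filter, mem_range, mem_Ico]
    constructor
    · rintro ⟨h1, rfl⟩
      have h2 := Nat.div_add_mod i k
      have h3 := Nat.mod_lt i hk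
      have h4 : i / k * k = k * (i / k) := Nat.mul_comm _ _
      omega
    · rintro ⟨h1, h2⟩
      have h3 : i / k = g := Nat.div_eq_of_lt_le (by omega) (by rw [add_mul, one_mul]; omega)
      constructor
      · have : g + 1 ≤ M := hg
        calc i < g * k + k := h2
        _ = (g+1) * k := by ring
        _ ≤ M * k := Nat.mul_le_mul_right k this
        _ = k * M := by ring
      · exact h3
  rw [hset, Nat.card_Ico]
  omega

lemma grouping {W : Type*} [DecidableEq W] {A : Type*} [Fintype A] [DecidableEq A]
    (t : A → W) (k : ℕ) (hk : 0 < k) (M : W → ℕ)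
    (hcard : ∀ v, (univ.filter fun a => t a = v).card = k * M v)
    (P : W → Finset A) (hPt : ∀ v a, a ∈ P v → t a = v) (hPk : ∀ v, (P v).card ≤ k) :
    ∃ G : A → ℕ, (∀ a, G a < M (t a)) ∧
      (∀ v (g : ℕ), g < M v → (univ.filter fun a => t a = v ∧ G a = g).card = k) ∧
      (∀ v a, a ∈ P v → G a = 0) := by
  classical
  set S : W → Finset A := fun v => univ.filter fun a => t a = v with hS
  have hPS : ∀ v, P v ⊆ S v := fun v a ha =>
    Finset.mem_filter.mpr ⟨Finset.mem_univ a, hPt v a ha⟩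
  set Q : W → Finset A := fun v => S v \ P v with hQdef
  have hPQ : ∀ v, (P v).card + (Q v).card = (S v).card := by
    intro v
    have h1 : (Q v).card = (S v).card - (P v).card := Finset.card_sdiff_of_subset (hPS v)
    have h2 : (P v).card ≤ (S v).card := Finset.card_le_card (hPS v)
    omega
  set rk : W → A → ℕ := fun v a =>
    if h : a ∈ P v then (((P v).equivFin ⟨a, h⟩ : Fin (P v).card) : ℕ)
    else if h2 : a ∈ Q v then (P v).card + (((Q v).equivFin ⟨a, h2⟩ : Fin (Q v).card) : ℕ)
    else 0 with hrk
  have hmemPQ : ∀ v a, a ∈ S v → a ∉ P v → a ∈ Q v := by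
    intro v a ha hna
    exact Finset.mem_sdiff.mpr ⟨ha, hna⟩
  have hrk_lt : ∀ v a, a ∈ S v → rk v a < (S v).card := by
    intro v a ha
    by_cases h : a ∈ P v
    · simp only [hrk, dif_pos h]
      calc (((P v).equivFin ⟨a, h⟩ : Fin (P v).card) : ℕ) < (P v).card := Fin.is_lt _
      _ ≤ (S v).card := Finset.card_le_card (hPS v)
    · have h2 := hmemPQ v a ha h
      simp only [hrk, dif_neg h, dif_pos h2]
      have := Fin.is_lt ((Q v).equivFin ⟨a, h2⟩)
      have h4 := hPQ v
      omega
  have hrk_inj : ∀ v a, a ∈ S v → ∀ b, b ∈ S v → rk v a = rk v b → a = b := by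
    intro v a ha b hb hab
    by_cases h1 : a ∈ P v <;> by_cases h2 : b ∈ P v
    · simp only [hrk, dif_pos h1, dif_pos h2] at hab
      have := (P v).equivFin.injective (Fin.ext hab)
      exact congrArg Subtype.val this
    · have hb2 := hmemPQ v b hb h2
      simp only [hrk, dif_pos h1, dif_neg h2, dif_pos hb2] at hab
      have := Fin.is_lt ((P v).equivFin ⟨a, h1⟩)
      omega
    · have ha2 := hmemPQ v a ha h1
      simp only [hrk, dif_neg h1, dif_pos ha2, dif_pos h2] at hab
      have := Fin.is_lt ((P v).equivFin ⟨b, h2⟩)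
      omega
    · have ha2 := hmemPQ v a ha h1
      have hb2 := hmemPQ v b hb h2
      simp only [hrk, dif_neg h1, dif_pos ha2, dif_neg h2, dif_pos hb2] at hab
      have h3 : (((Q v).equivFin ⟨a, ha2⟩ : Fin (Q v).card) : ℕ)
          = (((Q v).equivFin ⟨b, hb2⟩ : Fin (Q v).card) : ℕ) := by omega
      have := (Q v).equivFin.injective (Fin.ext h3)
      exact congrArg Subtype.val this
  have hrk_surj : ∀ v i, i < (S v).card → ∃ a, a ∈ S v ∧ rk v a = i := by
    intro v i hi
    set φ : {x // x ∈ S v} → Fin ((S v).card) := fun x => ⟨rk v x.1, hrk_lt v x.1 x.2⟩ with hφ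
    have hφinj : Function.Injective φ := by
      intro x y hxy
      have : rk v x.1 = rk v y.1 := congrArg Fin.val hxy
      exact Subtype.ext (hrk_inj v x.1 x.2 y.1 y.2 this)
    have hφbij : Function.Bijective φ :=
      (Fintype.bijective_iff_injective_and_card φ).mpr ⟨hφinj, by simp [Fintype.card_coe]⟩
    obtain ⟨x, hx⟩ := hφbij.surjective ⟨i, hi⟩
    exact ⟨x.1, x.2, congrArg Fin.val hx⟩
  refine ⟨fun a => rk (t a) a / k, ?_, ?_, ?_⟩
  · intro a
    have haS : a ∈ S (t a) := Finset.mem_filter.mpr ⟨Finset.mem_univ a, rfl⟩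
    have := hrk_lt (t a) a haS
    rw [hcard (t a)] at this
    rw [Nat.div_lt_iff_lt_mul hk]
    have h5 : M (t a) * k = k * M (t a) := Nat.mul_comm _ _
    omega
  · intro v g hg
    have hset : (univ.filter fun a => t a = v ∧ rk (t a) a / k = g)
        = (S v).filter fun a => rk v a / k = g := by
      ext a
      simp only [Finset.mem_filter, Finset.mem_univ, true_and, hS]
      constructor
      · rintro ⟨h1, h2⟩
        refine ⟨h1, ?_⟩
        rw [← h1]; exact h2
      · rintro ⟨h1, h2⟩
        refine ⟨h1, ?_⟩
        rw [h1]; exact h2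
    rw [hset]
    have hbij : ((S v).filter fun a => rk v a / k = g).card
        = ((range (k * M v)).filter fun i => i / k = g).card := by
      apply Finset.card_bij (fun a _ => rk v a)
      · intro a ha
        obtain ⟨haS, hag⟩ := Finset.mem_filter.mp ha
        refine Finset.mem_filter.mpr ⟨Finset.mem_range.mpr ?_, hag⟩
        have := hrk_lt v a haS
        rwa [hcard v] at this
      · intro a ha b hb hab
        exact hrk_inj v a (Finset.mem_filter.mp ha).1 b (Finset.mem_filter.mp hb).1 hab
      · intro i hi
        obtain ⟨hir, hig⟩ := Finset.mem_filter.mp hi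
        obtain ⟨a, haS, hra⟩ := hrk_surj v i (by rw [hcard v]; exact Finset.mem_range.mp hir)
        exact ⟨a, Finset.mem_filter.mpr ⟨haS, by rw [hra]; exact hig⟩, hra⟩
    rw [hbij]
    exact card_div_fiber k (M v) g hk hg
  · intro v a ha
    have htv : t a = v := hPt v a ha
    have : rk (t a) a < k := by
      rw [htv]
      simp only [hrk, dif_pos ha]
      calc (((P v).equivFin ⟨a, ha⟩ : Fin (P v).card) : ℕ) < (P v).card := Fin.is_lt _
      _ ≤ k := hPk v
    exact Nat.div_eq_of_lt this

end Grouping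

section Rainbow
variable {W : Type*}

lemma sigma_fin_eq {M : W → ℕ} {v w : W} (i : Fin (M v)) (j : Fin (M w)) :
    (⟨v, i⟩ : Σ u, Fin (M u)) = ⟨w, j⟩ ↔ v = w ∧ (i : ℕ) = (j : ℕ) := by
  constructor
  · intro h
    obtain ⟨h1, h2⟩ := Sigma.mk.inj_iff.mp h
    subst h1
    exact ⟨rfl, congrArg Fin.val (eq_of_heq h2)⟩
  · rintro ⟨rfl, h2⟩
    exact Sigma.ext rfl ((Fin.heq_ext_iff rfl).mpr h2)

lemma rainbow_arcs [Fintype W] [DecidableEq W] {A : Type*} [Fintype A] [DecidableEq A]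
    (tail head : A → W) (k : ℕ) (hk : 0 < k) (M : W → ℕ)
    (htail : ∀ v, (univ.filter fun a => tail a = v).card = k * M v)
    (hhead : ∀ v, (univ.filter fun a => head a = v).card = k * M v)
    (P : W → Finset A) (hPt : ∀ v a, a ∈ P v → tail a = v) (hPk : ∀ v, (P v).card ≤ k) :
    ∃ c : A → Fin k,
      (∀ v i, (univ.filter fun a => tail a = v ∧ c a = i).card = M v) ∧
      (∀ v i, (univ.filter fun a => head a = v ∧ c a = i).card = M v) ∧
      (∀ v i, ((P v).filter fun a => c a = i).card ≤ 1) := by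
  classical
  obtain ⟨G, hG1, hG2, hG3⟩ := grouping tail k hk M htail P hPt hPk
  obtain ⟨H, hH1, hH2, -⟩ := grouping head k hk M hhead (fun _ => ∅)
    (fun v a h => absurd h (Finset.notMem_empty a)) (fun v => by simp)
  set tl : A → Σ v, Fin (M v) := fun a => ⟨tail a, ⟨G a, hG1 a⟩⟩ with htl
  set hd : A → Σ v, Fin (M v) := fun a => ⟨head a, ⟨H a, hH1 a⟩⟩ with hhd
  have hLfib : ∀ ℓ : Σ v, Fin (M v), (univ.filter fun a => tl a = ℓ).card = k := by
    rintro ⟨v, g⟩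
    have hset : (univ.filter fun a => tl a = ⟨v, g⟩)
        = univ.filter fun a => tail a = v ∧ G a = (g : ℕ) := by
      ext a
      simp only [Finset.mem_filter, Finset.mem_univ, true_and, htl]
      exact sigma_fin_eq _ _
    rw [hset]
    exact hG2 v g g.isLt
  have hRfib : ∀ r : Σ v, Fin (M v), (univ.filter fun a => hd a = r).card = k := by
    rintro ⟨v, g⟩
    have hset : (univ.filter fun a => hd a = ⟨v, g⟩)
        = univ.filter fun a => head a = v ∧ H a = (g : ℕ) := by
      ext a
      simp only [Finset.mem_filter, Finset.mem_univ, true_and, hhd]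
      exact sigma_fin_eq _ _
    rw [hset]
    exact hH2 v g g.isLt
  obtain ⟨c, hcf, hcg⟩ := hall_color k A (Σ v, Fin (M v)) (Σ v, Fin (M v)) tl hd hLfib hRfib
  refine ⟨c, ?_, ?_, ?_⟩
  · intro v i
    by_cases hM : M v = 0
    · have hsub : (univ.filter fun a => tail a = v ∧ c a = i)
          ⊆ (univ.filter fun a => tail a = v) := by
        intro a ha
        obtain ⟨-, h1, -⟩ := Finset.mem_filter.mp ha
        exact Finset.mem_filter.mpr ⟨Finset.mem_univ a, h1⟩
      have h1 := Finset.card_le_card hsub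
      rw [htail v, hM, Nat.mul_zero] at h1
      omega
    · have hMpos : 0 < M v := Nat.pos_of_ne_zero hM
      set fb : A → Fin (M v) := fun a =>
        if h : tail a = v then ⟨G a, by rw [← h]; exact hG1 a⟩ else ⟨0, hMpos⟩ with hfb
      rw [Finset.card_eq_sum_card_fiberwise (f := fb) (t := (univ : Finset (Fin (M v))))
        (fun x _ => Finset.mem_univ _)]
      have hterm : ∀ g : Fin (M v),
          ((univ.filter fun a => tail a = v ∧ c a = i).filter fun a => fb a = g).card = 1 := by
        intro g
        have hseteq : ((univ.filter fun a => tail a = v ∧ c a = i).filter fun a => fb a = g)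
            = ((univ.filter fun a => tl a = ⟨v, g⟩).filter fun a => c a = i) := by
          ext a
          simp only [Finset.mem_filter, Finset.mem_univ, true_and]
          constructor
          · rintro ⟨⟨h1, h2⟩, h3⟩
            refine ⟨?_, h2⟩
            rw [htl]
            rw [sigma_fin_eq]
            refine ⟨h1, ?_⟩
            simp only [hfb, dif_pos h1] at h3
            exact congrArg Fin.val h3
          · rintro ⟨h1, h2⟩
            rw [htl, sigma_fin_eq] at h1
            obtain ⟨h1a, h1b⟩ := h1
            refine ⟨⟨h1a, h2⟩, ?_⟩
            simp only [hfb, dif_pos h1a]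
            exact Fin.ext h1b
        rw [hseteq]
        exact unique_color _ c (hLfib ⟨v, g⟩)
          (fun a ha b hb hab => hcf a b
            (((Finset.mem_filter.mp ha).2).trans ((Finset.mem_filter.mp hb).2).symm) hab) i
      rw [Finset.sum_congr rfl (fun g _ => hterm g), Finset.sum_const, smul_eq_mul, mul_one,
        Finset.card_univ, Fintype.card_fin]
  · intro v i
    by_cases hM : M v = 0
    · have hsub : (univ.filter fun a => head a = v ∧ c a = i)
          ⊆ (univ.filter fun a => head a = v) := by
        intro a ha
        obtain ⟨-, h1, -⟩ := Finset.mem_filter.mp ha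
        exact Finset.mem_filter.mpr ⟨Finset.mem_univ a, h1⟩
      have h1 := Finset.card_le_card hsub
      rw [hhead v, hM, Nat.mul_zero] at h1
      omega
    · have hMpos : 0 < M v := Nat.pos_of_ne_zero hM
      set fb : A → Fin (M v) := fun a =>
        if h : head a = v then ⟨H a, by rw [← h]; exact hH1 a⟩ else ⟨0, hMpos⟩ with hfb
      rw [Finset.card_eq_sum_card_fiberwise (f := fb) (t := (univ : Finset (Fin (M v))))
        (fun x _ => Finset.mem_univ _)]
      have hterm : ∀ g : Fin (M v),
          ((univ.filter fun a => head a = v ∧ c a = i).filter fun a => fb a = g).card = 1 := by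
        intro g
        have hseteq : ((univ.filter fun a => head a = v ∧ c a = i).filter fun a => fb a = g)
            = ((univ.filter fun a => hd a = ⟨v, g⟩).filter fun a => c a = i) := by
          ext a
          simp only [Finset.mem_filter, Finset.mem_univ, true_and]
          constructor
          · rintro ⟨⟨h1, h2⟩, h3⟩
            refine ⟨?_, h2⟩
            rw [hhd]
            rw [sigma_fin_eq]
            refine ⟨h1, ?_⟩
            simp only [hfb, dif_pos h1] at h3
            exact congrArg Fin.val h3
          · rintro ⟨h1, h2⟩
            rw [hhd, sigma_fin_eq] at h1
            obtain ⟨h1a, h1b⟩ := h1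
            refine ⟨⟨h1a, h2⟩, ?_⟩
            simp only [hfb, dif_pos h1a]
            exact Fin.ext h1b
        rw [hseteq]
        exact unique_color _ c (hRfib ⟨v, g⟩)
          (fun a ha b hb hab => hcg a b
            (((Finset.mem_filter.mp ha).2).trans ((Finset.mem_filter.mp hb).2).symm) hab) i
      rw [Finset.sum_congr rfl (fun g _ => hterm g), Finset.sum_const, smul_eq_mul, mul_one,
        Finset.card_univ, Fintype.card_fin]
  · intro v i
    rw [Finset.card_le_one]
    intro a ha b hb
    obtain ⟨haP, hac⟩ := Finset.mem_filter.mp ha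
    obtain ⟨hbP, hbc⟩ := Finset.mem_filter.mp hb
    have htla : tl a = tl b := by
      rw [htl]
      rw [sigma_fin_eq]
      constructor
      · exact (hPt v a haP).trans (hPt v b hbP).symm
      · show G a = G b
        rw [hG3 v a haP, hG3 v b hbP]
    exact hcf a b htla (hac.trans hbc.symm)

end Rainbow


def tlOf {W : Type*} (p : W × W) (b : Bool) : W := if b then p.2 else p.1
def hdOf {W : Type*} (p : W × W) (b : Bool) : W := if b then p.1 else p.2


universe w u

lemma orient_aux {W : Type w} [DecidableEq W] :
    ∀ (n : ℕ) (B : Type u) [Fintype B] [DecidableEq B] (ends : B → W × W),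
      Fintype.card B = n →
      (∀ x, Even (mdeg ends univ x)) →
      ∃ flip : B → Bool, ∀ x,
        (univ.filter fun e => tlOf (ends e) (flip e) = x).card =
        (univ.filter fun e => hdOf (ends e) (flip e) = x).card := by
  intro n
  induction n with
  | zero =>
    intro B _ _ ends hcard _
    have : IsEmpty B := Fintype.card_eq_zero_iff.mp hcard
    exact ⟨fun _ => false, fun x => by simp [Finset.univ_eq_empty]⟩
  | succ n ih =>
    intro B instF instD ends hcard heven
    have hne : Nonempty B := Fintype.card_pos_iff.mp (by omega)
    obtain ⟨e0⟩ := hne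
    set v := (ends e0).1 with hv
    by_cases hloop : ∃ j : B, ends j = (v, v)
    · -- loop case
      obtain ⟨j, hj⟩ := hloop
      have hcard' : Fintype.card {x : B // x ≠ j} = n := by
        have h1 : Fintype.card {x : B // x = j} = 1 := Fintype.card_subtype_eq j
        have h2 : Fintype.card {x : B // ¬ x = j}
            = Fintype.card B - Fintype.card {x : B // x = j} :=
          Fintype.card_subtype_compl _
        rw [h1, hcard] at h2
        simpa using h2
      set ends' : {x : B // x ≠ j} → W × W := fun x => ends x.1 with hends'
      have hsub : ∀ (f : B → ℕ), ∑ x ∈ univ.erase j, f x = ∑ x : {y : B // y ≠ j}, f x.1 := by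
        intro f
        exact Finset.sum_subtype _ (by intro x; simp) f
      have hdeg : ∀ x, mdeg ends univ x = mdeg ends' univ x + (if v = x then 2 else 0) := by
        intro x
        unfold mdeg
        rw [← Finset.sum_erase_add _ _ (Finset.mem_univ j), hsub]
        rw [hj]
        by_cases h : v = x <;> simp [h, hends']
      have heven' : ∀ x, Even (mdeg ends' univ x) := by
        intro x
        have h2 := heven x
        rw [hdeg x] at h2
        rcases h2 with ⟨m, hm⟩
        by_cases h : v = x
        · rw [if_pos h] at hm
          exact ⟨m - 1, by omega⟩
        · rw [if_neg h] at hm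
          exact ⟨m, by omega⟩
      obtain ⟨flip', hflip'⟩ := ih {x : B // x ≠ j} ends' hcard' heven'
      set flipX : B → Bool := fun x => if h : x = j then false else flip' ⟨x, h⟩ with hflipX
      refine ⟨flipX, ?_⟩
      intro x
      have hcnt : ∀ (sel : W × W → Bool → W),
          (univ.filter fun e : B => sel (ends e) (flipX e) = x).card
          = (if sel (v, v) false = x then 1 else 0)
            + (univ.filter fun e : {y : B // y ≠ j} => sel (ends' e) (flip' e) = x).card := by
        intro sel
        rw [Finset.card_filter, Finset.card_filter,
          ← Finset.sum_erase_add _ _ (Finset.mem_univ j)]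
        have e1 : (if sel (ends j) (flipX j) = x then 1 else 0)
            = (if sel (v, v) false = x then 1 else 0) := by
          rw [hj]
          simp [hflipX]
        have e2 : ∑ e ∈ univ.erase j, (if sel (ends e) (flipX e) = x then 1 else 0)
            = ∑ e : {y : B // y ≠ j}, (if sel (ends' e) (flip' e) = x then 1 else 0) := by
          rw [hsub fun e => if sel (ends e) (flipX e) = x then 1 else 0]
          apply Finset.sum_congr rfl
          intro y _
          congr 1
          simp [hends', hflipX, dif_neg y.2]
        rw [e1, e2]
        omega
      rw [hcnt tlOf, hcnt hdOf, hflip' x]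
      simp [tlOf, hdOf]
    · -- merge case
      push_neg at hloop
      set S : Finset B := univ.filter fun e => (ends e).1 = v ∨ (ends e).2 = v with hS
      have hdegS : mdeg ends univ v = S.card := by
        unfold mdeg
        rw [Finset.card_filter]
        apply Finset.sum_congr rfl
        intro e _
        by_cases h1 : (ends e).1 = v <;> by_cases h2 : (ends e).2 = v
        · exact absurd (show ends e = (v, v) from Prod.ext h1 h2) (hloop e)
        all_goals simp [h1, h2]
      have he0 : e0 ∈ S := Finset.mem_filter.mpr ⟨Finset.mem_univ e0, Or.inl rfl⟩
      have hS2 : 1 < S.card := by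
        have hev := heven v
        rw [hdegS] at hev
        rcases hev with ⟨m, hm⟩
        have : 0 < S.card := Finset.card_pos.mpr ⟨e0, he0⟩
        omega
      obtain ⟨j1, hj1S, j2, hj2S, hne12⟩ := Finset.one_lt_card.mp hS2
      set b := if (ends j1).1 = v then (ends j1).2 else (ends j1).1 with hb
      set cc := if (ends j2).1 = v then (ends j2).2 else (ends j2).1 with hcc
      have hj1 : ends j1 = (v, b) ∨ ends j1 = (b, v) := by
        rcases Finset.mem_filter.mp hj1S with ⟨-, h | h⟩
        · left; rw [hb, if_pos h]; exact Prod.ext h rfl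
        · by_cases h1 : (ends j1).1 = v
          · left; rw [hb, if_pos h1]; exact Prod.ext h1 rfl
          · right; rw [hb, if_neg h1]; exact Prod.ext rfl h
      have hj2 : ends j2 = (v, cc) ∨ ends j2 = (cc, v) := by
        rcases Finset.mem_filter.mp hj2S with ⟨-, h | h⟩
        · left; rw [hcc, if_pos h]; exact Prod.ext h rfl
        · by_cases h1 : (ends j2).1 = v
          · left; rw [hcc, if_pos h1]; exact Prod.ext h1 rfl
          · right; rw [hcc, if_neg h1]; exact Prod.ext rfl h
      have hbv : b ≠ v := by
        intro hcon
        rcases hj1 with h | h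
        · exact hloop j1 (by rw [h, hcon])
        · exact hloop j1 (by rw [h, hcon])
      have hccv : cc ≠ v := by
        intro hcon
        rcases hj2 with h | h
        · exact hloop j2 (by rw [h, hcon])
        · exact hloop j2 (by rw [h, hcon])
      have hne21 : j2 ≠ j1 := hne12.symm
      set endsX : B → W × W := Function.update ends j2 (b, cc) with hendsX
      have hX12 : endsX j2 = (b, cc) := Function.update_self j2 (b, cc) ends
      have hXother : ∀ y : B, y ≠ j2 → endsX y = ends y := fun y hy =>
        Function.update_of_ne hy (b, cc) ends
      have hcard' : Fintype.card {x : B // x ≠ j1} = n := by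
        have h1 : Fintype.card {x : B // x = j1} = 1 := Fintype.card_subtype_eq j1
        have h2 : Fintype.card {x : B // ¬ x = j1}
            = Fintype.card B - Fintype.card {x : B // x = j1} :=
          Fintype.card_subtype_compl _
        rw [h1, hcard] at h2
        simpa using h2
      set ends' : {x : B // x ≠ j1} → W × W := fun x => endsX x.1 with hends'
      have hj2mem : j2 ∈ univ.erase j1 := Finset.mem_erase.mpr ⟨hne21, Finset.mem_univ j2⟩
      have hsub : ∀ (f : B → ℕ), ∑ x ∈ univ.erase j1, f x = ∑ x : {y : B // y ≠ j1}, f x.1 := by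
        intro f
        exact Finset.sum_subtype _ (by intro x; simp) f
      have hdeg : ∀ x, mdeg ends univ x = mdeg ends' univ x + (if v = x then 2 else 0) := by
        intro x
        have hrest : ∑ e ∈ (univ.erase j1).erase j2,
              ((if (endsX e).1 = x then 1 else 0) + (if (endsX e).2 = x then 1 else 0))
            = ∑ e ∈ (univ.erase j1).erase j2,
              ((if (ends e).1 = x then 1 else 0) + (if (ends e).2 = x then 1 else 0)) := by
          apply Finset.sum_congr rfl
          intro y hy
          rw [hXother y (Finset.mem_erase.mp hy).1]
        unfold mdeg
        rw [← Finset.sum_erase_add _ _ (Finset.mem_univ j1), ← Finset.sum_erase_add _ _ hj2mem]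
        rw [← hsub fun e => ((if (endsX e).1 = x then 1 else 0) + (if (endsX e).2 = x then 1 else 0))]
        rw [← Finset.sum_erase_add _ _ hj2mem, hrest, hX12]
        rcases hj1 with h1 | h1 <;> rcases hj2 with h2 | h2 <;> rw [h1, h2] <;>
          simp only [Prod.fst, Prod.snd] <;> split_ifs <;> omega
      have heven' : ∀ x, Even (mdeg ends' univ x) := by
        intro x
        have h2 := heven x
        rw [hdeg x] at h2
        rcases h2 with ⟨m, hm⟩
        by_cases h : v = x
        · rw [if_pos h] at hm
          exact ⟨m - 1, by omega⟩
        · rw [if_neg h] at hm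
          exact ⟨m, by omega⟩
      obtain ⟨flip', hflip'⟩ := ih {x : B // x ≠ j1} ends' hcard' heven'
      obtain ⟨fm, hfm⟩ : ∃ z : Bool, flip' ⟨j2, hne21⟩ = z := ⟨_, rfl⟩
      set flipX : B → Bool := fun y =>
        if h : y = j1 then (if (ends j1).1 = v then !fm else fm)
        else if y = j2 then (if (ends j2).1 = v then fm else !fm)
        else flip' ⟨y, h⟩ with hflipX
      have hflipXj1 : flipX j1 = (if (ends j1).1 = v then !fm else fm) := by
        simp [hflipX]
      have hflipXj2 : flipX j2 = (if (ends j2).1 = v then fm else !fm) := by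
        simp [hflipX, hne21]
      have htl1 : tlOf (ends j1) (flipX j1) = (if fm then v else b) := by
        rw [hflipXj1]
        rcases hj1 with h | h
        · have h1 : (ends j1).1 = v := by rw [h]
          rw [if_pos h1, h]
          cases fm <;> simp [tlOf]
        · have h1 : ¬ (ends j1).1 = v := by rw [h]; exact hbv
          rw [if_neg h1, h]
          cases fm <;> simp [tlOf]
      have hhd1 : hdOf (ends j1) (flipX j1) = (if fm then b else v) := by
        rw [hflipXj1]
        rcases hj1 with h | h
        · have h1 : (ends j1).1 = v := by rw [h]
          rw [if_pos h1, h]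
          cases fm <;> simp [hdOf]
        · have h1 : ¬ (ends j1).1 = v := by rw [h]; exact hbv
          rw [if_neg h1, h]
          cases fm <;> simp [hdOf]
      have htl2 : tlOf (ends j2) (flipX j2) = (if fm then cc else v) := by
        rw [hflipXj2]
        rcases hj2 with h | h
        · have h1 : (ends j2).1 = v := by rw [h]
          rw [if_pos h1, h]
          cases fm <;> simp [tlOf]
        · have h1 : ¬ (ends j2).1 = v := by rw [h]; exact hccv
          rw [if_neg h1, h]
          cases fm <;> simp [tlOf]
      have hhd2 : hdOf (ends j2) (flipX j2) = (if fm then v else cc) := by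
        rw [hflipXj2]
        rcases hj2 with h | h
        · have h1 : (ends j2).1 = v := by rw [h]
          rw [if_pos h1, h]
          cases fm <;> simp [hdOf]
        · have h1 : ¬ (ends j2).1 = v := by rw [h]; exact hccv
          rw [if_neg h1, h]
          cases fm <;> simp [hdOf]
      have htlm : tlOf (b, cc) fm = (if fm then cc else b) := by
        cases fm <;> simp [tlOf]
      have hhdm : hdOf (b, cc) fm = (if fm then b else cc) := by
        cases fm <;> simp [hdOf]
      refine ⟨flipX, ?_⟩
      intro x
      set flipP : B → Bool := fun y => if h : y = j1 then true else flip' ⟨y, h⟩ with hflipP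
      have hsplit : ∀ (sel : W × W → Bool → W),
          (univ.filter fun e : B => sel (ends e) (flipX e) = x).card
          = ((if sel (ends j1) (flipX j1) = x then 1 else 0)
              + (if sel (ends j2) (flipX j2) = x then 1 else 0))
            + ∑ e ∈ (univ.erase j1).erase j2, (if sel (ends e) (flipX e) = x then 1 else 0) := by
        intro sel
        rw [Finset.card_filter, ← Finset.sum_erase_add _ _ (Finset.mem_univ j1),
          ← Finset.sum_erase_add _ _ hj2mem]
        ring
      have hsplit' : ∀ (sel : W × W → Bool → W),
          (univ.filter fun e : {y : B // y ≠ j1} => sel (ends' e) (flip' e) = x).card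
          = (if sel (b, cc) fm = x then 1 else 0)
            + ∑ e ∈ (univ.erase j1).erase j2, (if sel (ends e) (flipX e) = x then 1 else 0) := by
        intro sel
        rw [Finset.card_filter]
        have e1 : ∑ e : {y : B // y ≠ j1}, (if sel (ends' e) (flip' e) = x then 1 else 0)
            = ∑ e ∈ univ.erase j1, (if sel (endsX e) (flipP e) = x then 1 else 0) := by
          rw [hsub fun e => if sel (endsX e) (flipP e) = x then 1 else 0]
          apply Finset.sum_congr rfl
          intro y _
          congr 2
          simp [hflipP, dif_neg y.2, hends']
        rw [e1, ← Finset.sum_erase_add _ _ hj2mem]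
        have e2 : (if sel (endsX j2) (flipP j2) = x then 1 else 0)
            = (if sel (b, cc) fm = x then 1 else 0) := by
          rw [hX12]
          have : flipP j2 = fm := by
            rw [hflipP]
            simp [hne21, hfm]
          rw [this]
        have e3 : ∑ e ∈ (univ.erase j1).erase j2, (if sel (endsX e) (flipP e) = x then 1 else 0)
            = ∑ e ∈ (univ.erase j1).erase j2, (if sel (ends e) (flipX e) = x then 1 else 0) := by
          apply Finset.sum_congr rfl
          intro y hy
          obtain ⟨hy2, hy1mem⟩ := Finset.mem_erase.mp hy
          obtain ⟨hy1, -⟩ := Finset.mem_erase.mp hy1mem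
          rw [hXother y hy2]
          congr 2
          rw [hflipP, hflipX]
          simp [hy1, hy2]
        rw [e2, e3]
        omega
      have hkey : ∀ u1 u2 um : W,
          u1 = (if fm then v else b) → um = (if fm then cc else b) → False ∨ True := fun _ _ _ _ _ => Or.inr trivial
      rw [hsplit tlOf, hsplit hdOf]
      have htlsum : (if tlOf (ends j1) (flipX j1) = x then 1 else 0)
            + (if tlOf (ends j2) (flipX j2) = x then 1 else 0)
          = (if tlOf (b, cc) fm = x then 1 else 0) + (if v = x then 1 else 0) := by
        rw [htl1, htl2, htlm]
        cases fm <;> simp <;> omega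
      have hhdsum : (if hdOf (ends j1) (flipX j1) = x then 1 else 0)
            + (if hdOf (ends j2) (flipX j2) = x then 1 else 0)
          = (if hdOf (b, cc) fm = x then 1 else 0) + (if v = x then 1 else 0) := by
        rw [hhd1, hhd2, hhdm]
        cases fm <;> simp <;> omega
      rw [htlsum, hhdsum]
      have hfl := hflip' x
      rw [hsplit' tlOf, hsplit' hdOf] at hfl
      omega

/-- Hilton: even graphs decompose into k even factors with degree error < 2. -/
theorem stmt5 (ends : E → V × V) (heven : ∀ v : V, Even (mdeg ends Finset.univ v))
    (k : ℕ) (hk : 0 < k) :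
    ∃ c : E → Fin k, ∀ (v : V) (i : Fin k),
      Even (mdeg ends (Finset.univ.filter fun e => c e = i) v) ∧
      |(mdeg ends (Finset.univ.filter fun e => c e = i) v : ℚ)
        - (mdeg ends Finset.univ v : ℚ) / k| < 2 := by
  classical
  choose m hm using heven
  set p : V → ℕ := fun v => (k - m v % k) % k with hp
  have hpk : ∀ x, p x < k := fun x => Nat.mod_lt _ hk
  set endsP : (E ⊕ (Σ w : V, Fin (p w))) → V × V :=
    Sum.elim ends (fun q => (q.1, q.1)) with hendsP
  -- padded degrees
  have hmdegP : ∀ x, mdeg endsP univ x = mdeg ends univ x + 2 * p x := by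
    intro x
    unfold mdeg
    rw [Fintype.sum_sum_type]
    congr 1
    · -- pads part
      rw [← Finset.univ_sigma_univ, Finset.sum_sigma]
      have hin : ∀ w ∈ (univ : Finset V), (∑ j : Fin (p w),
          ((if (endsP (Sum.inr ⟨w, j⟩)).1 = x then 1 else 0)
            + (if (endsP (Sum.inr ⟨w, j⟩)).2 = x then 1 else 0)))
          = (if w = x then 2 * p w else 0) := by
        intro w _
        have hterm : ∀ j : Fin (p w),
            ((if (endsP (Sum.inr ⟨w, j⟩)).1 = x then 1 else 0)
              + (if (endsP (Sum.inr ⟨w, j⟩)).2 = x then 1 else 0))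
            = (if w = x then 2 else 0) := by
          intro j
          show ((if w = x then 1 else 0) + (if w = x then 1 else 0)) = (if w = x then 2 else 0)
          split_ifs <;> omega
        rw [Finset.sum_congr rfl (fun j _ => hterm j), Finset.sum_const, Finset.card_univ,
          Fintype.card_fin, smul_eq_mul]
        split_ifs <;> omega
      rw [Finset.sum_congr rfl hin, Finset.sum_ite_eq' univ x (fun w => 2 * p w)]
      simp
  have hevP : ∀ x, Even (mdeg endsP univ x) := by
    intro x
    rw [hmdegP x, hm x]
    exact ⟨m x + p x, by ring⟩
  obtain ⟨flip, hflip⟩ := orient_aux (Fintype.card (E ⊕ (Σ w : V, Fin (p w)))) (E ⊕ (Σ w : V, Fin (p w))) endsP rfl hevP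
  set tail : (E ⊕ (Σ w : V, Fin (p w))) → V := fun a => tlOf (endsP a) (flip a) with htail
  set head : (E ⊕ (Σ w : V, Fin (p w))) → V := fun a => hdOf (endsP a) (flip a) with hhead
  have hsumth : ∀ x, (univ.filter fun a => tail a = x).card
      + (univ.filter fun a => head a = x).card = mdeg endsP univ x := by
    intro x
    rw [Finset.card_filter, Finset.card_filter, ← Finset.sum_add_distrib]
    unfold mdeg
    apply Finset.sum_congr rfl
    intro a _
    cases hfa : flip a <;>
      simp [htail, hhead, tlOf, hdOf, hfa, Nat.add_comm]
  have hfliptt : ∀ x, (univ.filter fun a => tail a = x).card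
      = (univ.filter fun a => head a = x).card := fun x => hflip x
  have htcnt : ∀ x, (univ.filter fun a => tail a = x).card = m x + p x := by
    intro x
    have h1 := hfliptt x
    have h2 := hsumth x
    rw [hmdegP x, hm x] at h2
    omega
  have hhcnt : ∀ x, (univ.filter fun a => head a = x).card = m x + p x := by
    intro x
    have h1 := hfliptt x
    have h2 := hsumth x
    rw [hmdegP x, hm x] at h2
    omega
  have hdvd : ∀ x, k ∣ (m x + p x) := by
    intro x
    have h1 : m x % k < k := Nat.mod_lt _ hk
    have h2 := Nat.div_add_mod (m x) k
    by_cases h : m x % k = 0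
    · have hpx : p x = 0 := by rw [hp]; simp [h]
      exact ⟨m x / k, by omega⟩
    · have hpx : p x = k - m x % k := by
        rw [hp]; exact Nat.mod_eq_of_lt (by omega)
      refine ⟨m x / k + 1, ?_⟩
      rw [Nat.mul_add, Nat.mul_one]
      omega
  set M : V → ℕ := fun x => (m x + p x) / k with hMdef
  have hkM : ∀ x, k * M x = m x + p x := fun x => Nat.mul_div_cancel' (hdvd x)
  set Pd : V → Finset (E ⊕ (Σ w : V, Fin (p w))) :=
    fun x => (univ : Finset (Fin (p x))).image (fun j => Sum.inr ⟨x, j⟩) with hPd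
  have hPt : ∀ x a, a ∈ Pd x → tail a = x := by
    intro x a ha
    rcases Finset.mem_image.mp ha with ⟨j, -, rfl⟩
    cases hfa : flip (Sum.inr ⟨x, j⟩) <;> simp [htail, hendsP, tlOf, hfa]
  have hPk : ∀ x, (Pd x).card ≤ k := by
    intro x
    calc (Pd x).card ≤ (univ : Finset (Fin (p x))).card := Finset.card_image_le
    _ = p x := by rw [Finset.card_univ, Fintype.card_fin]
    _ ≤ k := le_of_lt (hpk x)
  obtain ⟨c0, hc0t, hc0h, hc0P⟩ := rainbow_arcs tail head k hk M
    (fun x => by rw [htcnt x, hkM x]) (fun x => by rw [hhcnt x, hkM x]) Pd hPt hPk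
  set c : E → Fin k := fun e => c0 (Sum.inl e) with hc
  refine ⟨c, ?_⟩
  intro v i
  set lam : ℕ := ((univ : Finset (Fin (p v))).filter fun j => c0 (Sum.inr ⟨v, j⟩) = i).card
    with hlam
  have hlamp : lam ≤ p v := by
    calc lam ≤ (univ : Finset (Fin (p v))).card := Finset.card_filter_le _ _
    _ = p v := by rw [Finset.card_univ, Fintype.card_fin]
  have hlam1 : lam ≤ 1 := by
    refine le_trans ?_ (hc0P v i)
    apply Finset.card_le_card_of_injOn (fun j => Sum.inr ⟨v, j⟩)
    · intro j hj
      obtain ⟨-, hj2⟩ := Finset.mem_filter.mp hj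
      exact Finset.mem_filter.mpr ⟨Finset.mem_image.mpr ⟨j, Finset.mem_univ j, rfl⟩, hj2⟩
    · intro a _ b _ hab
      have h2 := Sum.inr.inj hab
      exact eq_of_heq (Sigma.mk.inj_iff.mp h2).2
  -- degree of color class in padded graph
  have hPdeg : mdeg endsP (univ.filter fun a => c0 a = i) v = M v + M v := by
    have hterm : ∀ a, ((if (endsP a).1 = v then 1 else 0) + (if (endsP a).2 = v then 1 else 0))
        = ((if tail a = v then 1 else 0) + (if head a = v then 1 else 0)) := by
      intro a
      cases hfa : flip a <;>
        simp [htail, hhead, tlOf, hdOf, hfa, Nat.add_comm]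
    unfold mdeg
    rw [Finset.sum_congr rfl (fun a _ => hterm a), Finset.sum_add_distrib,
      ← Finset.card_filter, ← Finset.card_filter]
    have ht2 : ((univ.filter fun a => c0 a = i).filter fun a => tail a = v)
        = univ.filter fun a => tail a = v ∧ c0 a = i := by
      rw [Finset.filter_filter]
      apply Finset.filter_congr
      intro a _
      exact and_comm
    have hh2 : ((univ.filter fun a => c0 a = i).filter fun a => head a = v)
        = univ.filter fun a => head a = v ∧ c0 a = i := by
      rw [Finset.filter_filter]
      apply Finset.filter_congr
      intro a _
      exact and_comm
    rw [ht2, hh2, hc0t v i, hc0h v i]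
  -- relation between padded and unpadded color degree
  have hrel : mdeg ends (univ.filter fun e => c e = i) v + 2 * lam
      = mdeg endsP (univ.filter fun a => c0 a = i) v := by
    unfold mdeg
    rw [Finset.sum_filter, Finset.sum_filter, Fintype.sum_sum_type]
    have h1 : (∑ a : E, (if c0 (Sum.inl a) = i then
          ((if (endsP (Sum.inl a)).1 = v then 1 else 0)
            + (if (endsP (Sum.inl a)).2 = v then 1 else 0)) else 0))
        = ∑ e : E, (if c e = i then
          ((if (ends e).1 = v then 1 else 0) + (if (ends e).2 = v then 1 else 0)) else 0) := rfl
    have h2 : (∑ q : Σ w : V, Fin (p w), (if c0 (Sum.inr q) = i then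
          ((if (endsP (Sum.inr q)).1 = v then 1 else 0)
            + (if (endsP (Sum.inr q)).2 = v then 1 else 0)) else 0)) = 2 * lam := by
      rw [← Finset.univ_sigma_univ, Finset.sum_sigma]
      have hin : ∀ w ∈ (univ : Finset V), (∑ j : Fin (p w), (if c0 (Sum.inr ⟨w, j⟩) = i then
            ((if (endsP (Sum.inr ⟨w, j⟩)).1 = v then 1 else 0)
              + (if (endsP (Sum.inr ⟨w, j⟩)).2 = v then 1 else 0)) else 0))
          = (if w = v then (∑ j : Fin (p w), (if c0 (Sum.inr ⟨w, j⟩) = i then 2 else 0)) else 0) := by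
        intro w _
        have hterm : ∀ j : Fin (p w), (if c0 (Sum.inr ⟨w, j⟩) = i then
              ((if (endsP (Sum.inr ⟨w, j⟩)).1 = v then 1 else 0)
                + (if (endsP (Sum.inr ⟨w, j⟩)).2 = v then 1 else 0)) else 0)
            = (if w = v then (if c0 (Sum.inr ⟨w, j⟩) = i then 2 else 0) else 0) := by
          intro j
          show (if c0 (Sum.inr ⟨w, j⟩) = i then
              ((if w = v then 1 else 0) + (if w = v then 1 else 0)) else 0) = _
          split_ifs <;> omega
        rw [Finset.sum_congr rfl (fun j _ => hterm j)]
        by_cases h : w = v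
        · simp [h]
        · simp [h]
      rw [Finset.sum_congr rfl hin,
        Finset.sum_ite_eq' univ v (fun w => ∑ j : Fin (p w), (if c0 (Sum.inr ⟨w, j⟩) = i then 2 else 0))]
      rw [if_pos (Finset.mem_univ v), hlam, Finset.card_filter, Finset.mul_sum]
      apply Finset.sum_congr rfl
      intro j _
      split_ifs <;> rfl
    rw [h1, h2]
  have hXeq : mdeg ends (univ.filter fun e => c e = i) v + 2 * lam = 2 * M v := by
    rw [hrel, hPdeg]; ring
  constructor
  · exact ⟨M v - lam, by omega⟩
  · have hk0 : (0 : ℚ) < (k : ℚ) := by exact_mod_cast hk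
    have hMq : (M v : ℚ) * k = (m v : ℚ) + (p v : ℚ) := by
      have h := congrArg (fun n : ℕ => (n : ℚ)) (hkM v)
      push_cast at h
      linarith [h]
    have hXq : (mdeg ends (univ.filter fun e => c e = i) v : ℚ) + 2 * lam = 2 * M v := by
      exact_mod_cast hXeq
    have hd2 : (mdeg ends Finset.univ v : ℚ) = 2 * m v := by
      rw [hm v]; push_cast; ring
    rw [hd2, abs_lt]
    have hkey : (mdeg ends (univ.filter fun e => c e = i) v : ℚ) - 2 * (m v : ℚ) / k
        = 2 * (p v : ℚ) / k - 2 * lam := by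
      have hM2 : (M v : ℚ) = ((m v : ℚ) + p v) / k := by
        rw [eq_div_iff (ne_of_gt hk0)]; linarith [hMq]
      have hX2 : (mdeg ends (univ.filter fun e => c e = i) v : ℚ)
          = 2 * (((m v : ℚ) + p v) / k) - 2 * lam := by
        rw [← hM2]; linarith [hXq]
      rw [hX2]
      field_simp
      ring
    rw [hkey]
    have hpq : (p v : ℚ) < k := by exact_mod_cast hpk v
    have hpq0 : (0 : ℚ) ≤ (p v : ℚ) := by positivity
    by_cases hl : lam = 0
    · rw [hl]
      have h1 : (0 : ℚ) ≤ 2 * (p v : ℚ) / k := by positivity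
      have h2 : 2 * (p v : ℚ) / k < 2 := by
        rw [div_lt_iff₀ hk0]; linarith
      constructor <;> push_cast <;> linarith
    · have hl1 : lam = 1 := by omega
      rw [hl1]
      have hp1 : (1 : ℚ) ≤ (p v : ℚ) := by
        have : 1 ≤ p v := by omega
        exact_mod_cast this
      have h1 : 0 < 2 * (p v : ℚ) / k := by positivity
      have h2 : 2 * (p v : ℚ) / k < 2 := by
        rw [div_lt_iff₀ hk0]; linarith
      constructor <;> push_cast <;> linarith
end

section
/- Let G be a bipartite multigraph with bipartition (X,Y) and let g, f be integer-valued functions on V(G) with g ≤ f. Then G has a spanning subgraph F with g(v) ≤ d_F(v) ≤ f(v) for all v if and only if for all A ⊆ X and B ⊆ Y (and symmetrically A ⊆ Y, B ⊆ X), the number of edges between A and B is at most Σ_{v∈A} f(v) + Σ_{v∈B} (d_G(v) - g(v)). -/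
open Finset

variable {V E : Type*} [Fintype V] [Fintype E] [DecidableEq V]

/-- Number of edges with one end in A and the other end in B. -/
def eAB (ends : E → V × V) (A B : Finset V) : ℕ :=
  (Finset.univ.filter fun e =>
    ((ends e).1 ∈ A ∧ (ends e).2 ∈ B) ∨ ((ends e).1 ∈ B ∧ (ends e).2 ∈ A)).card

section Aux
variable [DecidableEq E]
set_option linter.unusedSectionVars false

/-- contribution of a single edge to the degree of `v` -/
def econ (ends : E → V × V) (e : E) (v : V) : ℕ :=
  (if (ends e).1 = v then 1 else 0) + (if (ends e).2 = v then 1 else 0)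

lemma mdeg_def (ends : E → V × V) (F : Finset E) (v : V) :
    mdeg ends F v = ∑ e ∈ F, econ ends e v := rfl

lemma mdeg_insert (ends : E → V × V) {F : Finset E} {e : E} (h : e ∉ F) (v : V) :
    mdeg ends (insert e F) v = econ ends e v + mdeg ends F v := by
  simp [mdeg_def, Finset.sum_insert h]

lemma mdeg_erase (ends : E → V × V) {F : Finset E} {e : E} (h : e ∈ F) (v : V) :
    mdeg ends (F.erase e) v + econ ends e v = mdeg ends F v := by
  simp [mdeg_def, Finset.sum_erase_add _ _ h]

lemma mdeg_add_compl (ends : E → V × V) (F : Finset E) (v : V) :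
    mdeg ends F v + mdeg ends (univ \ F) v = mdeg ends univ v := by
  rw [mdeg_def, mdeg_def, mdeg_def, ← Finset.sum_union (Finset.disjoint_sdiff),
    Finset.union_sdiff_of_subset (Finset.subset_univ F)]

lemma mdeg_compl_int (ends : E → V × V) (F : Finset E) (v : V) :
    (mdeg ends (univ \ F) v : ℤ) = (mdeg ends univ v : ℤ) - mdeg ends F v := by
  have := mdeg_add_compl ends F v; push_cast [← this]; ring

lemma econ_eq {ends : E → V × V} {e : E} {x y : V}
    (hxy : ends e = (x, y) ∨ ends e = (y, x)) (w : V) :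
    econ ends e w = (if w = x then 1 else 0) + (if w = y then 1 else 0) := by
  rcases hxy with h | h <;> simp [econ, h, eq_comm] <;> ring

end Aux

section Alt
variable [DecidableEq E]
set_option linter.unusedSectionVars false

/-- Alternating trail from `v0`, using edge set `P`, ending at a vertex with given parity.
`true` = same side as `v0` (next edge to traverse would be a non-`F` edge). -/
inductive Alt (ends : E → V × V) (F : Finset E) (v0 : V) : Finset E → V → Bool → Prop
  | base : Alt ends F v0 ∅ v0 true
  | stepOut {P : Finset E} {x y : V} {e : E} : Alt ends F v0 P x true → e ∉ F → e ∉ P →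
      (ends e = (x, y) ∨ ends e = (y, x)) → Alt ends F v0 (insert e P) y false
  | stepIn {P : Finset E} {x y : V} {e : E} : Alt ends F v0 P y false → e ∈ F → e ∉ P →
      (ends e = (x, y) ∨ ends e = (y, x)) → Alt ends F v0 (insert e P) x true

variable {ends : E → V × V} {side : V → Bool} {F : Finset E} {v0 : V}

lemma side_other (hbip : ∀ e : E, side (ends e).1 ≠ side (ends e).2) {e : E} {x y : V}
    (hxy : ends e = (x, y) ∨ ends e = (y, x)) : side y = ! side x := by
  have := hbip e
  rcases hxy with h | h <;> rw [h] at this <;> simp at this <;>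
    cases hx : side x <;> cases hy : side y <;> simp_all

lemma Alt.side_eq (hbip : ∀ e : E, side (ends e).1 ≠ side (ends e).2)
    {P : Finset E} {v : V} {b : Bool}
    (h : Alt ends F v0 P v b) : side v = (if b then side v0 else ! side v0) := by
  induction h with
  | base => simp
  | stepOut h1 h2 h3 hxy ih => simpa [side_other hbip hxy] using ih
  | stepIn h1 h2 h3 hxy ih =>
      have := side_other hbip hxy
      simp only [Bool.false_eq_true, if_false] at ih
      simp only [if_pos]
      cases hv : side v0 <;> simp_all

lemma symmDiff_insert_notmem {F P : Finset E} {e : E} (heF : e ∉ F) (heP : e ∉ P) :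
    symmDiff F (insert e P) = insert e (symmDiff F P) := by
  ext a
  by_cases ha : a = e <;>
    simp [Finset.mem_symmDiff, ha, heF, heP] <;> tauto

lemma symmDiff_insert_mem {F P : Finset E} {e : E} (heF : e ∈ F) (heP : e ∉ P) :
    symmDiff F (insert e P) = (symmDiff F P).erase e := by
  ext a
  by_cases ha : a = e <;>
    simp [Finset.mem_symmDiff, ha, heF, heP] <;> tauto

/-- Degree change from flipping the trail. -/
lemma Alt.deg {P : Finset E} {v : V} {b : Bool}
    (h : Alt ends F v0 P v b) (w : V) :
    (mdeg ends (symmDiff F P) w : ℤ) = mdeg ends F w + (if w = v0 then 1 else 0)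
      + (if b then -(if w = v then 1 else 0) else (if w = v then 1 else 0)) := by
  induction h with
  | base => rw [show (∅ : Finset E) = ⊥ from rfl, symmDiff_bot]; simp
  | @stepOut P x y e h1 h2 h3 hxy ih =>
      rw [symmDiff_insert_notmem h2 h3,
        mdeg_insert _ (by simp [Finset.mem_symmDiff]; tauto)]
      push_cast [econ_eq hxy w, ih]
      simp only [if_pos trivial, Bool.false_eq_true, if_neg, if_false]
      ring
  | @stepIn P y x e h1 h2 h3 hxy ih =>
      have he : e ∈ symmDiff F P := by simp [Finset.mem_symmDiff]; tauto
      have := mdeg_erase ends he w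
      rw [symmDiff_insert_mem h2 h3]
      have hcast : (mdeg ends ((symmDiff F P).erase e) w : ℤ)
          = (mdeg ends (symmDiff F P) w : ℤ) - econ ends e w := by
        push_cast [← this]; ring
      rw [hcast, ih]
      push_cast [econ_eq hxy w]
      simp only [if_pos trivial, Bool.false_eq_true, if_neg, if_false]
      ring


/-- even-reachable -/
def REv (ends : E → V × V) (F : Finset E) (v0 : V) (x : V) : Prop :=
  ∃ P, Alt ends F v0 P x true

/-- odd-reachable -/
def ROv (ends : E → V × V) (F : Finset E) (v0 : V) (y : V) : Prop :=
  ∃ P, Alt ends F v0 P y false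

lemma Alt.mem_trail (hbip : ∀ e : E, side (ends e).1 ≠ side (ends e).2)
    {P : Finset E} {v : V} {b : Bool} (h : Alt ends F v0 P v b) :
    ∀ e' ∈ P,
      (e' ∉ F → ∃ z, (z = (ends e').1 ∨ z = (ends e').2) ∧ side z ≠ side v0 ∧
        ROv ends F v0 z) ∧
      (e' ∈ F → ∃ z, (z = (ends e').1 ∨ z = (ends e').2) ∧ side z = side v0 ∧
        REv ends F v0 z) := by
  induction h with
  | base => simp
  | @stepOut P x y e h1 h2 h3 hxy ih =>
      intro e' he'
      rcases Finset.mem_insert.mp he' with rfl | hmem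
      · refine ⟨fun _ => ⟨y, ?_, ?_, ⟨_, Alt.stepOut h1 h2 h3 hxy⟩⟩, fun hf => absurd hf h2⟩
        · rcases hxy with h | h <;> simp [h]
        · have hx : side x = side v0 := by simpa using h1.side_eq hbip
          rw [side_other hbip hxy, hx]; simp
      · exact ih e' hmem
  | @stepIn P x y e h1 h2 h3 hxy ih =>
      intro e' he'
      rcases Finset.mem_insert.mp he' with rfl | hmem
      · refine ⟨fun hf => absurd h2 hf, fun _ => ⟨x, ?_, ?_, ⟨_, Alt.stepIn h1 h2 h3 hxy⟩⟩⟩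
        · rcases hxy with h | h <;> simp [h]
        · have hy : side y = ! side v0 := by simpa using h1.side_eq hbip
          have h2s := side_other hbip hxy
          exact Bool.not_inj (h2s.symm.trans hy)
      · exact ih e' hmem

lemma closure_out (hbip : ∀ e : E, side (ends e).1 ≠ side (ends e).2)
    {e : E} (he : e ∉ F) {x y : V} (hxy : ends e = (x, y) ∨ ends e = (y, x))
    (hx : REv ends F v0 x) : ROv ends F v0 y := by
  obtain ⟨P, hP⟩ := hx
  have hsx : side x = side v0 := by simpa using hP.side_eq hbip
  by_cases heP : e ∈ P
  · obtain ⟨z, hz, hzs, hzRO⟩ := (hP.mem_trail hbip e heP).1 he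
    have hzy : z = y := by
      rcases hxy with h | h <;> rw [h] at hz <;> rcases hz with rfl | rfl <;>
        first | rfl | exact absurd hsx hzs
    exact hzy ▸ hzRO
  · exact ⟨_, Alt.stepOut hP he heP hxy⟩

lemma closure_in (hbip : ∀ e : E, side (ends e).1 ≠ side (ends e).2)
    {e : E} (he : e ∈ F) {x y : V} (hxy : ends e = (x, y) ∨ ends e = (y, x))
    (hy : ROv ends F v0 y) : REv ends F v0 x := by
  obtain ⟨P, hP⟩ := hy
  have hsy : side y = ! side v0 := by simpa using hP.side_eq hbip
  have hsx : side x = ! side y := side_other hbip hxy.symm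
  by_cases heP : e ∈ P
  · obtain ⟨z, hz, hzs, hzRE⟩ := (hP.mem_trail hbip e heP).2 he
    have hzx : z = x := by
      rcases hxy with h | h <;> rw [h] at hz <;> rcases hz with rfl | rfl <;>
        first
          | rfl
          | (exfalso; rw [hsy] at hzs; simp at hzs)
    exact hzx ▸ hzRE
  · exact ⟨_, Alt.stepIn hP he heP hxy⟩


/-- Total deviation of `F` from being a `(g,f)`-factor. -/
def Excess (ends : E → V × V) (g f : V → ℤ) (F : Finset E) : ℕ :=
  ∑ v : V, ((g v - (mdeg ends F v : ℤ)).toNat + ((mdeg ends F v : ℤ) - f v).toNat)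

variable {g f : V → ℤ}

lemma deg_ge_f_of_RO (hbip : ∀ e : E, side (ends e).1 ≠ side (ends e).2)
    (hgf : ∀ v, g v ≤ f v)
    (hmin : ∀ G, Excess ends g f F ≤ Excess ends g f G)
    (hdef : (mdeg ends F v0 : ℤ) < g v0) {y : V} (hy : ROv ends F v0 y) :
    f y ≤ (mdeg ends F y : ℤ) := by
  by_contra hlt
  push_neg at hlt
  obtain ⟨P, hP⟩ := hy
  have hyv0 : y ≠ v0 := by
    intro h; have := hP.side_eq hbip; rw [h] at this; simp at this
  have hdegf := hP.deg
  set G := symmDiff F P with hG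
  have hsimp : ∀ w, (mdeg ends G w : ℤ)
      = mdeg ends F w + (if w = v0 then 1 else 0) + (if w = y then 1 else 0) := by
    intro w; rw [hdegf w]; simp
  have hkey : Excess ends g f G < Excess ends g f F := by
    apply Finset.sum_lt_sum
    · intro w _
      have hw := hsimp w
      by_cases h1 : w = v0
      · rw [if_pos h1, if_neg (by rintro rfl; exact hyv0 h1)] at hw
        have hd : (mdeg ends F w : ℤ) < g w := by rw [h1]; exact hdef
        have hf : g w ≤ f w := hgf w
        omega
      · by_cases h2 : w = y
        · rw [if_neg h1, if_pos h2] at hw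
          have hd : (mdeg ends F w : ℤ) < f w := by rw [h2]; exact hlt
          omega
        · rw [if_neg h1, if_neg h2] at hw
          omega
    · refine ⟨v0, Finset.mem_univ _, ?_⟩
      have hw := hsimp v0
      rw [if_pos rfl, if_neg (Ne.symm hyv0)] at hw
      have hf : g v0 ≤ f v0 := hgf v0
      omega
  exact absurd (hmin G) (not_le.mpr hkey)

lemma deg_le_g_of_RE (hbip : ∀ e : E, side (ends e).1 ≠ side (ends e).2)
    (hgf : ∀ v, g v ≤ f v)
    (hmin : ∀ G, Excess ends g f F ≤ Excess ends g f G)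
    (hdef : (mdeg ends F v0 : ℤ) < g v0) {x : V} (hx : REv ends F v0 x) :
    (mdeg ends F x : ℤ) ≤ g x := by
  by_cases hxv0 : x = v0
  · subst hxv0; exact le_of_lt hdef
  by_contra hlt
  push_neg at hlt
  obtain ⟨P, hP⟩ := hx
  have hdegf := hP.deg
  set G := symmDiff F P with hG
  have hsimp : ∀ w, (mdeg ends G w : ℤ)
      = mdeg ends F w + (if w = v0 then 1 else 0) - (if w = x then 1 else 0) := by
    intro w; rw [hdegf w]; simp; ring
  have hkey : Excess ends g f G < Excess ends g f F := by
    apply Finset.sum_lt_sum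
    · intro w _
      have hw := hsimp w
      by_cases h1 : w = v0
      · rw [if_pos h1, if_neg (by rintro rfl; exact hxv0 h1)] at hw
        have hd : (mdeg ends F w : ℤ) < g w := by rw [h1]; exact hdef
        have hf : g w ≤ f w := hgf w
        omega
      · by_cases h2 : w = x
        · rw [if_neg h1, if_pos h2] at hw
          have hd : g w < (mdeg ends F w : ℤ) := by rw [h2]; exact hlt
          have hf : g w ≤ f w := hgf w
          omega
        · rw [if_neg h1, if_neg h2] at hw
          omega
    · refine ⟨v0, Finset.mem_univ _, ?_⟩
      have hw := hsimp v0
      rw [if_pos rfl, if_neg (fun h => hxv0 h.symm)] at hw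
      have hf : g v0 ≤ f v0 := hgf v0
      omega
  exact absurd (hmin G) (not_le.mpr hkey)

end Alt

section Count
set_option linter.unusedSectionVars false
variable {ends : E → V × V} {side : V → Bool}

lemma sum_mdeg_swap (ends : E → V × V) (H : Finset E) (S : Finset V) :
    ∑ v ∈ S, mdeg ends H v
      = ∑ e ∈ H, ((if (ends e).1 ∈ S then 1 else 0) + (if (ends e).2 ∈ S then 1 else 0)) := by
  simp only [mdeg]
  rw [Finset.sum_comm]
  refine Finset.sum_congr rfl fun e _ => ?_
  rw [Finset.sum_add_distrib, Finset.sum_ite_eq, Finset.sum_ite_eq]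

lemma sum_mdeg_eq_card (ends : E → V × V) (H : Finset E) (S : Finset V)
    (hone : ∀ e ∈ H, ¬((ends e).1 ∈ S ∧ (ends e).2 ∈ S)) :
    ∑ v ∈ S, mdeg ends H v
      = (H.filter (fun e => (ends e).1 ∈ S ∨ (ends e).2 ∈ S)).card := by
  rw [sum_mdeg_swap, Finset.card_filter]
  refine Finset.sum_congr rfl fun e he => ?_
  have := hone e he
  by_cases h1 : (ends e).1 ∈ S <;> by_cases h2 : (ends e).2 ∈ S <;> simp_all

lemma eAB_comm (ends : E → V × V) (A B : Finset V) : eAB ends A B = eAB ends B A := by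
  unfold eAB
  congr 1
  apply Finset.filter_congr
  intro e _
  constructor <;> intro h <;> tauto

/-- The easy direction: a `(g,f)`-factor forces the cut condition. -/
lemma easy_dir (ends : E → V × V) (g f : V → ℤ) (F : Finset E)
    (hF : ∀ v, g v ≤ (mdeg ends F v : ℤ) ∧ (mdeg ends F v : ℤ) ≤ f v)
    (A B : Finset V) :
    (eAB ends A B : ℤ) ≤ ∑ v ∈ A, f v
      + ∑ v ∈ B, ((mdeg ends Finset.univ v : ℤ) - g v) := by
  classical
  set W := (Finset.univ.filter fun e =>
    ((ends e).1 ∈ A ∧ (ends e).2 ∈ B) ∨ ((ends e).1 ∈ B ∧ (ends e).2 ∈ A)) with hW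
  have hsplit : eAB ends A B = (W.filter (· ∈ F)).card + (W.filter (· ∉ F)).card := by
    rw [eAB, Finset.card_filter_add_card_filter_not]
  have h1 : (W.filter (· ∈ F)).card ≤ ∑ v ∈ A, mdeg ends F v := by
    rw [sum_mdeg_swap]
    calc (W.filter (· ∈ F)).card
        = ∑ e ∈ W.filter (· ∈ F), 1 := by rw [Finset.card_eq_sum_ones]
      _ ≤ ∑ e ∈ W.filter (· ∈ F),
            ((if (ends e).1 ∈ A then 1 else 0) + (if (ends e).2 ∈ A then 1 else 0)) := by
          refine Finset.sum_le_sum fun e he => ?_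
          have heW : e ∈ W := Finset.mem_filter.mp he |>.1
          rw [hW] at heW
          rcases (Finset.mem_filter.mp heW).2 with ⟨ha, _⟩ | ⟨_, ha⟩ <;> simp [ha]
      _ ≤ ∑ e ∈ F,
            ((if (ends e).1 ∈ A then 1 else 0) + (if (ends e).2 ∈ A then 1 else 0)) := by
          refine Finset.sum_le_sum_of_subset fun e he => ?_
          exact Finset.mem_filter.mp he |>.2
  have h2 : (W.filter (· ∉ F)).card ≤ ∑ v ∈ B, mdeg ends (univ \ F) v := by
    rw [sum_mdeg_swap]
    calc (W.filter (· ∉ F)).card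
        = ∑ e ∈ W.filter (· ∉ F), 1 := by rw [Finset.card_eq_sum_ones]
      _ ≤ ∑ e ∈ W.filter (· ∉ F),
            ((if (ends e).1 ∈ B then 1 else 0) + (if (ends e).2 ∈ B then 1 else 0)) := by
          refine Finset.sum_le_sum fun e he => ?_
          have heW : e ∈ W := Finset.mem_filter.mp he |>.1
          rw [hW] at heW
          rcases (Finset.mem_filter.mp heW).2 with ⟨_, hb⟩ | ⟨hb, _⟩ <;> simp [hb]
      _ ≤ ∑ e ∈ univ \ F,
            ((if (ends e).1 ∈ B then 1 else 0) + (if (ends e).2 ∈ B then 1 else 0)) := by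
          refine Finset.sum_le_sum_of_subset fun e he => ?_
          simp only [Finset.mem_sdiff, Finset.mem_univ, true_and]
          exact Finset.mem_filter.mp he |>.2
  have hA : (∑ v ∈ A, (mdeg ends F v : ℤ)) ≤ ∑ v ∈ A, f v :=
    Finset.sum_le_sum fun v _ => (hF v).2
  have hB : (∑ v ∈ B, (mdeg ends (univ \ F) v : ℤ))
      ≤ ∑ v ∈ B, ((mdeg ends Finset.univ v : ℤ) - g v) := by
    refine Finset.sum_le_sum fun v _ => ?_
    rw [mdeg_compl_int]
    have := (hF v).1
    omega
  have := hsplit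
  push_cast at this ⊢
  calc (eAB ends A B : ℤ)
      = ((W.filter (· ∈ F)).card : ℤ) + ((W.filter (· ∉ F)).card : ℤ) := by exact_mod_cast this
    _ ≤ (∑ v ∈ A, (mdeg ends F v : ℤ)) + ∑ v ∈ B, (mdeg ends (univ \ F) v : ℤ) := by
        push_cast
        exact add_le_add (by exact_mod_cast h1) (by exact_mod_cast h2)
    _ ≤ _ := add_le_add hA hB

end Count

section Main
set_option linter.unusedSectionVars false
variable [DecidableEq E] {ends : E → V × V} {side : V → Bool} {g f : V → ℤ}

lemma main_deficient (hbip : ∀ e : E, side (ends e).1 ≠ side (ends e).2)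
    (hgf : ∀ v, g v ≤ f v) (F : Finset E)
    (hmin : ∀ G, Excess ends g f F ≤ Excess ends g f G)
    (v0 : V) (hdef : (mdeg ends F v0 : ℤ) < g v0) :
    ∃ A B : Finset V,
      (((∀ v ∈ A, side v = true) ∧ (∀ v ∈ B, side v = false)) ∨
       ((∀ v ∈ A, side v = false) ∧ (∀ v ∈ B, side v = true))) ∧
      ∑ v ∈ A, f v + ∑ v ∈ B, ((mdeg ends Finset.univ v : ℤ) - g v)
        < eAB ends A B := by
  classical
  set T : Finset V := univ.filter (fun v => ROv ends F v0 v) with hT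
  set A : Finset V := univ.filter (fun v => REv ends F v0 v) with hA
  have hTmem : ∀ v ∈ T, ROv ends F v0 v := fun v hv => (Finset.mem_filter.mp hv).2
  have hAmem : ∀ v ∈ A, REv ends F v0 v := fun v hv => (Finset.mem_filter.mp hv).2
  have hTside : ∀ v ∈ T, side v = ! side v0 := by
    intro v hv
    obtain ⟨P, hP⟩ := hTmem v hv
    simpa using hP.side_eq hbip
  have hAside : ∀ v ∈ A, side v = side v0 := by
    intro v hv
    obtain ⟨P, hP⟩ := hAmem v hv
    simpa using hP.side_eq hbip
  have hv0A : v0 ∈ A := by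
    rw [hA]; exact Finset.mem_filter.mpr ⟨Finset.mem_univ _, ⟨∅, Alt.base⟩⟩
  -- the two disjoint families of edges counted by eAB ends T A
  set S1 : Finset E := F.filter (fun e => (ends e).1 ∈ T ∨ (ends e).2 ∈ T) with hS1
  set S2 : Finset E := (univ \ F).filter (fun e => (ends e).1 ∈ A ∨ (ends e).2 ∈ A) with hS2
  set W : Finset E := (Finset.univ.filter fun e =>
    ((ends e).1 ∈ T ∧ (ends e).2 ∈ A) ∨ ((ends e).1 ∈ A ∧ (ends e).2 ∈ T)) with hWdef
  have hS1W : S1 ⊆ W := by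
    intro e he
    obtain ⟨heF, hend⟩ := Finset.mem_filter.mp he
    rw [hWdef]; rw [Finset.mem_filter]
    refine ⟨Finset.mem_univ _, ?_⟩
    rcases hend with h1 | h2
    · left
      refine ⟨h1, ?_⟩
      have hre : REv ends F v0 (ends e).2 :=
        closure_in hbip heF (Or.inr (by simp)) (hTmem _ h1)
      rw [hA]; exact Finset.mem_filter.mpr ⟨Finset.mem_univ _, hre⟩
    · right
      refine ⟨?_, h2⟩
      have hre : REv ends F v0 (ends e).1 :=
        closure_in hbip heF (Or.inl (by simp)) (hTmem _ h2)
      rw [hA]; exact Finset.mem_filter.mpr ⟨Finset.mem_univ _, hre⟩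
  have hS2W : S2 ⊆ W := by
    intro e he
    obtain ⟨heF, hend⟩ := Finset.mem_filter.mp he
    have heF' : e ∉ F := (Finset.mem_sdiff.mp heF).2
    rw [hWdef]; rw [Finset.mem_filter]
    refine ⟨Finset.mem_univ _, ?_⟩
    rcases hend with h1 | h2
    · right
      refine ⟨h1, ?_⟩
      have hro : ROv ends F v0 (ends e).2 :=
        closure_out hbip heF' (Or.inl (by simp)) (hAmem _ h1)
      rw [hT]; exact Finset.mem_filter.mpr ⟨Finset.mem_univ _, hro⟩
    · left
      refine ⟨?_, h2⟩
      have hro : ROv ends F v0 (ends e).1 :=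
        closure_out hbip heF' (Or.inr (by simp)) (hAmem _ h2)
      rw [hT]; exact Finset.mem_filter.mpr ⟨Finset.mem_univ _, hro⟩
  have hdisj : Disjoint S1 S2 := by
    rw [hS1, hS2]
    refine Finset.disjoint_left.mpr fun e he1 he2 => ?_
    exact (Finset.mem_sdiff.mp (Finset.mem_filter.mp he2).1).2 (Finset.mem_filter.mp he1).1
  have hcard : S1.card + S2.card ≤ W.card := by
    rw [← Finset.card_union_of_disjoint hdisj]
    exact Finset.card_le_card (Finset.union_subset hS1W hS2W)
  -- identify the cards with degree sums
  have honeT : ∀ e ∈ F, ¬((ends e).1 ∈ T ∧ (ends e).2 ∈ T) := by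
    rintro e _ ⟨h1, h2⟩
    have := hTside _ h1; have := hTside _ h2
    have := hbip e
    simp_all
  have honeA : ∀ e ∈ univ \ F, ¬((ends e).1 ∈ A ∧ (ends e).2 ∈ A) := by
    rintro e _ ⟨h1, h2⟩
    have := hAside _ h1; have := hAside _ h2
    have := hbip e
    simp_all
  have hc1 : ∑ v ∈ T, mdeg ends F v = S1.card := sum_mdeg_eq_card ends F T honeT
  have hc2 : ∑ v ∈ A, mdeg ends (univ \ F) v = S2.card :=
    sum_mdeg_eq_card ends (univ \ F) A honeA
  -- degree bounds
  have hTf : ∑ v ∈ T, f v ≤ ∑ v ∈ T, (mdeg ends F v : ℤ) :=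
    Finset.sum_le_sum fun v hv => deg_ge_f_of_RO hbip hgf hmin hdef (hTmem v hv)
  have hAg : ∑ v ∈ A, ((mdeg ends Finset.univ v : ℤ) - g v) + 1
      ≤ ∑ v ∈ A, (mdeg ends (univ \ F) v : ℤ) := by
    have hterm : ∀ v ∈ A, (mdeg ends (univ \ F) v : ℤ)
        = (mdeg ends Finset.univ v : ℤ) - g v + (g v - mdeg ends F v) := by
      intro v _; rw [mdeg_compl_int]; ring
    rw [Finset.sum_congr rfl hterm, Finset.sum_add_distrib]
    have h1 : (1 : ℤ) ≤ ∑ v ∈ A, (g v - mdeg ends F v) := by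
      have hnn : ∀ v ∈ A, (0 : ℤ) ≤ g v - mdeg ends F v := fun v hv => by
        have := deg_le_g_of_RE hbip hgf hmin hdef (hAmem v hv); omega
      have := Finset.single_le_sum hnn hv0A
      omega
    omega
  refine ⟨T, A, ?_, ?_⟩
  · cases hs : side v0
    · left
      exact ⟨fun v hv => by rw [hTside v hv, hs]; rfl, fun v hv => by rw [hAside v hv, hs]⟩
    · right
      exact ⟨fun v hv => by rw [hTside v hv, hs]; rfl, fun v hv => by rw [hAside v hv, hs]⟩
  · have heq : eAB ends T A = W.card := rfl
    have hfin : (S1.card : ℤ) + S2.card ≤ eAB ends T A := by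
      rw [heq]; exact_mod_cast hcard
    have hc1' : (∑ v ∈ T, (mdeg ends F v : ℤ)) = (S1.card : ℤ) := by exact_mod_cast hc1
    have hc2' : (∑ v ∈ A, (mdeg ends (univ \ F) v : ℤ)) = (S2.card : ℤ) := by exact_mod_cast hc2
    linarith [hTf, hAg, hfin, hc1', hc2']
end Main

section Final
set_option linter.unusedSectionVars false
variable [DecidableEq E]

lemma Excess_compl (ends : E → V × V) (g f : V → ℤ) (H : Finset E) :
    Excess ends (fun v => (mdeg ends Finset.univ v : ℤ) - f v)
      (fun v => (mdeg ends Finset.univ v : ℤ) - g v) H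
      = Excess ends g f (univ \ H) := by
  unfold Excess
  refine Finset.sum_congr rfl fun v _ => ?_
  have := mdeg_compl_int ends H v
  simp only []
  omega

theorem stmt6' (ends : E → V × V) (side : V → Bool)
    (hbip : ∀ e : E, side (ends e).1 ≠ side (ends e).2)
    (g f : V → ℤ) (hgf : ∀ v, g v ≤ f v) :
    (∃ F : Finset E, ∀ v : V,
        g v ≤ (mdeg ends F v : ℤ) ∧ (mdeg ends F v : ℤ) ≤ f v) ↔
    ∀ A B : Finset V,
      (((∀ v ∈ A, side v = true) ∧ (∀ v ∈ B, side v = false)) ∨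
       ((∀ v ∈ A, side v = false) ∧ (∀ v ∈ B, side v = true))) →
      (eAB ends A B : ℤ) ≤ ∑ v ∈ A, f v
        + ∑ v ∈ B, ((mdeg ends Finset.univ v : ℤ) - g v) := by
  constructor
  · rintro ⟨F, hF⟩ A B _
    exact easy_dir ends g f F hF A B
  · intro hcond
    by_contra hno
    push_neg at hno
    obtain ⟨F, -, hmin⟩ := Finset.exists_min_image (univ : Finset (Finset E))
      (Excess ends g f) ⟨∅, Finset.mem_univ _⟩
    have hmin' : ∀ G, Excess ends g f F ≤ Excess ends g f G :=
      fun G => hmin G (Finset.mem_univ _)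
    obtain ⟨v, hv⟩ := hno F
    by_cases hcase : g v ≤ (mdeg ends F v : ℤ)
    · -- excess case : dualize
      have hexc : f v < (mdeg ends F v : ℤ) := hv hcase
      set d : V → ℤ := fun v => (mdeg ends Finset.univ v : ℤ) with hd
      have hgf' : ∀ w, d w - f w ≤ d w - g w := fun w => by have := hgf w; omega
      have hminD : ∀ G, Excess ends (fun w => d w - f w) (fun w => d w - g w) (univ \ F)
          ≤ Excess ends (fun w => d w - f w) (fun w => d w - g w) G := by
        intro G
        rw [Excess_compl, Excess_compl, Finset.sdiff_sdiff_self_left, Finset.univ_inter]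
        exact hmin' (univ \ G)
      have hdef' : (mdeg ends (univ \ F) v : ℤ) < d v - f v := by
        rw [mdeg_compl_int]; have : d v = (mdeg ends Finset.univ v : ℤ) := rfl; omega
      obtain ⟨A, B, hside, hviol⟩ := main_deficient hbip hgf' (univ \ F) hminD v hdef'
      have hside' : ((∀ w ∈ B, side w = true) ∧ (∀ w ∈ A, side w = false)) ∨
          ((∀ w ∈ B, side w = false) ∧ (∀ w ∈ A, side w = true)) := by tauto
      have hc := hcond B A hside'
      rw [eAB_comm ends B A] at hc
      have e1 : ∑ w ∈ A, (d w - g w) = ∑ w ∈ A, ((mdeg ends Finset.univ w : ℤ) - g w) := rfl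
      have e2 : ∑ w ∈ B, ((mdeg ends Finset.univ w : ℤ) - (d w - f w)) = ∑ w ∈ B, f w := by
        refine Finset.sum_congr rfl fun w _ => ?_
        have : d w = (mdeg ends Finset.univ w : ℤ) := rfl
        omega
      rw [e2] at hviol
      linarith
    · push_neg at hcase
      obtain ⟨A, B, hside, hviol⟩ := main_deficient hbip hgf F hmin' v hcase
      have := hcond A B hside
      linarith

end Final

/-- Folkman–Fulkerson: (g,f)-factors of bipartite multigraphs. -/
theorem stmt6 (ends : E → V × V) (side : V → Bool)
    (hbip : ∀ e : E, side (ends e).1 ≠ side (ends e).2)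
    (g f : V → ℤ) (hgf : ∀ v, g v ≤ f v) :
    (∃ F : Finset E, ∀ v : V,
        g v ≤ (mdeg ends F v : ℤ) ∧ (mdeg ends F v : ℤ) ≤ f v) ↔
    ∀ A B : Finset V,
      (((∀ v ∈ A, side v = true) ∧ (∀ v ∈ B, side v = false)) ∨
       ((∀ v ∈ A, side v = false) ∧ (∀ v ∈ B, side v = true))) →
      (eAB ends A B : ℤ) ≤ ∑ v ∈ A, f v
        + ∑ v ∈ B, ((mdeg ends Finset.univ v : ℤ) - g v) := by
  haveI := Classical.decEq E
  exact stmt6' ends side hbip g f hgf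
end

section
/- Every directed multigraph G can be edge-decomposed into k factors G_1,...,G_k such that for each vertex v there is a tripartition I_0(v), I_1(v), I_2(v) of {1,...,k} with: d_{G_i}(v) = ⌊d^+_G(v)/k⌋ + ⌊d^-_G(v)/k⌋ + p for i ∈ I_p(v), and |I_0(v)| = min{k - [d^+_G(v)]_k, k - [d^-_G(v)]_k}, |I_1(v)| = |[d^+_G(v)]_k - [d^-_G(v)]_k|, |I_2(v)| = min{[d^+_G(v)]_k, [d^-_G(v)]_k}. -/
open Finset

variable {V E : Type*} [Fintype V] [Fintype E] [DecidableEq V]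

/-- Out-degree of v in the directed subgraph with edge set F. -/
def outdeg (ends : E → V × V) (F : Finset E) (v : V) : ℕ :=
  (F.filter fun e => (ends e).1 = v).card

/-- In-degree of v in the directed subgraph with edge set F. -/
def indeg (ends : E → V × V) (F : Finset E) (v : V) : ℕ :=
  (F.filter fun e => (ends e).2 = v).card



section Helpers

theorem sum_sigma_univ {ι : Type*} [Fintype ι] {γ : ι → Type*} [∀ i, Fintype (γ i)] {M : Type*}
    [AddCommMonoid M] (f : (Σ i, γ i) → M) : ∑ x, f x = ∑ i, ∑ c : γ i, f ⟨i, c⟩ := by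
  rw [← Finset.sum_sigma, Finset.univ_sigma_univ]

theorem card_filter_sum_univ {α γ : Type*} [Fintype α] [Fintype γ] (p : α ⊕ γ → Prop)
    [DecidablePred p] :
    (univ.filter p).card = ((univ : Finset α).filter fun a => p (.inl a)).card
      + ((univ : Finset γ).filter fun c => p (.inr c)).card := by
  simp only [Finset.card_filter, Fintype.sum_sum_type]

theorem card_filter_sigma_univ {ι : Type*} [Fintype ι] {γ : ι → Type*} [∀ i, Fintype (γ i)]
    (p : (Σ i, γ i) → Prop) [DecidablePred p] :
    (univ.filter p).card = ∑ i, ((univ : Finset (γ i)).filter fun c => p ⟨i, c⟩).card := by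
  simp only [Finset.card_filter, sum_sigma_univ]

theorem card_filter_equiv_univ {α γ : Type*} [Fintype α] [Fintype γ] (e : α ≃ γ) (p : γ → Prop)
    [DecidablePred p] :
    ((univ : Finset α).filter fun a => p (e a)).card = ((univ : Finset γ).filter p).card := by
  rw [Finset.card_filter, Finset.card_filter]
  exact Equiv.sum_comp e (fun c => if p c then (1 : ℕ) else 0)

theorem card_filter_prod_fst {α γ : Type*} [Fintype α] [Fintype γ] (p : α → Prop)
    [DecidablePred p] :
    ((univ : Finset (α × γ)).filter fun x => p x.1).card
      = ((univ : Finset α).filter p).card * Fintype.card γ := by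
  rw [Finset.card_filter, Fintype.sum_prod_type]
  have : ∀ a : α, (∑ _b : γ, if p a then (1:ℕ) else 0) = if p a then Fintype.card γ else 0 := by
    intro a
    split_ifs <;> simp
  rw [Finset.sum_congr rfl fun a _ => this a, Finset.sum_ite, Finset.sum_const,
    Finset.sum_const_zero, add_zero, smul_eq_mul]

theorem card_filter_fin_val (N m : ℕ) :
    ((univ : Finset (Fin N)).filter fun x : Fin N => (x : ℕ) = m).card = if m < N then 1 else 0 := by
  split_ifs with h
  · rw [Finset.card_eq_one]
    refine ⟨⟨m, h⟩, ?_⟩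
    ext x
    simp [Fin.ext_iff]
  · rw [Finset.card_eq_zero, Finset.filter_eq_empty_iff]
    intro x _
    exact fun hx => h (hx ▸ x.isLt)

theorem card_filter_rank {α : Type*} [DecidableEq α] {rk : α → ℕ} {S : Finset α}
    (hinj : Set.InjOn rk S) (him : S.image rk = Finset.range S.card) (P : ℕ → Prop)
    [DecidablePred P] :
    (S.filter fun a => P (rk a)).card = ((Finset.range S.card).filter P).card := by
  rw [← him, Finset.filter_image,
    Finset.card_image_of_injOn (hinj.mono (Finset.filter_subset _ _))]

theorem card_filter_const {γ : Type*} [Fintype γ] (P : Prop) [Decidable P] :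
    ((univ : Finset γ).filter fun _ => P).card = if P then Fintype.card γ else 0 := by
  split_ifs with h <;> simp [h]

theorem sum_ite_pair {V : Type*} [Fintype V] [DecidableEq V] (w : V → ℕ) (g : V → ℕ)
    (v : V) (j : ℕ) :
    (∑ v' : V, if v' = v ∧ g v' = j then w v' else 0) = if g v = j then w v else 0 := by
  have h : ∀ v' ∈ (univ : Finset V),
      (if v' = v ∧ g v' = j then w v' else 0)
        = if v' = v then (if g v = j then w v else 0) else 0 := by
    intro v' _
    by_cases h1 : v' = v
    · subst h1; by_cases h2 : g v' = j <;> simp [h2]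
    · simp [h1]
  rw [Finset.sum_congr rfl h, Finset.sum_ite_eq' univ v, if_pos (mem_univ v)]

end Helpers
theorem divcount (k j a : ℕ) (hk : 0 < k) : a / k = j ↔ j * k ≤ a ∧ a < j * k + k := by
  rw [Nat.eq_iff_le_and_ge, Nat.le_div_iff_mul_le hk, Nat.div_le_iff_le_mul_add_pred hk,
    Nat.mul_comm j k]
  omega
theorem card_divcount (n k j : ℕ) (hk : 0 < k) :
    ((Finset.range n).filter (fun a => a / k = j)).card = min k (n - j * k) := by
  have : (Finset.range n).filter (fun a => a / k = j) = Finset.Ico (min (j*k) n) (min (j*k+k) n) := by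
    ext a
    simp only [mem_filter, mem_range, mem_Ico, divcount _ _ _ hk, lt_min_iff, min_le_iff]
    omega
  rw [this, Nat.card_Ico]
  omega

theorem regular_proper {EE X Y : Type*} [DecidableEq EE] [DecidableEq X] [DecidableEq Y] :
    ∀ (n : ℕ) (F : Finset EE) (L : EE → X) (R : EE → Y),
    (∀ x, (F.filter fun e => L e = x).card = n ∨ (F.filter fun e => L e = x).card = 0) →
    (∀ y, (F.filter fun e => R e = y).card = n ∨ (F.filter fun e => R e = y).card = 0) →
    ∃ c : EE → ℕ, (∀ e ∈ F, c e < n) ∧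
      (∀ e ∈ F, ∀ e' ∈ F, L e = L e' → c e = c e' → e = e') ∧
      (∀ e ∈ F, ∀ e' ∈ F, R e = R e' → c e = c e' → e = e') := by
  intro n
  induction n with
  | zero =>
    intro F L R hL _
    have hF : F = ∅ := by
      by_contra h
      obtain ⟨e, he⟩ := Finset.nonempty_iff_ne_empty.mpr h
      have h1 : e ∈ F.filter fun e' => L e' = L e := by simp [he]
      rcases hL (L e) with h2 | h2 <;>
        · rw [Finset.card_eq_zero] at h2; simp [h2] at h1
    subst hF
    exact ⟨fun _ => 0, by simp, by simp, by simp⟩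
  | succ n IH =>
    intro F L R hL hR
    set X' := F.image L with hX'
    set Y' := F.image R with hY'
    -- fibers over X' have card n+1
    have hfibL : ∀ x ∈ X', (F.filter fun e => L e = x).card = n + 1 := by
      intro x hx
      rcases hL x with h | h
      · exact h
      · exfalso
        obtain ⟨e, he, rfl⟩ := Finset.mem_image.mp hx
        rw [Finset.card_eq_zero] at h
        have : e ∈ F.filter fun e' => L e' = L e := by simp [he]
        simp [h] at this
    have hfibR : ∀ y ∈ Y', (F.filter fun e => R e = y).card = n + 1 := by
      intro y hy
      rcases hR y with h | h
      · exact h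
      · exfalso
        obtain ⟨e, he, rfl⟩ := Finset.mem_image.mp hy
        rw [Finset.card_eq_zero] at h
        have : e ∈ F.filter fun e' => R e' = R e := by simp [he]
        simp [h] at this
    -- Hall's condition
    set t : {x // x ∈ X'} → Finset Y := fun x => (F.filter fun e => L e = x.1).image R with ht
    have hall : ∀ s : Finset {x // x ∈ X'}, s.card ≤ (s.biUnion t).card := by
      intro s
      set U : Finset EE := s.biUnion (fun x => F.filter fun e => L e = x.1) with hU
      have hcardU : U.card = (n + 1) * s.card := by
        rw [Finset.card_biUnion]
        · rw [Finset.sum_congr rfl (fun x _ => hfibL x.1 x.2), Finset.sum_const, smul_eq_mul,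
            Nat.mul_comm]
        · intro a _ b _ hab
          rw [Function.onFun, Finset.disjoint_left]
          intro e he1 he2
          rw [Finset.mem_filter] at he1 he2
          exact hab (Subtype.ext (he1.2 ▸ he2.2))
      have hUsub : U ⊆ (s.biUnion t).biUnion (fun y => F.filter fun e => R e = y) := by
        intro e he
        obtain ⟨x, hx, he'⟩ := Finset.mem_biUnion.mp he
        have heF : e ∈ F := (Finset.mem_filter.mp he').1
        refine Finset.mem_biUnion.mpr ⟨R e, ?_, by simp [heF]⟩
        exact Finset.mem_biUnion.mpr ⟨x, hx, Finset.mem_image_of_mem R he'⟩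
      have h2 : U.card ≤ (n + 1) * (s.biUnion t).card := by
        calc U.card ≤ ∑ y ∈ s.biUnion t, (F.filter fun e => R e = y).card :=
              le_trans (Finset.card_le_card hUsub) (Finset.card_biUnion_le)
          _ ≤ ∑ _y ∈ s.biUnion t, (n+1) := by
              apply Finset.sum_le_sum
              intro y _
              rcases hR y with h | h <;> omega
          _ = (n+1) * (s.biUnion t).card := by rw [Finset.sum_const, smul_eq_mul, Nat.mul_comm]
      rw [hcardU] at h2
      exact Nat.le_of_mul_le_mul_left h2 (Nat.succ_pos n)
    obtain ⟨f, hfinj, hft⟩ := (Finset.all_card_le_biUnion_card_iff_existsInjective' t).mp hall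
    -- choose matched edges
    have hch : ∀ x : {x // x ∈ X'}, ∃ e, e ∈ F ∧ L e = x.1 ∧ R e = f x := by
      intro x
      obtain ⟨e, he, hre⟩ := Finset.mem_image.mp (hft x)
      exact ⟨e, (Finset.mem_filter.mp he).1, (Finset.mem_filter.mp he).2, hre⟩
    choose g hgF hgL hgR using hch
    have hginj : Function.Injective g := by
      intro a b hab
      apply Subtype.ext
      rw [← hgL a, ← hgL b, hab]
    set M : Finset EE := X'.attach.image g with hM
    have hmemM : ∀ e, e ∈ M ↔ ∃ x, g x = e := by
      intro e
      simp only [hM, Finset.mem_image, Finset.mem_attach, true_and]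
    set F' := F \ M with hF'
    -- f is surjective onto Y'
    have hfY' : ∀ x, f x ∈ Y' := by
      intro x
      obtain ⟨e, he, hre⟩ := Finset.mem_image.mp (hft x)
      exact hre ▸ Finset.mem_image_of_mem R (Finset.mem_filter.mp he).1
    have hcards : X'.card = Y'.card := by
      have h1 : F.card = (n+1) * X'.card := by
        rw [Finset.card_eq_sum_card_fiberwise (fun e he => Finset.mem_image_of_mem L he),
          Finset.sum_congr rfl hfibL, Finset.sum_const, smul_eq_mul, Nat.mul_comm]
      have h2 : F.card = (n+1) * Y'.card := by
        rw [Finset.card_eq_sum_card_fiberwise (fun e he => Finset.mem_image_of_mem R he),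
          Finset.sum_congr rfl hfibR, Finset.sum_const, smul_eq_mul, Nat.mul_comm]
      exact Nat.eq_of_mul_eq_mul_left (Nat.succ_pos n) (h1 ▸ h2)
    have hfsurj : ∀ y ∈ Y', ∃ x, f x = y := by
      intro y hy
      set fimg := X'.attach.image f with hfimg
      have h1 : fimg.card = X'.card := by
        rw [Finset.card_image_of_injective _ hfinj, Finset.card_attach]
      have h2 : fimg ⊆ Y' := by
        intro y' hy'
        obtain ⟨x, _, rfl⟩ := Finset.mem_image.mp hy'
        exact hfY' x
      have h3 : fimg = Y' := Finset.eq_of_subset_of_card_le h2 (by omega)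
      rw [← h3] at hy
      obtain ⟨x, _, rfl⟩ := Finset.mem_image.mp hy
      exact ⟨x, rfl⟩
    -- new fiber cardinalities
    have hfibL' : ∀ x, (F'.filter fun e => L e = x).card = n ∨
        (F'.filter fun e => L e = x).card = 0 := by
      intro x
      by_cases hx : x ∈ X'
      · left
        have heq : (F'.filter fun e => L e = x) = (F.filter fun e => L e = x).erase (g ⟨x, hx⟩) := by
          ext e
          simp only [hF', Finset.mem_filter, Finset.mem_sdiff, Finset.mem_erase, hmemM]
          constructor
          · rintro ⟨⟨heF, hnM⟩, hLe⟩
            refine ⟨fun hcon => hnM ⟨⟨x, hx⟩, hcon.symm⟩, heF, hLe⟩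
          · rintro ⟨hne, heF, hLe⟩
            refine ⟨⟨heF, ?_⟩, hLe⟩
            rintro ⟨x2, rfl⟩
            have : x2 = ⟨x, hx⟩ := Subtype.ext ((hgL x2).symm.trans hLe)
            exact hne (by rw [this])
        rw [heq, Finset.card_erase_of_mem (by simp [Finset.mem_filter, hgF, hgL]),
          hfibL x hx]
        omega
      · right
        rw [Finset.card_eq_zero, Finset.filter_eq_empty_iff]
        intro e he
        have heF : e ∈ F := (Finset.mem_sdiff.mp he).1
        exact fun hLe => hx (hLe ▸ Finset.mem_image_of_mem L heF)
    have hfibR' : ∀ y, (F'.filter fun e => R e = y).card = n ∨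
        (F'.filter fun e => R e = y).card = 0 := by
      intro y
      by_cases hy : ∃ x, f x = y
      · left
        obtain ⟨x, rfl⟩ := hy
        have heq : (F'.filter fun e => R e = f x) = (F.filter fun e => R e = f x).erase (g x) := by
          ext e
          simp only [hF', Finset.mem_filter, Finset.mem_sdiff, Finset.mem_erase, hmemM]
          constructor
          · rintro ⟨⟨heF, hnM⟩, hRe⟩
            exact ⟨fun hcon => hnM ⟨x, hcon.symm⟩, heF, hRe⟩
          · rintro ⟨hne, heF, hRe⟩
            refine ⟨⟨heF, ?_⟩, hRe⟩
            rintro ⟨x2, rfl⟩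
            exact hne (congrArg g (hfinj ((hgR x2).symm.trans hRe)))
        rw [heq, Finset.card_erase_of_mem (by simp [Finset.mem_filter, hgF, hgR]),
          hfibR (f x) (hfY' x)]
        omega
      · right
        rw [Finset.card_eq_zero, Finset.filter_eq_empty_iff]
        intro e he hRe
        have heF : e ∈ F := (Finset.mem_sdiff.mp he).1
        exact hy (hfsurj (R e) (Finset.mem_image_of_mem R heF) |>.imp
          fun x hx => hx.trans hRe)
    obtain ⟨c', hc1, hc2, hc3⟩ := IH F' L R hfibL' hfibR'
    refine ⟨fun e => if e ∈ M then n else c' e, ?_, ?_, ?_⟩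
    · intro e he
      by_cases hM : e ∈ M
      · simp [hM]
      · simp only [hM, if_false]
        exact Nat.lt_succ_of_lt (hc1 e (Finset.mem_sdiff.mpr ⟨he, hM⟩))
    · intro e he e' he' hLe hce
      by_cases hM : e ∈ M <;> by_cases hM' : e' ∈ M
      · obtain ⟨a, rfl⟩ := (hmemM e).mp hM
        obtain ⟨b, rfl⟩ := (hmemM e').mp hM'
        have : a = b := Subtype.ext ((hgL a).symm.trans (hLe.trans (hgL b)))
        rw [this]
      · exfalso
        simp only [hM, hM', if_true, if_false] at hce
        exact absurd hce.symm (Nat.ne_of_lt (hc1 e' (Finset.mem_sdiff.mpr ⟨he', hM'⟩)))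
      · exfalso
        simp only [hM, hM', if_true, if_false] at hce
        exact absurd hce (Nat.ne_of_lt (hc1 e (Finset.mem_sdiff.mpr ⟨he, hM⟩)))
      · simp only [hM, hM', if_false] at hce
        exact hc2 e (Finset.mem_sdiff.mpr ⟨he, hM⟩) e' (Finset.mem_sdiff.mpr ⟨he', hM'⟩) hLe hce
    · intro e he e' he' hRe hce
      by_cases hM : e ∈ M <;> by_cases hM' : e' ∈ M
      · obtain ⟨a, rfl⟩ := (hmemM e).mp hM
        obtain ⟨b, rfl⟩ := (hmemM e').mp hM'
        have : a = b := hfinj ((hgR a).symm.trans (hRe.trans (hgR b)))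
        rw [this]
      · exfalso
        simp only [hM, hM', if_true, if_false] at hce
        exact absurd hce.symm (Nat.ne_of_lt (hc1 e' (Finset.mem_sdiff.mpr ⟨he', hM'⟩)))
      · exfalso
        simp only [hM, hM', if_true, if_false] at hce
        exact absurd hce (Nat.ne_of_lt (hc1 e (Finset.mem_sdiff.mpr ⟨he, hM⟩)))
      · simp only [hM, hM', if_false] at hce
        exact hc3 e (Finset.mem_sdiff.mpr ⟨he, hM⟩) e' (Finset.mem_sdiff.mpr ⟨he', hM'⟩) hRe hce

theorem exists_rank {α β : Type*} [Fintype α] [DecidableEq β] (f : α → β) :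
    ∃ rk : α → ℕ, ∀ b : β,
      Set.InjOn rk (univ.filter fun a => f a = b) ∧
      (univ.filter fun a => f a = b).image rk =
        Finset.range (univ.filter fun a => f a = b).card := by
  classical
  set F : β → Finset α := fun b => univ.filter fun a => f a = b with hF
  refine ⟨fun a => ((F (f a)).equivFin ⟨a, by simp [hF]⟩ : Fin _), ?_⟩
  intro b
  have key : ∀ a (ha : a ∈ F b),
      ((F (f a)).equivFin ⟨a, by simp [hF]⟩ : Fin _).val
        = ((F b).equivFin ⟨a, ha⟩).val := by
    intro a ha
    have hfa : f a = b := by simpa [hF] using ha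
    subst hfa
    rfl
  constructor
  · intro a ha a' ha' h
    simp only [coe_filter, Set.mem_setOf_eq] at ha ha'
    have ha2 : a ∈ F b := by simp [hF, ha.2]
    have ha2' : a' ∈ F b := by simp [hF, ha'.2]
    dsimp only at h
    rw [key a ha2, key a' ha2'] at h
    have := (F b).equivFin.injective (Fin.val_injective.eq_iff.mp h)
    exact Subtype.ext_iff.mp this
  · ext n
    simp only [Finset.mem_image, Finset.mem_range]
    constructor
    · rintro ⟨a, ha, rfl⟩
      rw [key a ha]
      exact ((F b).equivFin ⟨a, ha⟩).isLt
    · intro hn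
      set s := (F b).equivFin.symm ⟨n, hn⟩ with hs
      refine ⟨s.1, s.2, ?_⟩
      rw [key s.1 s.2]
      have h1 : (⟨s.1, s.2⟩ : {x // x ∈ F b}) = s := rfl
      rw [h1, hs, Equiv.apply_symm_apply]

theorem card_filter_injOn {α β : Type*} [DecidableEq α] [DecidableEq β] {S : Finset α} {c : α → β}
    (h : Set.InjOn c S) (i : β) :
    (S.filter fun a => c a = i).card = if i ∈ S.image c then 1 else 0 := by
  split_ifs with hi
  · obtain ⟨a, ha, rfl⟩ := Finset.mem_image.mp hi
    rw [Finset.card_eq_one]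
    refine ⟨a, ?_⟩
    ext a'
    simp only [Finset.mem_filter, Finset.mem_singleton]
    constructor
    · rintro ⟨ha', hc⟩
      exact h ha' ha hc
    · rintro rfl
      exact ⟨ha, rfl⟩
  · rw [Finset.card_eq_zero, Finset.filter_eq_empty_iff]
    intro a ha hc
    exact hi (hc ▸ Finset.mem_image_of_mem c ha)

theorem tripart {k : ℕ} {A B : Finset (Fin k)} (hAB : A ⊆ B) (f : Fin k → ℕ) (q : ℕ)
    (hf : ∀ i, f i = q + (if i ∈ A then 1 else 0) + (if i ∈ B then 1 else 0)) :
    ∃ I₀ I₁ I₂ : Finset (Fin k), Disjoint I₀ I₁ ∧ Disjoint I₀ I₂ ∧ Disjoint I₁ I₂ ∧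
      I₀ ∪ I₁ ∪ I₂ = univ ∧
      I₀.card = min (k - A.card) (k - B.card) ∧
      I₁.card = Nat.dist A.card B.card ∧
      I₂.card = min A.card B.card ∧
      (∀ i ∈ I₀, f i = q) ∧ (∀ i ∈ I₁, f i = q + 1) ∧ (∀ i ∈ I₂, f i = q + 2) := by
  classical
  have hcard : A.card ≤ B.card := Finset.card_le_card hAB
  have hBk : B.card ≤ k := by simpa using Finset.card_le_card (Finset.subset_univ B)
  refine ⟨Bᶜ, B \ A, A, ?_, ?_, ?_, ?_, ?_, ?_, ?_, ?_, ?_, ?_⟩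
  · rw [Finset.disjoint_left]
    intro i hi hi'
    exact (Finset.mem_compl.mp hi) (Finset.mem_sdiff.mp hi').1
  · rw [Finset.disjoint_left]
    intro i hi hi'
    exact (Finset.mem_compl.mp hi) (hAB hi')
  · rw [Finset.disjoint_left]
    intro i hi hi'
    exact (Finset.mem_sdiff.mp hi).2 hi'
  · ext i
    simp only [Finset.mem_union, Finset.mem_compl, Finset.mem_sdiff, Finset.mem_univ, iff_true]
    tauto
  · rw [Finset.card_compl, Fintype.card_fin]
    omega
  · rw [Finset.card_sdiff_of_subset hAB, Nat.dist_eq_sub_of_le hcard]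
  · omega
  · intro i hi
    have hiB : i ∉ B := by simpa using hi
    have hiA : i ∉ A := fun h => hiB (hAB h)
    simp [hf i, hiA, hiB]
  · intro i hi
    rw [Finset.mem_sdiff] at hi
    simp [hf i, hi.1, hi.2]
  · intro i hi
    simp [hf i, hi, hAB hi]

/-- factorizations of directed multigraphs with controlled degree tripartitions. -/
theorem stmt8 (ends : E → V × V) (k : ℕ) (hk : 0 < k) :
    ∃ c : E → Fin k, ∀ v : V, ∃ I₀ I₁ I₂ : Finset (Fin k),
      Disjoint I₀ I₁ ∧ Disjoint I₀ I₂ ∧ Disjoint I₁ I₂ ∧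
      I₀ ∪ I₁ ∪ I₂ = Finset.univ ∧
      I₀.card = min (k - outdeg ends Finset.univ v % k) (k - indeg ends Finset.univ v % k) ∧
      I₁.card = Nat.dist (outdeg ends Finset.univ v % k) (indeg ends Finset.univ v % k) ∧
      I₂.card = min (outdeg ends Finset.univ v % k) (indeg ends Finset.univ v % k) ∧
      (∀ i ∈ I₀, mdeg ends (Finset.univ.filter fun e => c e = i) v
        = outdeg ends Finset.univ v / k + indeg ends Finset.univ v / k) ∧
      (∀ i ∈ I₁, mdeg ends (Finset.univ.filter fun e => c e = i) v
        = outdeg ends Finset.univ v / k + indeg ends Finset.univ v / k + 1) ∧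
      (∀ i ∈ I₂, mdeg ends (Finset.univ.filter fun e => c e = i) v
        = outdeg ends Finset.univ v / k + indeg ends Finset.univ v / k + 2) := by
  classical
  obtain ⟨rkO, hrkO⟩ := exists_rank (fun e : E => (ends e).1)
  obtain ⟨rkI, hrkI⟩ := exists_rank (fun e : E => (ends e).2)
  set FO : V → Finset E := fun v => univ.filter fun e => (ends e).1 = v with hFO
  set FI : V → Finset E := fun v => univ.filter fun e => (ends e).2 = v with hFI
  set dO : V → ℕ := fun v => (FO v).card with hdO
  set dI : V → ℕ := fun v => (FI v).card with hdI
  have hout : ∀ v, outdeg ends Finset.univ v = dO v := fun v => rfl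
  have hin : ∀ v, indeg ends Finset.univ v = dI v := fun v => rfl
  set nd : V → ℕ := fun v =>
    if dO v % k = 0 ∨ dI v % k = 0 then 0 else k - max (dO v % k) (dI v % k) with hnd
  set pO : V → ℕ := fun v => if dO v % k = 0 then 0 else k - dO v % k - nd v with hpO
  set pI : V → ℕ := fun v => if dI v % k = 0 then 0 else k - dI v % k - nd v with hpI
  have hndO : ∀ v, dO v % k + nd v + pO v = if dO v % k = 0 then 0 else k := by
    intro v
    have h1 : dO v % k < k := Nat.mod_lt _ hk
    have h2 : dI v % k < k := Nat.mod_lt _ hk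
    simp only [hnd, hpO]
    split_ifs <;> omega
  have hndI : ∀ v, dI v % k + nd v + pI v = if dI v % k = 0 then 0 else k := by
    intro v
    have h1 : dO v % k < k := Nat.mod_lt _ hk
    have h2 : dI v % k < k := Nat.mod_lt _ hk
    simp only [hnd, hpI]
    split_ifs <;> omega
  set PO : ℕ := ∑ v, pO v with hPO
  set PI : ℕ := ∑ v, pI v with hPI
  -- divisibility for the pad count
  have hsumO : ∑ v, dO v = Fintype.card E := by
    rw [← Finset.card_univ,
      Finset.card_eq_sum_card_fiberwise (f := fun e : E => (ends e).1) (t := univ)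
        (fun e _ => mem_univ _)]
  have hsumI : ∑ v, dI v = Fintype.card E := by
    rw [← Finset.card_univ,
      Finset.card_eq_sum_card_fiberwise (f := fun e : E => (ends e).2) (t := univ)
        (fun e _ => mem_univ _)]
  have hmodeq : PO % k = PI % k := by
    have hO : ((∑ v, dO v % k) + (∑ v, nd v) + PO) % k = 0 := by
      rw [← Finset.sum_add_distrib, ← Finset.sum_add_distrib, Finset.sum_nat_mod]
      have : ∀ v ∈ (univ : Finset V), (dO v % k + nd v + pO v) % k = 0 := by
        intro v _
        rw [hndO v]
        split_ifs <;> simp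
      rw [Finset.sum_congr rfl this]
      simp
    have hI : ((∑ v, dI v % k) + (∑ v, nd v) + PI) % k = 0 := by
      rw [← Finset.sum_add_distrib, ← Finset.sum_add_distrib, Finset.sum_nat_mod]
      have : ∀ v ∈ (univ : Finset V), (dI v % k + nd v + pI v) % k = 0 := by
        intro v _
        rw [hndI v]
        split_ifs <;> simp
      rw [Finset.sum_congr rfl this]
      simp
    have hOI : (∑ v, dO v % k) % k = (∑ v, dI v % k) % k := by
      rw [← Finset.sum_nat_mod, ← Finset.sum_nat_mod, hsumO, hsumI]
    have e2 : (∑ v, dO v % k) + (∑ v, nd v) ≡ (∑ v, dI v % k) + (∑ v, nd v) [MOD k] :=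
      Nat.ModEq.add_right _ hOI
    exact Nat.ModEq.add_left_cancel e2 (hO.trans hI.symm)
  have hkPI : PI + (k - 1) * PI = k * PI := by
    have h1 : k - 1 + 1 = k := by omega
    calc PI + (k-1) * PI = (k - 1 + 1) * PI := by ring
    _ = k * PI := by rw [h1]
  have hmod : (PO + (k - 1) * PI) % k = 0 := by
    have e4 : PO + (k-1) * PI ≡ PI + (k-1)*PI [MOD k] :=
      Nat.ModEq.add_right _ (show PO ≡ PI [MOD k] from hmodeq)
    have : (PO + (k-1)*PI) % k = (PI + (k-1)*PI) % k := e4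
    rw [this, hkPI, Nat.mul_mod_right]
  set b : ℕ := (PO + (k - 1) * PI) / k with hbdef
  have hbk : b * k = PO + (k - 1) * PI :=
    Nat.div_mul_cancel (Nat.dvd_of_mod_eq_zero hmod)
  -- the padding bijection
  have hcards : Fintype.card ((Σ v : V, Fin (pO v)) ⊕ (Fin PI × Fin k))
      = Fintype.card ((Σ v : V, Fin (pI v)) ⊕ (Fin b × Fin k)) := by
    simp only [Fintype.card_sum, Fintype.card_sigma, Fintype.card_prod, Fintype.card_fin]
    rw [← hPO, ← hPI, hbk]
    have h2 : PI * k = PI + (k-1) * PI := by rw [hkPI]; ring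
    rw [h2]
    ring
  set β : ((Σ v : V, Fin (pO v)) ⊕ (Fin PI × Fin k)) ≃ ((Σ v : V, Fin (pI v)) ⊕ (Fin b × Fin k)) :=
    Fintype.equivOfCardEq hcards with hβ
  -- endpoint maps on the augmented edge set
  set L : (E ⊕ ((Σ v : V, Fin (nd v)) ⊕ ((Σ v : V, Fin (pO v)) ⊕ (Fin PI × Fin k))))
      → ((V × ℕ) ⊕ ℕ) :=
    Sum.elim (fun e => Sum.inl ((ends e).1, rkO e / k))
      (Sum.elim (fun s => Sum.inl (s.1, dO s.1 / k))
        (Sum.elim (fun s => Sum.inl (s.1, dO s.1 / k))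
          (fun mj => Sum.inr (mj.1 : ℕ)))) with hL
  set R : (E ⊕ ((Σ v : V, Fin (nd v)) ⊕ ((Σ v : V, Fin (pO v)) ⊕ (Fin PI × Fin k))))
      → ((V × ℕ) ⊕ ℕ) :=
    Sum.elim (fun e => Sum.inl ((ends e).2, rkI e / k))
      (Sum.elim (fun s : Σ v : V, Fin (nd v) => Sum.inl (s.1, dI s.1 / k))
        (fun s => Sum.elim
          (fun s' : Σ v : V, Fin (pI v) => (Sum.inl (s'.1, dI s'.1 / k) : (V × ℕ) ⊕ ℕ))
          (fun mj : Fin b × Fin k => Sum.inr (mj.1 : ℕ)) (β s))) with hR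
  -- counting real edges in copies
  have hrkO' : ∀ w, Set.InjOn rkO (FO w) ∧ (FO w).image rkO = Finset.range (dO w) :=
    fun w => hrkO w
  have hrkI' : ∀ w, Set.InjOn rkI (FI w) ∧ (FI w).image rkI = Finset.range (dI w) :=
    fun w => hrkI w
  have hccO : ∀ v j, ((FO v).filter fun e => rkO e / k = j).card = min k (dO v - j * k) := by
    intro v j
    rw [card_filter_rank (hrkO' v).1 (hrkO' v).2 (fun n => n / k = j), card_divcount _ _ _ hk]
  have hccI : ∀ v j, ((FI v).filter fun e => rkI e / k = j).card = min k (dI v - j * k) := by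
    intro v j
    rw [card_filter_rank (hrkI' v).1 (hrkI' v).2 (fun n => n / k = j), card_divcount _ _ _ hk]
  -- left fiber cardinalities
  have hLfib : ∀ x, ((univ.filter fun e => L e = x).card = k
      ∨ (univ.filter fun e => L e = x).card = 0) := by
    intro x
    rw [card_filter_sum_univ, card_filter_sum_univ, card_filter_sum_univ,
      card_filter_sigma_univ, card_filter_sigma_univ]
    simp only [hL, Sum.elim_inl, Sum.elim_inr]
    rcases x with ⟨v, j⟩ | n
    · have e1 : ((univ : Finset E).filter fun e =>
          (Sum.inl ((ends e).1, rkO e / k) : (V × ℕ) ⊕ ℕ) = Sum.inl (v, j)).card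
          = min k (dO v - j * k) := by
        have hset : ((univ : Finset E).filter fun e =>
            (Sum.inl ((ends e).1, rkO e / k) : (V × ℕ) ⊕ ℕ) = Sum.inl (v, j))
            = (FO v).filter fun e => rkO e / k = j := by
          ext e
          simp [hFO]
        rw [hset, hccO]
      have e2 : (∑ v', ((univ : Finset (Fin (nd v'))).filter fun _ =>
          (Sum.inl (v', dO v' / k) : (V × ℕ) ⊕ ℕ) = Sum.inl (v, j)).card)
          = if dO v / k = j then nd v else 0 := by
        have h2 : ∀ v' ∈ (univ : Finset V), ((univ : Finset (Fin (nd v'))).filter fun _ =>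
            (Sum.inl (v', dO v' / k) : (V × ℕ) ⊕ ℕ) = Sum.inl (v, j)).card
            = if v' = v ∧ dO v' / k = j then nd v' else 0 := by
          intro v' _
          rw [card_filter_const]
          simp only [Sum.inl.injEq, Prod.mk.injEq, Fintype.card_fin]
        rw [Finset.sum_congr rfl h2, sum_ite_pair nd (fun v' => dO v' / k) v j]
      have e3 : (∑ v', ((univ : Finset (Fin (pO v'))).filter fun _ =>
          (Sum.inl (v', dO v' / k) : (V × ℕ) ⊕ ℕ) = Sum.inl (v, j)).card)
          = if dO v / k = j then pO v else 0 := by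
        have h2 : ∀ v' ∈ (univ : Finset V), ((univ : Finset (Fin (pO v'))).filter fun _ =>
            (Sum.inl (v', dO v' / k) : (V × ℕ) ⊕ ℕ) = Sum.inl (v, j)).card
            = if v' = v ∧ dO v' / k = j then pO v' else 0 := by
          intro v' _
          rw [card_filter_const]
          simp only [Sum.inl.injEq, Prod.mk.injEq, Fintype.card_fin]
        rw [Finset.sum_congr rfl h2, sum_ite_pair pO (fun v' => dO v' / k) v j]
      have e4 : ((univ : Finset (Fin PI × Fin k)).filter fun mj =>
          (Sum.inr (mj.1 : ℕ) : (V × ℕ) ⊕ ℕ) = Sum.inl (v, j)).card = 0 := by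
        simp
      rw [e1, e2, e3, e4]
      have hdm := Nat.div_add_mod (dO v) k
      have hmlt : dO v % k < k := Nat.mod_lt _ hk
      rcases Nat.lt_trichotomy j (dO v / k) with hj | hj | hj
      · left
        have hne : dO v / k ≠ j := Nat.ne_of_gt hj
        have hmul : (j + 1) * k ≤ dO v / k * k := Nat.mul_le_mul_right k hj
        have hle : dO v / k * k ≤ dO v := Nat.div_mul_le_self _ _
        have h5 : (j + 1) * k = j * k + k := by ring
        rw [if_neg hne, if_neg hne]
        have h9 : min k (dO v - j * k) = k := min_eq_left (Nat.le_sub_of_add_le (by omega))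
        rw [h9]
        omega
      · subst hj
        rw [if_pos rfl, if_pos rfl]
        have hnp := hndO v
        have h8 := Nat.mod_add_div' (dO v) k
        have h9 : dO v - dO v / k * k = dO v % k := Nat.sub_eq_of_eq_add h8.symm
        rw [h9, min_eq_right (Nat.le_of_lt hmlt)]
        by_cases hz : dO v % k = 0
        · right
          rw [if_pos hz] at hnp
          omega
        · left
          rw [if_neg hz] at hnp
          omega
      · right
        have hne : dO v / k ≠ j := Nat.ne_of_lt hj
        have hmul : k * (dO v / k + 1) ≤ k * j := Nat.mul_le_mul_left k hj
        have h5 : k * (dO v / k + 1) = k * (dO v / k) + k := by ring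
        rw [if_neg hne, if_neg hne]
        have h10 : dO v ≤ j * k := by
          have hcm : k * j = j * k := Nat.mul_comm _ _
          omega
        rw [Nat.sub_eq_zero_of_le h10]
        simp
    · have e1 : ((univ : Finset E).filter fun e =>
          (Sum.inl ((ends e).1, rkO e / k) : (V × ℕ) ⊕ ℕ) = Sum.inr n).card = 0 := by simp
      have e2 : (∑ v', ((univ : Finset (Fin (nd v'))).filter fun _ =>
          (Sum.inl (v', dO v' / k) : (V × ℕ) ⊕ ℕ) = Sum.inr n).card) = 0 := by simp
      have e3 : (∑ v', ((univ : Finset (Fin (pO v'))).filter fun _ =>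
          (Sum.inl (v', dO v' / k) : (V × ℕ) ⊕ ℕ) = Sum.inr n).card) = 0 := by simp
      have e4 : ((univ : Finset (Fin PI × Fin k)).filter fun mj =>
          (Sum.inr (mj.1 : ℕ) : (V × ℕ) ⊕ ℕ) = Sum.inr n).card
          = (if n < PI then 1 else 0) * k := by
        have hset : ((univ : Finset (Fin PI × Fin k)).filter fun mj =>
            (Sum.inr (mj.1 : ℕ) : (V × ℕ) ⊕ ℕ) = Sum.inr n)
            = ((univ : Finset (Fin PI × Fin k)).filter fun mj => (mj.1 : ℕ) = n) := by
          ext mj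
          simp
        rw [hset, card_filter_prod_fst (fun m' : Fin PI => (m' : ℕ) = n),
          card_filter_fin_val, Fintype.card_fin]
      rw [e1, e2, e3, e4]
      by_cases hn : n < PI
      · left
        rw [if_pos hn]
        omega
      · right
        rw [if_neg hn]
        omega
  -- right fiber cardinalities
  have hRfib : ∀ x, ((univ.filter fun e => R e = x).card = k
      ∨ (univ.filter fun e => R e = x).card = 0) := by
    intro x
    rw [card_filter_sum_univ, card_filter_sum_univ, card_filter_sigma_univ]
    simp only [hR, Sum.elim_inl, Sum.elim_inr]
    rw [card_filter_equiv_univ β (fun s' => Sum.elim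
      (fun s'' : Σ v : V, Fin (pI v) => (Sum.inl (s''.1, dI s''.1 / k) : (V × ℕ) ⊕ ℕ))
      (fun mj : Fin b × Fin k => (Sum.inr (mj.1 : ℕ) : (V × ℕ) ⊕ ℕ)) s' = x)]
    rw [card_filter_sum_univ, card_filter_sigma_univ]
    simp only [Sum.elim_inl, Sum.elim_inr]
    rcases x with ⟨v, j⟩ | n
    · have e1 : ((univ : Finset E).filter fun e =>
          (Sum.inl ((ends e).2, rkI e / k) : (V × ℕ) ⊕ ℕ) = Sum.inl (v, j)).card
          = min k (dI v - j * k) := by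
        have hset : ((univ : Finset E).filter fun e =>
            (Sum.inl ((ends e).2, rkI e / k) : (V × ℕ) ⊕ ℕ) = Sum.inl (v, j))
            = (FI v).filter fun e => rkI e / k = j := by
          ext e
          simp [hFI]
        rw [hset, hccI]
      have e2 : (∑ v', ((univ : Finset (Fin (nd v'))).filter fun _ =>
          (Sum.inl (v', dI v' / k) : (V × ℕ) ⊕ ℕ) = Sum.inl (v, j)).card)
          = if dI v / k = j then nd v else 0 := by
        have h2 : ∀ v' ∈ (univ : Finset V), ((univ : Finset (Fin (nd v'))).filter fun _ =>
            (Sum.inl (v', dI v' / k) : (V × ℕ) ⊕ ℕ) = Sum.inl (v, j)).card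
            = if v' = v ∧ dI v' / k = j then nd v' else 0 := by
          intro v' _
          rw [card_filter_const]
          simp only [Sum.inl.injEq, Prod.mk.injEq, Fintype.card_fin]
        rw [Finset.sum_congr rfl h2, sum_ite_pair nd (fun v' => dI v' / k) v j]
      have e3 : (∑ v', ((univ : Finset (Fin (pI v'))).filter fun _ =>
          (Sum.inl (v', dI v' / k) : (V × ℕ) ⊕ ℕ) = Sum.inl (v, j)).card)
          = if dI v / k = j then pI v else 0 := by
        have h2 : ∀ v' ∈ (univ : Finset V), ((univ : Finset (Fin (pI v'))).filter fun _ =>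
            (Sum.inl (v', dI v' / k) : (V × ℕ) ⊕ ℕ) = Sum.inl (v, j)).card
            = if v' = v ∧ dI v' / k = j then pI v' else 0 := by
          intro v' _
          rw [card_filter_const]
          simp only [Sum.inl.injEq, Prod.mk.injEq, Fintype.card_fin]
        rw [Finset.sum_congr rfl h2, sum_ite_pair pI (fun v' => dI v' / k) v j]
      have e4 : ((univ : Finset (Fin b × Fin k)).filter fun mj =>
          (Sum.inr (mj.1 : ℕ) : (V × ℕ) ⊕ ℕ) = Sum.inl (v, j)).card = 0 := by
        simp
      erw [e1, e2, e3, e4]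
      have hdm := Nat.div_add_mod (dI v) k
      have hmlt : dI v % k < k := Nat.mod_lt _ hk
      rcases Nat.lt_trichotomy j (dI v / k) with hj | hj | hj
      · left
        have hne : dI v / k ≠ j := Nat.ne_of_gt hj
        have hmul : (j + 1) * k ≤ dI v / k * k := Nat.mul_le_mul_right k hj
        have hle : dI v / k * k ≤ dI v := Nat.div_mul_le_self _ _
        have h5 : (j + 1) * k = j * k + k := by ring
        rw [if_neg hne, if_neg hne]
        have h9 : min k (dI v - j * k) = k := min_eq_left (Nat.le_sub_of_add_le (by omega))
        rw [h9]
        omega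
      · subst hj
        rw [if_pos rfl, if_pos rfl]
        have hnp := hndI v
        have h8 := Nat.mod_add_div' (dI v) k
        have h9 : dI v - dI v / k * k = dI v % k := Nat.sub_eq_of_eq_add h8.symm
        rw [h9, min_eq_right (Nat.le_of_lt hmlt)]
        by_cases hz : dI v % k = 0
        · right
          rw [if_pos hz] at hnp
          omega
        · left
          rw [if_neg hz] at hnp
          omega
      · right
        have hne : dI v / k ≠ j := Nat.ne_of_lt hj
        have hmul : k * (dI v / k + 1) ≤ k * j := Nat.mul_le_mul_left k hj
        have h5 : k * (dI v / k + 1) = k * (dI v / k) + k := by ring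
        rw [if_neg hne, if_neg hne]
        have h10 : dI v ≤ j * k := by
          have hcm : k * j = j * k := Nat.mul_comm _ _
          omega
        rw [Nat.sub_eq_zero_of_le h10]
        simp
    · have e1 : ((univ : Finset E).filter fun e =>
          (Sum.inl ((ends e).2, rkI e / k) : (V × ℕ) ⊕ ℕ) = Sum.inr n).card = 0 := by simp
      have e2 : (∑ v', ((univ : Finset (Fin (nd v'))).filter fun _ =>
          (Sum.inl (v', dI v' / k) : (V × ℕ) ⊕ ℕ) = Sum.inr n).card) = 0 := by simp
      have e3 : (∑ v', ((univ : Finset (Fin (pI v'))).filter fun _ =>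
          (Sum.inl (v', dI v' / k) : (V × ℕ) ⊕ ℕ) = Sum.inr n).card) = 0 := by simp
      have e4 : ((univ : Finset (Fin b × Fin k)).filter fun mj =>
          (Sum.inr (mj.1 : ℕ) : (V × ℕ) ⊕ ℕ) = Sum.inr n).card
          = (if n < b then 1 else 0) * k := by
        have hset : ((univ : Finset (Fin b × Fin k)).filter fun mj =>
            (Sum.inr (mj.1 : ℕ) : (V × ℕ) ⊕ ℕ) = Sum.inr n)
            = ((univ : Finset (Fin b × Fin k)).filter fun mj => (mj.1 : ℕ) = n) := by
          ext mj
          simp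
        rw [hset, card_filter_prod_fst (fun m' : Fin b => (m' : ℕ) = n),
          card_filter_fin_val, Fintype.card_fin]
      erw [e1, e2, e3, e4]
      by_cases hn : n < b
      · left
        rw [if_pos hn]
        omega
      · right
        rw [if_neg hn]
        omega
  obtain ⟨c, hco1, hco2, hco3⟩ := regular_proper k univ L R hLfib hRfib
  set col : E → Fin k := fun e => ⟨c (Sum.inl e), hco1 _ (mem_univ _)⟩ with hcol
  refine ⟨col, fun v => ?_⟩
  rw [hout v, hin v]
  have hdm := Nat.div_add_mod (dO v) k
  have hdm' := Nat.div_add_mod (dI v) k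
  have hmltO : dO v % k < k := Nat.mod_lt _ hk
  have hmltI : dI v % k < k := Nat.mod_lt _ hk
  set A : Finset (Fin k) := ((FO v).filter fun e => rkO e / k = dO v / k).image col with hA
  set B : Finset (Fin k) := ((FI v).filter fun e => rkI e / k = dI v / k).image col with hB
  have hLreal : ∀ e ∈ FO v, L (Sum.inl e) = Sum.inl (v, rkO e / k) := by
    intro e he
    have h1 : (ends e).1 = v := by
      have := Finset.mem_filter.mp (show e ∈ univ.filter fun e' => (ends e').1 = v from he)
      exact this.2
    simp [hL, h1]
  have hRreal : ∀ e ∈ FI v, R (Sum.inl e) = Sum.inl (v, rkI e / k) := by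
    intro e he
    have h1 : (ends e).2 = v := by
      have := Finset.mem_filter.mp (show e ∈ univ.filter fun e' => (ends e').2 = v from he)
      exact this.2
    simp [hR, h1]
  have hinjO : ∀ j, Set.InjOn col ((FO v).filter fun e => rkO e / k = j) := by
    intro j e he e' he' hcc
    rw [Finset.mem_coe, Finset.mem_filter] at he he'
    have hL1 : L (Sum.inl e) = L (Sum.inl e') := by
      rw [hLreal e he.1, hLreal e' he'.1, he.2, he'.2]
    have hcc' : c (Sum.inl e) = c (Sum.inl e') := by
      have := congrArg Fin.val hcc
      simpa [hcol] using this
    exact Sum.inl.inj (hco2 _ (mem_univ _) _ (mem_univ _) hL1 hcc')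
  have hinjI : ∀ j, Set.InjOn col ((FI v).filter fun e => rkI e / k = j) := by
    intro j e he e' he' hcc
    rw [Finset.mem_coe, Finset.mem_filter] at he he'
    have hR1 : R (Sum.inl e) = R (Sum.inl e') := by
      rw [hRreal e he.1, hRreal e' he'.1, he.2, he'.2]
    have hcc' : c (Sum.inl e) = c (Sum.inl e') := by
      have := congrArg Fin.val hcc
      simpa [hcol] using this
    exact Sum.inl.inj (hco3 _ (mem_univ _) _ (mem_univ _) hR1 hcc')
  have hAcard : A.card = dO v % k := by
    rw [hA, Finset.card_image_of_injOn (hinjO _), hccO]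
    have h8 := Nat.mod_add_div' (dO v) k
    have h9 : dO v - dO v / k * k = dO v % k := Nat.sub_eq_of_eq_add h8.symm
    rw [h9, min_eq_right (Nat.le_of_lt hmltO)]
  have hBcard : B.card = dI v % k := by
    rw [hB, Finset.card_image_of_injOn (hinjI _), hccI]
    have h8 := Nat.mod_add_div' (dI v) k
    have h9 : dI v - dI v / k * k = dI v % k := Nat.sub_eq_of_eq_add h8.symm
    rw [h9, min_eq_right (Nat.le_of_lt hmltI)]
  have hmemrange : ∀ e ∈ FO v, rkO e / k < dO v / k + 1 := by
    intro e he
    have h1 : rkO e ∈ Finset.range (dO v) := by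
      rw [← (hrkO' v).2]
      exact Finset.mem_image_of_mem rkO he
    rw [Finset.mem_range] at h1
    have h2 := Nat.div_le_div_right (c := k) (Nat.le_of_lt h1)
    omega
  have hmemrangeI : ∀ e ∈ FI v, rkI e / k < dI v / k + 1 := by
    intro e he
    have h1 : rkI e ∈ Finset.range (dI v) := by
      rw [← (hrkI' v).2]
      exact Finset.mem_image_of_mem rkI he
    rw [Finset.mem_range] at h1
    have h2 := Nat.div_le_div_right (c := k) (Nat.le_of_lt h1)
    omega
  have houtdeg : ∀ i : Fin k,
      (((univ : Finset E).filter fun e => col e = i).filter fun e => (ends e).1 = v).card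
        = dO v / k + (if i ∈ A then 1 else 0) := by
    intro i
    have hswap : (((univ : Finset E).filter fun e => col e = i).filter fun e => (ends e).1 = v)
        = (FO v).filter fun e => col e = i := by
      ext e
      simp only [Finset.mem_filter, Finset.mem_univ, true_and, hFO]
      tauto
    rw [hswap,
      Finset.card_eq_sum_card_fiberwise (f := fun e => rkO e / k)
        (t := Finset.range (dO v / k + 1))
        (fun e he => Finset.mem_range.mpr (hmemrange e (Finset.mem_filter.mp he).1))]
    have hswap2 : ∀ j ∈ Finset.range (dO v / k + 1),
        (((FO v).filter fun e => col e = i).filter fun e => rkO e / k = j).card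
        = (((FO v).filter fun e => rkO e / k = j).filter fun e => col e = i).card := by
      intro j _
      congr 1
      ext e
      simp only [Finset.mem_filter]
      tauto
    rw [Finset.sum_congr rfl hswap2, Finset.sum_range_succ]
    have hfull : ∀ j ∈ Finset.range (dO v / k),
        (((FO v).filter fun e => rkO e / k = j).filter fun e => col e = i).card = 1 := by
      intro j hj
      rw [Finset.mem_range] at hj
      rw [card_filter_injOn (hinjO j)]
      have himg : ((FO v).filter fun e => rkO e / k = j).image col = Finset.univ := by
        apply Finset.eq_univ_of_card
        rw [Finset.card_image_of_injOn (hinjO j), hccO, Fintype.card_fin]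
        have h1 : (j + 1) * k ≤ dO v / k * k := Nat.mul_le_mul_right k hj
        have h2 : dO v / k * k ≤ dO v := Nat.div_mul_le_self _ _
        have h3 : (j + 1) * k = j * k + k := by ring
        exact min_eq_left (Nat.le_sub_of_add_le (by omega))
      rw [himg, if_pos (Finset.mem_univ i)]
    rw [Finset.sum_congr rfl hfull, Finset.sum_const, Finset.card_range, smul_eq_mul,
      Nat.mul_one, card_filter_injOn (hinjO _), ← hA]
  have hindeg : ∀ i : Fin k,
      (((univ : Finset E).filter fun e => col e = i).filter fun e => (ends e).2 = v).card
        = dI v / k + (if i ∈ B then 1 else 0) := by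
    intro i
    have hswap : (((univ : Finset E).filter fun e => col e = i).filter fun e => (ends e).2 = v)
        = (FI v).filter fun e => col e = i := by
      ext e
      simp only [Finset.mem_filter, Finset.mem_univ, true_and, hFI]
      tauto
    rw [hswap,
      Finset.card_eq_sum_card_fiberwise (f := fun e => rkI e / k)
        (t := Finset.range (dI v / k + 1))
        (fun e he => Finset.mem_range.mpr (hmemrangeI e (Finset.mem_filter.mp he).1))]
    have hswap2 : ∀ j ∈ Finset.range (dI v / k + 1),
        (((FI v).filter fun e => col e = i).filter fun e => rkI e / k = j).card
        = (((FI v).filter fun e => rkI e / k = j).filter fun e => col e = i).card := by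
      intro j _
      congr 1
      ext e
      simp only [Finset.mem_filter]
      tauto
    rw [Finset.sum_congr rfl hswap2, Finset.sum_range_succ]
    have hfull : ∀ j ∈ Finset.range (dI v / k),
        (((FI v).filter fun e => rkI e / k = j).filter fun e => col e = i).card = 1 := by
      intro j hj
      rw [Finset.mem_range] at hj
      rw [card_filter_injOn (hinjI j)]
      have himg : ((FI v).filter fun e => rkI e / k = j).image col = Finset.univ := by
        apply Finset.eq_univ_of_card
        rw [Finset.card_image_of_injOn (hinjI j), hccI, Fintype.card_fin]
        have h1 : (j + 1) * k ≤ dI v / k * k := Nat.mul_le_mul_right k hj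
        have h2 : dI v / k * k ≤ dI v := Nat.div_mul_le_self _ _
        have h3 : (j + 1) * k = j * k + k := by ring
        exact min_eq_left (Nat.le_sub_of_add_le (by omega))
      rw [himg, if_pos (Finset.mem_univ i)]
    rw [Finset.sum_congr rfl hfull, Finset.sum_const, Finset.card_range, smul_eq_mul,
      Nat.mul_one, card_filter_injOn (hinjI _), ← hB]
  have hmdeg : ∀ i : Fin k, mdeg ends (univ.filter fun e => col e = i) v
      = (dO v / k + dI v / k) + (if i ∈ A then 1 else 0) + (if i ∈ B then 1 else 0) := by
    intro i
    have hsplit : mdeg ends (univ.filter fun e => col e = i) v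
        = (((univ : Finset E).filter fun e => col e = i).filter fun e => (ends e).1 = v).card
          + (((univ : Finset E).filter fun e => col e = i).filter fun e => (ends e).2 = v).card := by
      rw [mdeg, Finset.sum_add_distrib, Finset.card_filter, Finset.card_filter]
    rw [hsplit, houtdeg i, hindeg i]
    by_cases hiA : i ∈ A <;> by_cases hiB : i ∈ B <;> simp [hiA, hiB] <;> omega
  -- nest colors
  set colN : Fin (nd v) → Fin k :=
    fun jj => ⟨c (Sum.inr (Sum.inl ⟨v, jj⟩)), hco1 _ (mem_univ _)⟩ with hcolN
  set D : Finset (Fin k) := Finset.univ.image colN with hD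
  have hLnest : ∀ jj : Fin (nd v),
      L (Sum.inr (Sum.inl ⟨v, jj⟩)) = Sum.inl (v, dO v / k) := by
    intro jj
    simp [hL]
  have hRnest : ∀ jj : Fin (nd v),
      R (Sum.inr (Sum.inl ⟨v, jj⟩)) = Sum.inl (v, dI v / k) := by
    intro jj
    simp [hR]
  have hinjN : Function.Injective colN := by
    intro a b hab
    have hc' : c (Sum.inr (Sum.inl ⟨v, a⟩)) = c (Sum.inr (Sum.inl ⟨v, b⟩)) := by
      have := congrArg Fin.val hab
      simpa [hcolN] using this
    have := hco2 _ (mem_univ _) _ (mem_univ _) ((hLnest a).trans (hLnest b).symm) hc'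
    simpa using this
  have hDcard : D.card = nd v := by
    rw [hD, Finset.card_image_of_injective _ hinjN, Finset.card_univ, Fintype.card_fin]
  have hAD : ∀ i ∈ A, i ∉ D := by
    intro i hiA hiD
    rw [hA] at hiA
    obtain ⟨e, he, rfl⟩ := Finset.mem_image.mp hiA
    rw [hD] at hiD
    obtain ⟨jj, _, hjj⟩ := Finset.mem_image.mp hiD
    rw [Finset.mem_filter] at he
    have hL1 : L (Sum.inl e) = L (Sum.inr (Sum.inl ⟨v, jj⟩)) := by
      rw [hLreal e he.1, hLnest jj, he.2]
    have hcc : c (Sum.inl e) = c (Sum.inr (Sum.inl ⟨v, jj⟩)) := by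
      have := congrArg Fin.val hjj
      simpa [hcol, hcolN] using this.symm
    exact absurd (hco2 _ (mem_univ _) _ (mem_univ _) hL1 hcc) (by simp)
  have hBD : ∀ i ∈ B, i ∉ D := by
    intro i hiB hiD
    rw [hB] at hiB
    obtain ⟨e, he, rfl⟩ := Finset.mem_image.mp hiB
    rw [hD] at hiD
    obtain ⟨jj, _, hjj⟩ := Finset.mem_image.mp hiD
    rw [Finset.mem_filter] at he
    have hR1 : R (Sum.inl e) = R (Sum.inr (Sum.inl ⟨v, jj⟩)) := by
      rw [hRreal e he.1, hRnest jj, he.2]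
    have hcc : c (Sum.inl e) = c (Sum.inr (Sum.inl ⟨v, jj⟩)) := by
      have := congrArg Fin.val hjj
      simpa [hcol, hcolN] using this.symm
    exact absurd (hco3 _ (mem_univ _) _ (mem_univ _) hR1 hcc) (by simp)
  have hnested : A ⊆ B ∨ B ⊆ A := by
    by_cases hO : dO v % k = 0
    · left
      have hAe : A = ∅ := Finset.card_eq_zero.mp (by rw [hAcard, hO])
      rw [hAe]
      exact Finset.empty_subset _
    by_cases hI : dI v % k = 0
    · right
      have hBe : B = ∅ := Finset.card_eq_zero.mp (by rw [hBcard, hI])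
      rw [hBe]
      exact Finset.empty_subset _
    have hndv : nd v = k - max (dO v % k) (dI v % k) := by
      simp only [hnd]
      rw [if_neg (by simp [hO, hI])]
    by_cases hcmp : dO v % k ≤ dI v % k
    · left
      have hBDd : Disjoint B D := Finset.disjoint_left.mpr hBD
      have hBDu : B ∪ D = Finset.univ := by
        apply Finset.eq_univ_of_card
        rw [Finset.card_union_of_disjoint hBDd, hBcard, hDcard, hndv, max_eq_right hcmp,
          Fintype.card_fin]
        omega
      intro i hiA
      have hiu : i ∈ B ∪ D := hBDu ▸ Finset.mem_univ i
      rcases Finset.mem_union.mp hiu with h | h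
      · exact h
      · exact absurd h (hAD i hiA)
    · right
      have hADd : Disjoint A D := Finset.disjoint_left.mpr hAD
      have hADu : A ∪ D = Finset.univ := by
        apply Finset.eq_univ_of_card
        rw [Finset.card_union_of_disjoint hADd, hAcard, hDcard, hndv,
          max_eq_left (Nat.le_of_not_le hcmp), Fintype.card_fin]
        omega
      intro i hiB
      have hiu : i ∈ A ∪ D := hADu ▸ Finset.mem_univ i
      rcases Finset.mem_union.mp hiu with h | h
      · exact h
      · exact absurd h (hBD i hiB)
  rcases hnested with hAB | hBA
  · obtain ⟨I0, I1, I2, hd01, hd02, hd12, hun, hca0, hca1, hca2, hf0, hf1, hf2⟩ :=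
      tripart hAB (fun i => mdeg ends (univ.filter fun e => col e = i) v)
        (dO v / k + dI v / k) hmdeg
    refine ⟨I0, I1, I2, hd01, hd02, hd12, hun, ?_, ?_, ?_,
      fun i hi => by simpa using hf0 i hi,
      fun i hi => by simpa using hf1 i hi,
      fun i hi => by simpa using hf2 i hi⟩
    · rw [hca0, hAcard, hBcard]
    · rw [hca1, hAcard, hBcard]
    · rw [hca2, hAcard, hBcard]
  · have hmdeg' : ∀ i : Fin k, mdeg ends (univ.filter fun e => col e = i) v
        = (dO v / k + dI v / k) + (if i ∈ B then 1 else 0) + (if i ∈ A then 1 else 0) := by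
      intro i
      rw [hmdeg i]
      by_cases hiA : i ∈ A <;> by_cases hiB : i ∈ B <;> simp [hiA, hiB] <;> omega
    obtain ⟨I0, I1, I2, hd01, hd02, hd12, hun, hca0, hca1, hca2, hf0, hf1, hf2⟩ :=
      tripart hBA (fun i => mdeg ends (univ.filter fun e => col e = i) v)
        (dO v / k + dI v / k) hmdeg'
    refine ⟨I0, I1, I2, hd01, hd02, hd12, hun, ?_, ?_, ?_,
      fun i hi => by simpa using hf0 i hi,
      fun i hi => by simpa using hf1 i hi,
      fun i hi => by simpa using hf2 i hi⟩
    · rw [hca0, hAcard, hBcard, Nat.min_comm]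
    · rw [hca1, hAcard, hBcard, Nat.dist_comm]
    · rw [hca2, hAcard, hBcard, Nat.min_comm]
end
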